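/- arXiv:1407.2929 — 11 statements merged into one kernel-verified Lean document; each statement's English description precedes it below -/
import Mathlib

section
/- Let G be a simple graph with maximum degree at most D, and let F be a set of edges of G. Then G contains an induced matching M' ⊆ F with |M'| ≥ |F| / (2·D²). -/
/-- `M` is a matching in `G`: a set of edges of `G` that are pairwise disjoint. -/
def IsMatching' {V : Type*} (G : SimpleGraph V) (M : Finset (Sym2 V)) : Prop :=
  ↑M ⊆ G.edgeSet ∧ (M : Set (Sym2 V)).Pairwise fun e f => ∀ v, v ∈ e → v ∉ f

/-- The set of vertices covered by a set of edges. -/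
def MSupport {V : Type*} (M : Finset (Sym2 V)) : Set V := {v | ∃ e ∈ M, v ∈ e}

/-- `M` is an induced matching: a matching such that the only edges of `G` among its
vertices are the edges of `M` itself. -/
def IsInducedMatching {V : Type*} (G : SimpleGraph V) (M : Finset (Sym2 V)) : Prop :=
  IsMatching' G M ∧ ∀ e ∈ G.edgeSet, (∀ v ∈ e, v ∈ MSupport M) → e ∈ M

lemma empty_induced {V : Type*} (G : SimpleGraph V) :
    IsInducedMatching G (∅ : Finset (Sym2 V)) := by
  refine ⟨⟨by simp, by simp⟩, ?_⟩
  intro e he hsup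
  induction e using Sym2.ind with
  | _ a b =>
    exfalso
    have := hsup a (by simp)
    simp [MSupport] at this

/-- a graph of maximum degree ≤ D contains, inside any edge set `F`,
an induced matching `M' ⊆ F` with `|M'| ≥ |F| / (2·D²)`. -/
theorem induced_matching_of_edge_set {V : Type*} [Fintype V] [DecidableEq V]
    (G : SimpleGraph V) [DecidableRel G.Adj] (D : ℕ) (hD : G.maxDegree ≤ D)
    (F : Finset (Sym2 V)) (hF : ↑F ⊆ G.edgeSet) :
    ∃ M' ⊆ F, IsInducedMatching G M' ∧ (F.card : ℚ) / (2 * D ^ 2) ≤ (M'.card : ℚ) := by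
  classical
  rcases Nat.eq_zero_or_pos D with hD0 | hDpos
  · exact ⟨∅, Finset.empty_subset _, empty_induced G, by simp [hD0]⟩
  have hpos : (0 : ℚ) < 2 * (D : ℚ) ^ 2 := by positivity
  revert hF
  induction F using Finset.strongInduction with
  | _ F ih =>
    intro hF
    rcases F.eq_empty_or_nonempty with rfl | ⟨e, he⟩
    · exact ⟨∅, Finset.empty_subset _, empty_induced G, by simp⟩
    induction e using Sym2.ind with
    | _ u v =>
      have hadj : G.Adj u v := hF he
      set N : Finset V := G.neighborFinset u ∪ G.neighborFinset v with hN
      set C : Finset (Sym2 V) := F.filter (fun f => ∃ w ∈ N, w ∈ f) with hC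
      have huN : u ∈ N := by simp [hN, hadj.symm]
      have hvN : v ∈ N := by simp [hN, hadj]
      have heC : s(u, v) ∈ C := by
        refine Finset.mem_filter.2 ⟨he, ⟨v, hvN, by simp⟩⟩
      have hCsubF : C ⊆ F := Finset.filter_subset _ _
      have hCcard : C.card ≤ 2 * D ^ 2 := by
        have hsub : C ⊆ N.biUnion (fun w => G.incidenceFinset w) := by
          intro f hf
          obtain ⟨hfF, w, hwN, hwf⟩ := Finset.mem_filter.1 hf
          exact Finset.mem_biUnion.2 ⟨w, hwN,
            (G.mem_incidenceFinset w f).2 ⟨hF hfF, hwf⟩⟩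
        calc C.card ≤ (N.biUnion (fun w => G.incidenceFinset w)).card :=
              Finset.card_le_card hsub
          _ ≤ ∑ w ∈ N, (G.incidenceFinset w).card := Finset.card_biUnion_le
          _ ≤ ∑ _w ∈ N, D := by
              refine Finset.sum_le_sum fun w _ => ?_
              rw [G.card_incidenceFinset_eq_degree]
              exact le_trans (G.degree_le_maxDegree w) hD
          _ = N.card * D := by rw [Finset.sum_const, smul_eq_mul]
          _ ≤ (D + D) * D := by
              refine Nat.mul_le_mul_right _ ?_
              calc N.card ≤ (G.neighborFinset u).card + (G.neighborFinset v).card :=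
                    Finset.card_union_le _ _
                _ ≤ D + D := Nat.add_le_add
                    (le_trans (G.degree_le_maxDegree u) hD)
                    (le_trans (G.degree_le_maxDegree v) hD)
          _ = 2 * D ^ 2 := by ring
      set F' : Finset (Sym2 V) := F \ C with hF'
      have hF'ss : F' ⊂ F := by
        refine Finset.sdiff_ssubset hCsubF ⟨_, heC⟩
      obtain ⟨M'', hsub'', hind'', hcard''⟩ :=
        ih F' hF'ss (Set.Subset.trans (by exact_mod_cast Finset.coe_subset.2 (Finset.sdiff_subset)) hF)
      -- edges of M'' have no vertex in N
      have hdisjN : ∀ f ∈ M'', ∀ w ∈ f, w ∉ N := by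
        intro f hf w hwf hwN
        have hfF' := hsub'' hf
        rw [hF', Finset.mem_sdiff] at hfF'
        exact hfF'.2 (Finset.mem_filter.2 ⟨hfF'.1, ⟨w, hwN, hwf⟩⟩)
      have heM'' : s(u, v) ∉ M'' := by
        intro h
        exact hdisjN _ h v (by simp) hvN
      refine ⟨insert (s(u, v)) M'', ?_, ⟨⟨?_, ?_⟩, ?_⟩, ?_⟩
      · intro f hf
        rcases Finset.mem_insert.1 hf with rfl | hf
        · exact he
        · exact Finset.sdiff_subset (hsub'' hf)
      · -- edges
        intro f hf
        rcases Finset.mem_insert.1 hf with rfl | h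
        · exact hF he
        · exact hF (Finset.sdiff_subset (hsub'' h))
      · -- pairwise
        rw [Finset.coe_insert]
        refine Set.Pairwise.insert hind''.1.2 ?_
        intro f hf hne
        have key : ∀ w, w ∈ s(u, v) → w ∉ f := by
          intro w hw hwf
          refine hdisjN f hf w hwf ?_
          rcases Sym2.mem_iff.1 hw with rfl | rfl
          · exact huN
          · exact hvN
        constructor
        · exact key
        · intro w hwf hwe
          exact key w hwe hwf
      · -- induced
        intro g hg hsup
        induction g using Sym2.ind with
        | _ a b =>
          have hab : G.Adj a b := hg
          have hsupp : ∀ x ∈ s(a, b), x ∈ s(u, v) ∨ x ∈ MSupport M'' := by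
            intro x hx
            obtain ⟨f, hf, hxf⟩ := hsup x hx
            rcases Finset.mem_insert.1 hf with rfl | hf
            · exact Or.inl hxf
            · exact Or.inr ⟨f, hf, hxf⟩
          have hNadj : ∀ x ∈ s(u, v), ∀ y, G.Adj x y → y ∈ N := by
            intro x hx y hxy
            rcases Sym2.mem_iff.1 hx with rfl | rfl
            · simp [hN, hxy]
            · simp [hN, hxy]
          rcases hsupp a (by simp) with ha | ha <;> rcases hsupp b (by simp) with hb | hb
          · -- both in s(u,v): the edge is s(u,v)
            refine Finset.mem_insert.2 (Or.inl ?_)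
            rcases Sym2.mem_iff.1 ha with rfl | rfl <;> rcases Sym2.mem_iff.1 hb with rfl | rfl
            · exact absurd rfl hab.ne
            · rfl
            · exact Sym2.eq_swap
            · exact absurd rfl hab.ne
          · obtain ⟨f, hf, hbf⟩ := hb
            exact absurd (hNadj a ha b hab) (hdisjN f hf b hbf)
          · obtain ⟨f, hf, haf⟩ := ha
            exact absurd (hNadj b hb a hab.symm) (hdisjN f hf a haf)
          · refine Finset.mem_insert.2 (Or.inr (hind''.2 _ hg ?_))
            intro x hx
            rcases Sym2.mem_iff.1 hx with rfl | rfl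
            · exact ha
            · exact hb
      · -- cardinality
        have hcardins : (insert (s(u, v)) M'').card = M''.card + 1 :=
          Finset.card_insert_of_notMem heM''
        have hFsplit : F'.card + C.card = F.card :=
          Finset.card_sdiff_add_card_eq_card hCsubF
        have h1 : (F.card : ℚ) ≤ (F'.card : ℚ) + 2 * D ^ 2 := by
          have : F.card ≤ F'.card + 2 * D ^ 2 := by omega
          exact_mod_cast this
        rw [div_le_iff₀ hpos] at hcard'' ⊢
        rw [hcardins]
        push_cast
        nlinarith [hcard'']
end

section
/- Let G be a simple graph with maximum degree at most D, and let F be a set of edges of G. Then there is a set M'' ⊆ F of edges with |M''| ≥ |F| / (2·D³) such that M'' is an induced matching and every vertex of G outside the vertex set of M'' is adjacent to the endpoints of at most one edge of M''. -/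
/-- Two edges conflict if some endpoints are equal, adjacent, or have a common neighbor. -/
def Conflict {V : Type*} (G : SimpleGraph V) (e f : Sym2 V) : Prop :=
  ∃ u ∈ e, ∃ w ∈ f, u = w ∨ G.Adj u w ∨ ∃ v, G.Adj v u ∧ G.Adj v w

lemma Conflict.symm {V : Type*} {G : SimpleGraph V} {e f : Sym2 V}
    (h : Conflict G e f) : Conflict G f e := by
  obtain ⟨u, hu, w, hw, hc⟩ := h
  refine ⟨w, hw, u, hu, ?_⟩
  rcases hc with h | h | ⟨v, h1, h2⟩
  · exact Or.inl h.symm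
  · exact Or.inr (Or.inl h.symm)
  · exact Or.inr (Or.inr ⟨v, h2, h1⟩)

/-- If `f = s(x,y)` conflicts with an edge through witness endpoint `x`, then `f` has
an endpoint reachable by a walk of length 2 from `u`. -/
lemma witness_mem {V : Type*} {G : SimpleGraph V} {u x y : V} (hadj : G.Adj x y)
    (h : u = x ∨ G.Adj u x ∨ ∃ v, G.Adj v u ∧ G.Adj v x) :
    ∃ t, (∃ v, G.Adj u v ∧ G.Adj v t) ∧ (t = x ∨ t = y) := by
  rcases h with rfl | h | ⟨v, h1, h2⟩
  · exact ⟨u, ⟨y, hadj, hadj.symm⟩, Or.inl rfl⟩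
  · exact ⟨y, ⟨x, h, hadj⟩, Or.inr rfl⟩
  · exact ⟨x, ⟨v, h1.symm, h2⟩, Or.inl rfl⟩

open Finset in
lemma bad_card_le {V : Type*} [Fintype V] [DecidableEq V]
    (G : SimpleGraph V) [DecidableRel G.Adj] (D : ℕ) (hD : G.maxDegree ≤ D)
    (F : Finset (Sym2 V)) (hF : ↑F ⊆ G.edgeSet) {a b : V} (hab : G.Adj a b) :
    ∀ (p : Sym2 V → Prop) [DecidablePred p],
      (∀ f ∈ F, p f → Conflict G s(a, b) f) → (F.filter p).card ≤ 2 * D ^ 3 := by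
  intro p _ hp
  classical
  set T : Finset V := ((G.neighborFinset a).biUnion fun v => G.neighborFinset v) ∪
      ((G.neighborFinset b).biUnion fun v => G.neighborFinset v) with hT
  have hdeg : ∀ v : V, G.degree v ≤ D := fun v => (G.degree_le_maxDegree v).trans hD
  -- every filtered edge is incident to some vertex of T
  have hsub : F.filter p ⊆ T.biUnion fun t => G.incidenceFinset t := by
    intro f hf
    rw [mem_filter] at hf
    obtain ⟨u, hu, w, hw, hc⟩ := hp f hf.1 hf.2
    have hfE : f ∈ G.edgeSet := hF hf.1
    induction f using Sym2.ind with
    | _ x y =>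
      rw [Sym2.mem_iff] at hw
      have hxy : G.Adj x y := hfE
      have key : ∃ t, (∃ v, G.Adj u v ∧ G.Adj v t) ∧ (t = x ∨ t = y) := by
        rcases hw with rfl | rfl
        · exact witness_mem hxy hc
        · obtain ⟨t, ht, hor⟩ := witness_mem hxy.symm hc
          exact ⟨t, ht, hor.symm⟩
      obtain ⟨t, ⟨v, hv1, hv2⟩, hor⟩ := key
      have htT : t ∈ T := by
        rw [Sym2.mem_iff] at hu
        rw [hT, mem_union]
        rcases hu with rfl | rfl
        · exact Or.inl (mem_biUnion.2 ⟨v, by rwa [SimpleGraph.mem_neighborFinset],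
            by rwa [SimpleGraph.mem_neighborFinset]⟩)
        · exact Or.inr (mem_biUnion.2 ⟨v, by rwa [SimpleGraph.mem_neighborFinset],
            by rwa [SimpleGraph.mem_neighborFinset]⟩)
      refine mem_biUnion.2 ⟨t, htT, ?_⟩
      rw [SimpleGraph.mem_incidenceFinset]
      refine ⟨hfE, ?_⟩
      rcases hor with rfl | rfl
      · exact Sym2.mem_mk_left _ _
      · exact Sym2.mem_mk_right _ _
  have hTcard : T.card ≤ 2 * D ^ 2 := by
    have h1 : ∀ c : V, ((G.neighborFinset c).biUnion fun v => G.neighborFinset v).card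
        ≤ D ^ 2 := by
      intro c
      calc ((G.neighborFinset c).biUnion fun v => G.neighborFinset v).card
          ≤ ∑ v ∈ G.neighborFinset c, (G.neighborFinset v).card := card_biUnion_le
        _ ≤ ∑ _v ∈ G.neighborFinset c, D := by
            refine Finset.sum_le_sum fun v _ => ?_
            rw [SimpleGraph.card_neighborFinset_eq_degree]; exact hdeg v
        _ = (G.neighborFinset c).card * D := by rw [Finset.sum_const, smul_eq_mul]
        _ ≤ D * D := by
            refine Nat.mul_le_mul_right _ ?_
            rw [SimpleGraph.card_neighborFinset_eq_degree]; exact hdeg c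
        _ = D ^ 2 := (sq D).symm
    calc T.card ≤ _ + _ := card_union_le _ _
      _ ≤ D ^ 2 + D ^ 2 := Nat.add_le_add (h1 a) (h1 b)
      _ = 2 * D ^ 2 := by ring
  calc (F.filter p).card ≤ (T.biUnion fun t => G.incidenceFinset t).card :=
        card_le_card hsub
    _ ≤ ∑ t ∈ T, (G.incidenceFinset t).card := card_biUnion_le
    _ ≤ ∑ _t ∈ T, D := by
        refine Finset.sum_le_sum fun t _ => ?_
        rw [SimpleGraph.card_incidenceFinset_eq_degree]; exact hdeg t
    _ = T.card * D := by rw [Finset.sum_const, smul_eq_mul]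
    _ ≤ 2 * D ^ 2 * D := Nat.mul_le_mul_right _ hTcard
    _ = 2 * D ^ 3 := by ring

open Finset in
lemma greedy {V : Type*} [Fintype V] [DecidableEq V]
    (G : SimpleGraph V) [DecidableRel G.Adj] (D : ℕ) (hD : G.maxDegree ≤ D) :
    ∀ n (F : Finset (Sym2 V)), F.card ≤ n → ↑F ⊆ G.edgeSet →
      ∃ M ⊆ F, ((M : Set (Sym2 V)).Pairwise fun e f => ¬ Conflict G e f) ∧
        F.card ≤ 2 * D ^ 3 * M.card := by
  intro n
  induction n with
  | zero =>
    intro F hcard _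
    refine ⟨∅, empty_subset _, by simp [Set.Pairwise], ?_⟩
    simpa using Nat.le_of_lt_succ (Nat.lt_succ_of_le hcard)
  | succ m ih =>
    intro F hcard hF
    classical
    rcases F.eq_empty_or_nonempty with rfl | ⟨e, he⟩
    · exact ⟨∅, empty_subset _, by simp [Set.Pairwise], by simp⟩
    have heE : e ∈ G.edgeSet := hF he
    obtain ⟨⟨a, b⟩, rfl⟩ := e.exists_rep
    have heq : Quot.mk (Sym2.Rel V) (a, b) = s(a, b) := rfl
    rw [heq] at he heE
    have hab : G.Adj a b := heE
    set Bad : Finset (Sym2 V) := F.filter (fun f => Conflict G s(a,b) f) with hBad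
    have heBad : s(a,b) ∈ Bad := by
      rw [hBad, mem_filter]
      exact ⟨he, ⟨a, Sym2.mem_mk_left _ _, a, Sym2.mem_mk_left _ _, Or.inl rfl⟩⟩
    have hBadF : Bad ⊆ F := filter_subset _ _
    set F' : Finset (Sym2 V) := F \ Bad with hF'
    have hF'sub : F' ⊆ F := sdiff_subset
    have hF'card : F'.card ≤ m := by
      have h1 : F'.card + Bad.card = F.card := card_sdiff_add_card_eq_card hBadF
      have h2 : 1 ≤ Bad.card := card_pos.2 ⟨_, heBad⟩
      omega
    obtain ⟨M', hM'sub, hM'pair, hM'card⟩ := ih F' hF'card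
      (fun f hf => hF (hF'sub hf))
    have heM' : s(a,b) ∉ M' := fun h => by
      have := hM'sub h
      rw [hF', mem_sdiff] at this
      exact this.2 heBad
    refine ⟨insert s(a,b) M', ?_, ?_, ?_⟩
    · intro f hf
      rw [mem_insert] at hf
      rcases hf with rfl | hf
      · exact he
      · exact hF'sub (hM'sub hf)
    · rw [coe_insert]
      refine (@Set.pairwise_insert_of_symm _ _ _ _ ⟨?_⟩).2 ⟨hM'pair, ?_⟩
      · intro x y h hc; exact h hc.symm
      · intro f hf _
        have hfF' := hM'sub hf
        rw [hF', mem_sdiff] at hfF'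
        intro hc
        exact hfF'.2 (by rw [hBad, mem_filter]; exact ⟨hfF'.1, hc⟩)
    · have hBcard : Bad.card ≤ 2 * D ^ 3 := by
        rw [hBad]
        exact bad_card_le G D hD F hF hab _ (fun f _ hf => hf)
      have h1 : F'.card + Bad.card = F.card := card_sdiff_add_card_eq_card hBadF
      rw [card_insert_of_notMem heM']
      calc F.card = F'.card + Bad.card := h1.symm
        _ ≤ 2 * D ^ 3 * M'.card + 2 * D ^ 3 := Nat.add_le_add hM'card hBcard
        _ = 2 * D ^ 3 * (M'.card + 1) := by ring

/-- a graph of maximum degree ≤ D contains, inside any edge set `F`,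
an induced matching `M'' ⊆ F` with `|M''| ≥ |F| / (2·D³)` such that every vertex
outside the vertex set of `M''` is adjacent to (an endpoint of) at most one edge of `M''`. -/
theorem induced_matching_scattered_of_edge_set {V : Type*} [Fintype V] [DecidableEq V]
    (G : SimpleGraph V) [DecidableRel G.Adj] (D : ℕ) (hD : G.maxDegree ≤ D)
    (F : Finset (Sym2 V)) (hF : ↑F ⊆ G.edgeSet) :
    ∃ M'' ⊆ F, IsInducedMatching G M'' ∧ (F.card : ℚ) / (2 * D ^ 3) ≤ (M''.card : ℚ) ∧
      ∀ v : V, v ∉ MSupport M'' →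
        Set.Subsingleton {e | e ∈ M'' ∧ ∃ u, u ∈ e ∧ G.Adj v u} := by
  obtain ⟨M, hMF, hpair, hcard⟩ := greedy G D hD F.card F le_rfl hF
  have hME : ↑M ⊆ G.edgeSet := fun f hf => hF (hMF hf)
  refine ⟨M, hMF, ⟨⟨hME, ?_⟩, ?_⟩, ?_, ?_⟩
  · -- matching
    intro e he f hf hne v hv hv'
    exact hpair he hf hne ⟨v, hv, v, hv', Or.inl rfl⟩
  · -- induced
    intro g hg hsupp
    induction g using Sym2.ind with
    | _ x y =>
      have hxy : G.Adj x y := hg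
      obtain ⟨e₁, he₁, hx⟩ := hsupp x (Sym2.mem_mk_left _ _)
      obtain ⟨e₂, he₂, hy⟩ := hsupp y (Sym2.mem_mk_right _ _)
      by_cases hcase : e₁ = e₂
      · subst hcase
        have he₁E : e₁ ∈ G.edgeSet := hME he₁
        induction e₁ using Sym2.ind with
        | _ p q =>
          have hpq : p ≠ q := (G.ne_of_adj he₁E)
          rw [Sym2.mem_iff] at hx hy
          have hne : x ≠ y := G.ne_of_adj hxy
          have : s(x, y) = s(p, q) := by
            rcases hx with rfl | rfl <;> rcases hy with rfl | rfl <;>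
              first | exact absurd rfl hne | rfl | exact Sym2.eq_swap
          rwa [this]
      · exact absurd ⟨x, hx, y, hy, Or.inr (Or.inl hxy)⟩ (hpair he₁ he₂ hcase)
  · -- cardinality bound
    rcases Nat.eq_zero_or_pos D with rfl | hDpos
    · norm_num
    · rw [div_le_iff₀ (by positivity)]
      have : (F.card : ℚ) ≤ (2 * D ^ 3 * M.card : ℕ) := by exact_mod_cast hcard
      push_cast at this ⊢
      linarith
  · -- scattered
    intro v _ e he f hf
    simp only [Set.mem_setOf_eq] at he hf
    obtain ⟨heM, u, hu, hvu⟩ := he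
    obtain ⟨hfM, w, hw, hvw⟩ := hf
    by_contra hne
    exact hpair heM hfM hne ⟨u, hu, w, hw, Or.inr (Or.inr ⟨v, hvu, hvw⟩)⟩
end

section
/- Every vertex v of a simple graph G has at most ψ(v) neighbors whose degree is at least 2·ψ(v) + 2, where ψ(v) is the largest ℓ such that v is the center of a subdivided ℓ-star in G. -/
/-- `G` contains a subdivided `ℓ`-star centered at `v`: `ℓ` paths `v — a i — b i` of
length two starting at `v` that pairwise share no vertex other than `v`. -/
def HasSubdividedStar {V : Type*} (G : SimpleGraph V) (v : V) (ℓ : ℕ) : Prop :=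
  ∃ a b : Fin ℓ → V,
    (∀ i, G.Adj v (a i)) ∧ (∀ i, G.Adj (a i) (b i)) ∧
    (∀ i, a i ≠ v) ∧ (∀ i, b i ≠ v) ∧
    Function.Injective a ∧ Function.Injective b ∧ ∀ i j, a i ≠ b j

/-- `ψ(v)`: the largest `ℓ` such that `v` is the center of a subdivided `ℓ`-star. -/
noncomputable def psi {V : Type*} [Fintype V] (G : SimpleGraph V) (v : V) : ℕ :=
  sSup {ℓ | HasSubdividedStar G v ℓ}

lemma build_star {V : Type*} [Fintype V] (G : SimpleGraph V) (v : V) (n : ℕ)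
    (a : Fin n → V) (ha : Function.Injective a) (hadj : ∀ i, G.Adj v (a i))
    (hdeg : ∀ i, 2 * n ≤ (G.neighborSet (a i)).ncard) :
    HasSubdividedStar G v n := by
  classical
  have key : ∀ k, k ≤ n → ∃ b : Fin k → V,
      (∀ i : Fin k, ∀ h : (i : ℕ) < n, G.Adj (a ⟨i, h⟩) (b i)) ∧
      Function.Injective b ∧ (∀ i, b i ≠ v) ∧ (∀ i j, a j ≠ b i) := by
    intro k
    induction k with
    | zero => intro _; exact ⟨Fin.elim0, fun i => i.elim0, fun i => i.elim0,
        fun i => i.elim0, fun i => i.elim0⟩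
    | succ k ih =>
      intro hk
      obtain ⟨b, hb1, hb2, hb3, hb4⟩ := ih (Nat.le_of_succ_le hk)
      have hkn : k < n := hk
      set ak := a ⟨k, hkn⟩ with hak
      set F : Finset V := insert v (Finset.image a Finset.univ ∪ Finset.image b Finset.univ)
        with hF
      have hFcard : F.card ≤ 1 + (n + k) := by
        calc F.card ≤ (Finset.image a Finset.univ ∪ Finset.image b Finset.univ).card + 1 :=
              Finset.card_insert_le _ _
          _ ≤ ((Finset.image a Finset.univ).card + (Finset.image b Finset.univ).card) + 1 := by
              gcongr; exact Finset.card_union_le _ _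
          _ ≤ (n + k) + 1 := by
              gcongr
              · exact Finset.card_image_le.trans (by simp)
              · exact Finset.card_image_le.trans (by simp)
          _ = 1 + (n + k) := by omega
      have hakF : ak ∈ F := by
        simp only [hF, Finset.mem_insert, Finset.mem_union, Finset.mem_image,
          Finset.mem_univ, true_and]
        exact Or.inr (Or.inl ⟨⟨k, hkn⟩, rfl⟩)
      have hakN : ak ∉ G.neighborFinset ak := by simp
      have hNcard : 2 * n ≤ (G.neighborFinset ak).card := by
        rw [hak, SimpleGraph.neighborFinset_def, ← Set.ncard_eq_toFinset_card']
        exact hdeg _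
      have hsub : G.neighborFinset ak ⊆ (G.neighborFinset ak \ F) ∪ F.erase ak := by
        intro x hx
        by_cases hxF : x ∈ F
        · exact Finset.mem_union_right _ (Finset.mem_erase.2 ⟨fun h => hakN (h ▸ hx), hxF⟩)
        · exact Finset.mem_union_left _ (Finset.mem_sdiff.2 ⟨hx, hxF⟩)
      have hcard2 : (G.neighborFinset ak).card ≤
          (G.neighborFinset ak \ F).card + (F.card - 1) := by
        have h1 := Finset.card_le_card hsub
        have h2 := Finset.card_union_le (G.neighborFinset ak \ F) (F.erase ak)
        have h3 : (F.erase ak).card = F.card - 1 := Finset.card_erase_of_mem hakF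
        omega
      have hFpos : 1 ≤ F.card := Finset.card_pos.2 ⟨v, by simp [hF]⟩
      have hne : (G.neighborFinset ak \ F).Nonempty := by
        rw [← Finset.card_pos]
        omega
      obtain ⟨w, hw⟩ := hne
      rw [Finset.mem_sdiff] at hw
      obtain ⟨hwN, hwF⟩ := hw
      simp only [hF, Finset.mem_insert, Finset.mem_union, Finset.mem_image,
        Finset.mem_univ, true_and, not_or, not_exists] at hwF
      obtain ⟨hwv, hwa, hwb⟩ := hwF
      refine ⟨Fin.snoc b w, ?_, ?_, ?_, ?_⟩
      · intro i
        rcases Fin.eq_castSucc_or_eq_last i with ⟨i', rfl⟩ | rfl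
        · intro h
          rw [Fin.snoc_castSucc]
          have he : (⟨((i'.castSucc : Fin (k+1)) : ℕ), h⟩ : Fin n)
              = ⟨i', lt_of_lt_of_le i'.2 (Nat.le_of_succ_le hk)⟩ := by
            apply Fin.ext; simp
          rw [he]
          exact hb1 i' _
        · intro h
          rw [Fin.snoc_last]
          have he : (⟨((Fin.last k : Fin (k+1)) : ℕ), h⟩ : Fin n) = ⟨k, hkn⟩ := by
            apply Fin.ext; simp
          rw [he, ← hak]
          exact (SimpleGraph.mem_neighborFinset _ _ _).1 hwN
      · intro i j hij
        rcases Fin.eq_castSucc_or_eq_last i with ⟨i', rfl⟩ | rfl <;>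
          rcases Fin.eq_castSucc_or_eq_last j with ⟨j', rfl⟩ | rfl
        · rw [Fin.snoc_castSucc, Fin.snoc_castSucc] at hij
          exact congrArg _ (hb2 hij)
        · rw [Fin.snoc_castSucc, Fin.snoc_last] at hij
          exact absurd hij (hwb i')
        · rw [Fin.snoc_last, Fin.snoc_castSucc] at hij
          exact absurd hij.symm (hwb j')
        · rfl
      · intro i
        rcases Fin.eq_castSucc_or_eq_last i with ⟨i', rfl⟩ | rfl
        · rw [Fin.snoc_castSucc]; exact hb3 i'
        · rw [Fin.snoc_last]; exact hwv
      · intro i j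
        rcases Fin.eq_castSucc_or_eq_last i with ⟨i', rfl⟩ | rfl
        · rw [Fin.snoc_castSucc]; exact hb4 i' j
        · rw [Fin.snoc_last]; exact hwa j
  obtain ⟨b, hb1, hb2, hb3, hb4⟩ := key n le_rfl
  refine ⟨a, b, hadj, ?_, fun i => (hadj i).ne', hb3, ha, hb2, fun i j => hb4 j i⟩
  intro i
  have := hb1 i i.2
  simpa using this

/-- every vertex `v` has at most `ψ(v)` neighbors of degree at least
`2·ψ(v) + 2`. -/
theorem few_high_degree_neighbors {V : Type*} [Fintype V] (G : SimpleGraph V) (v : V) :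
    {u | G.Adj v u ∧ 2 * psi G v + 2 ≤ (G.neighborSet u).ncard}.ncard ≤ psi G v := by
  classical
  by_contra hcon
  push_neg at hcon
  set S := {u | G.Adj v u ∧ 2 * psi G v + 2 ≤ (G.neighborSet u).ncard} with hS
  set m := psi G v with hm
  have hSfin : S.Finite := Set.toFinite _
  have hcard : m + 1 ≤ hSfin.toFinset.card := by
    rw [← Set.ncard_eq_toFinset_card]
    omega
  obtain ⟨t, hts, htcard⟩ := Finset.exists_subset_card_eq hcard
  set a : Fin (m + 1) → V := fun i => (t.equivFin.symm (Fin.cast htcard.symm i) : V) with haa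
  have hmemS : ∀ i, a i ∈ S := by
    intro i
    have ht : (t.equivFin.symm (Fin.cast htcard.symm i) : V) ∈ t :=
      (t.equivFin.symm (Fin.cast htcard.symm i)).2
    have := hts ht
    rwa [Set.Finite.mem_toFinset] at this
  have hainj : Function.Injective a := by
    intro i j hij
    have h1 : t.equivFin.symm (Fin.cast htcard.symm i) = t.equivFin.symm (Fin.cast htcard.symm j) :=
      Subtype.ext hij
    have h2 := t.equivFin.symm.injective h1
    exact Fin.cast_injective _ h2
  have hstar : HasSubdividedStar G v (m + 1) := by
    apply build_star G v (m + 1) a hainj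
    · intro i; exact (hmemS i).1
    · intro i
      have := (hmemS i).2
      omega
  have hbdd : BddAbove {ℓ | HasSubdividedStar G v ℓ} := by
    refine ⟨Fintype.card V, fun ℓ hℓ => ?_⟩
    obtain ⟨a', _, _, _, _, _, ha', _⟩ := hℓ
    simpa using Fintype.card_le_of_injective a' ha'
  have : m + 1 ≤ m := by
    have := le_csSup hbdd hstar
    rwa [hm, psi]
  omega
end

section
/- For every k ≥ 1 there exists m ≥ 1 such that every graph G containing a (not necessarily induced) matching of size m contains, as an induced subgraph, either a clique on k vertices, or a complete bipartite graph K_{k,k}, or an induced matching with k edges. In particular, m = (2k+1)^{32k} suffices. -/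
open Finset in
lemma ramsey_step {α : Type*} {C : Type*} [Fintype C] [DecidableEq α] [DecidableEq C]
    (hC : Fintype.card C ≤ 16) (χ : α → α → C) :
    ∀ (t : ℕ) (S : Finset α), 17 ^ t ≤ S.card →
    ∃ (f : Fin t → α) (c : Fin t → C), Function.Injective f ∧ (∀ i, f i ∈ S) ∧
      ∀ i j : Fin t, i < j → χ (f i) (f j) = c i := by
  intro t
  induction t with
  | zero =>
    intro S _
    exact ⟨Fin.elim0, Fin.elim0, fun i => i.elim0, fun i => i.elim0, fun i => i.elim0⟩
  | succ t ih =>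
    intro S hS
    have hpos : 0 < S.card := lt_of_lt_of_le (by positivity) hS
    obtain ⟨x, hx⟩ := Finset.card_pos.mp hpos
    have hcard : 16 * 17 ^ t ≤ (S.erase x).card := by
      rw [Finset.card_erase_of_mem hx]
      have : 17 ^ (t + 1) = 16 * 17 ^ t + 17 ^ t := by ring
      have h1 : 1 ≤ 17 ^ t := Nat.one_le_pow _ _ (by norm_num)
      omega
    have hne : (Finset.univ : Finset C).Nonempty := by
      have : x ∈ S := hx
      exact ⟨χ x x, Finset.mem_univ _⟩
    obtain ⟨c0, -, hc0⟩ := Finset.exists_le_card_fiber_of_mul_le_card_of_maps_to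
      (f := fun y => χ x y) (s := S.erase x) (t := Finset.univ)
      (fun a _ => Finset.mem_univ _) hne
      (le_trans (Nat.mul_le_mul_right _ (le_trans hC (le_refl 16))) hcard)
    obtain ⟨f, c, hinj, hmem, hmono⟩ := ih _ hc0
    have hT : ∀ i, f i ∈ S.erase x := fun i => Finset.filter_subset _ _ (hmem i)
    refine ⟨Fin.cons x f, Fin.cons c0 c, ?_, ?_, ?_⟩
    · refine Fin.cons_injective_of_injective ?_ hinj
      rintro ⟨i, rfl⟩
      exact (Finset.mem_erase.mp (hT i)).1 rfl
    · intro i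
      induction i using Fin.cases with
      | zero => exact hx
      | succ i => exact Finset.mem_of_mem_erase (hT i)
    · intro i j hij
      induction i using Fin.cases with
      | zero =>
        induction j using Fin.cases with
        | zero => exact absurd hij (lt_irrefl _)
        | succ j =>
          simp only [Fin.cons_zero, Fin.cons_succ]
          exact (Finset.mem_filter.mp (hmem j)).2
      | succ i =>
        induction j using Fin.cases with
        | zero => exact absurd hij (by simp [Fin.not_lt, Fin.zero_le])
        | succ j =>
          simp only [Fin.cons_succ]
          exact hmono _ _ (by exact_mod_cast Nat.lt_of_succ_lt_succ hij)

/-- Classify a quadruple of adjacency booleans into 5 classes. -/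
def cls (p : Bool × Bool × Bool × Bool) : Fin 5 :=
  if p.1 then 0 else if p.2.2.2 then 1 else if p.2.1 then 2 else if p.2.2.1 then 3 else 4

lemma cls0 : ∀ p, cls p = 0 → p.1 = true := by decide
lemma cls1 : ∀ p, cls p = 1 → p.1 = false ∧ p.2.2.2 = true := by decide
lemma cls2 : ∀ p, cls p = 2 → p.1 = false ∧ p.2.1 = true ∧ p.2.2.2 = false := by decide
lemma cls3 : ∀ p, cls p = 3 →
    p.1 = false ∧ p.2.1 = false ∧ p.2.2.1 = true ∧ p.2.2.2 = false := by decide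
lemma cls4 : ∀ p, cls p = 4 → p = (false, false, false, false) := by decide

/-- for every `k ≥ 1`, any graph containing a matching of size
`m = (2k+1)^(32k)` contains as an induced subgraph a `k`-clique, a complete bipartite
graph `K_{k,k}`, or an induced matching with `k` edges; in particular such an `m`
exists for every `k ≥ 1`. -/
theorem matching_ramsey {V : Type*} [Fintype V] (G : SimpleGraph V) (k : ℕ) (hk : 1 ≤ k)
    (hM : ∃ M : Finset (Sym2 V), IsMatching' G M ∧ (2 * k + 1) ^ (32 * k) ≤ M.card) :
    (∃ S : Finset V, S.card = k ∧ ∀ u ∈ S, ∀ v ∈ S, u ≠ v → G.Adj u v) ∨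
    (∃ A B : Finset V, Disjoint A B ∧ A.card = k ∧ B.card = k ∧
      (∀ a ∈ A, ∀ b ∈ B, G.Adj a b) ∧ (∀ a ∈ A, ∀ a' ∈ A, ¬ G.Adj a a') ∧
      (∀ b ∈ B, ∀ b' ∈ B, ¬ G.Adj b b')) ∨
    (∃ M : Finset (Sym2 V), IsInducedMatching G M ∧ M.card = k) := by
  classical
  obtain ⟨M, hMm, hcard⟩ := hM
  -- endpoint functions
  have hout : ∀ e : Sym2 V, s(e.out.1, e.out.2) = e := by
    intro e
    exact Quot.out_eq e
  have hbound : 17 ^ (7 * k) ≤ M.card := by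
    refine le_trans ?_ hcard
    calc 17 ^ (7 * k) = (17 ^ 7) ^ k := by rw [← pow_mul]
      _ ≤ (3 ^ 32) ^ k := Nat.pow_le_pow_left (by norm_num) k
      _ = 3 ^ (32 * k) := by rw [← pow_mul, mul_comm]
      _ ≤ (2 * k + 1) ^ (32 * k) := Nat.pow_le_pow_left (by omega) _
  obtain ⟨f, c, hinj, hmemM, hmono⟩ :=
    ramsey_step (α := Sym2 V) (C := Bool × Bool × Bool × Bool)
      (by simp)
      (fun e e' => (decide (G.Adj e.out.1 e'.out.1), decide (G.Adj e.out.1 e'.out.2),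
        decide (G.Adj e.out.2 e'.out.1), decide (G.Adj e.out.2 e'.out.2)))
      (7 * k) M hbound
  -- decode colors
  have key : ∀ i j : Fin (7 * k), i < j →
      (c i).1 = decide (G.Adj (f i).out.1 (f j).out.1) ∧
      (c i).2.1 = decide (G.Adj (f i).out.1 (f j).out.2) ∧
      (c i).2.2.1 = decide (G.Adj (f i).out.2 (f j).out.1) ∧
      (c i).2.2.2 = decide (G.Adj (f i).out.2 (f j).out.2) := by
    intro i j hij
    have h := (hmono i j hij).symm
    exact ⟨congrArg Prod.fst h, congrArg (fun p => p.2.1) h,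
      congrArg (fun p => p.2.2.1) h, congrArg (fun p => p.2.2.2) h⟩
  -- vertices from distinct edges are distinct
  have hvert : ∀ i j : Fin (7 * k), i ≠ j → ∀ u, u ∈ f i → ∀ v, v ∈ f j → u ≠ v := by
    intro i j hij u hu v hv heq
    have hfij : f i ≠ f j := fun h => hij (hinj h)
    have hd := hMm.2 (Finset.mem_coe.mpr (hmemM i)) (Finset.mem_coe.mpr (hmemM j)) hfij
    exact hd u hu (heq ▸ hv)
  have hmema : ∀ i : Fin (7 * k), (f i).out.1 ∈ f i := fun i => Sym2.out_fst_mem _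
  have hmemb : ∀ i : Fin (7 * k), (f i).out.2 ∈ f i := fun i => Sym2.out_snd_mem _
  have hadj : ∀ i : Fin (7 * k), G.Adj (f i).out.1 (f i).out.2 := by
    intro i
    rw [← SimpleGraph.mem_edgeSet, hout]
    exact hMm.1 (Finset.mem_coe.mpr (hmemM i))
  -- pigeonhole over the 5 classes
  set cnt : Fin 5 → ℕ :=
    fun j => (Finset.univ.filter (fun i : Fin (7 * k) => cls (c i) = j)).card with hcnt
  have hsum : ∑ j : Fin 5, cnt j = 7 * k := by
    rw [hcnt, ← Finset.card_eq_sum_card_fiberwise (fun x _ => Finset.mem_univ (cls (c x)))]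
    simp
  have hmain : k ≤ cnt 0 ∨ k ≤ cnt 1 ∨ 2 * k ≤ cnt 2 ∨ 2 * k ≤ cnt 3 ∨ k ≤ cnt 4 := by
    by_contra h
    push_neg at h
    obtain ⟨h0, h1, h2, h3, h4⟩ := h
    rw [Fin.sum_univ_five] at hsum
    omega
  rcases hmain with h0 | h1 | h2 | h3 | h4
  · -- clique on first endpoints
    obtain ⟨F, hFsub, hFcard⟩ := Finset.exists_subset_card_eq h0
    set g : Fin k ↪o Fin (7 * k) := F.orderEmbOfFin hFcard with hg
    have hgcls : ∀ i : Fin k, cls (c (g i)) = 0 := fun i =>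
      (Finset.mem_filter.mp (hFsub (F.orderEmbOfFin_mem hFcard i))).2
    have hAdj : ∀ i j : Fin k, g i < g j → G.Adj (f (g i)).out.1 (f (g j)).out.1 := by
      intro i j hij
      exact of_decide_eq_true
        ((key (g i) (g j) hij).1.symm.trans (cls0 _ (hgcls i)))
    have hinj2 : Function.Injective (fun i : Fin k => (f (g i)).out.1) := by
      intro i j h
      by_contra hne'
      exact hvert (g i) (g j) (fun hgij => hne' (g.injective hgij)) _ (hmema _) _ (hmema _) h
    left
    refine ⟨Finset.univ.image (fun i : Fin k => (f (g i)).out.1), ?_, ?_⟩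
    · rw [Finset.card_image_of_injective _ hinj2, Finset.card_univ, Fintype.card_fin]
    · intro u hu v hv huv
      obtain ⟨i, -, rfl⟩ := Finset.mem_image.mp hu
      obtain ⟨j, -, rfl⟩ := Finset.mem_image.mp hv
      have hij : i ≠ j := fun h => huv (by rw [h])
      rcases lt_or_gt_of_ne (fun h : g i = g j => hij (g.injective h)) with h | h
      · exact hAdj i j h
      · exact (hAdj j i h).symm
  · -- clique on second endpoints
    obtain ⟨F, hFsub, hFcard⟩ := Finset.exists_subset_card_eq h1
    set g : Fin k ↪o Fin (7 * k) := F.orderEmbOfFin hFcard with hg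
    have hgcls : ∀ i : Fin k, cls (c (g i)) = 1 := fun i =>
      (Finset.mem_filter.mp (hFsub (F.orderEmbOfFin_mem hFcard i))).2
    have hAdj : ∀ i j : Fin k, g i < g j → G.Adj (f (g i)).out.2 (f (g j)).out.2 := by
      intro i j hij
      exact of_decide_eq_true
        ((key (g i) (g j) hij).2.2.2.symm.trans (cls1 _ (hgcls i)).2)
    have hinj2 : Function.Injective (fun i : Fin k => (f (g i)).out.2) := by
      intro i j h
      by_contra hne'
      exact hvert (g i) (g j) (fun hgij => hne' (g.injective hgij)) _ (hmemb _) _ (hmemb _) h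
    left
    refine ⟨Finset.univ.image (fun i : Fin k => (f (g i)).out.2), ?_, ?_⟩
    · rw [Finset.card_image_of_injective _ hinj2, Finset.card_univ, Fintype.card_fin]
    · intro u hu v hv huv
      obtain ⟨i, -, rfl⟩ := Finset.mem_image.mp hu
      obtain ⟨j, -, rfl⟩ := Finset.mem_image.mp hv
      have hij : i ≠ j := fun h => huv (by rw [h])
      rcases lt_or_gt_of_ne (fun h : g i = g j => hij (g.injective h)) with h | h
      · exact hAdj i j h
      · exact (hAdj j i h).symm
  · -- K_{k,k} : a-side early, b-side late
    obtain ⟨F, hFsub, hFcard⟩ := Finset.exists_subset_card_eq h2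
    set g : Fin (2 * k) ↪o Fin (7 * k) := F.orderEmbOfFin hFcard with hg
    have hgcls : ∀ i : Fin (2 * k), cls (c (g i)) = 2 := fun i =>
      (Finset.mem_filter.mp (hFsub (F.orderEmbOfFin_mem hFcard i))).2
    set lo : Fin k → Fin (2 * k) := fun i => ⟨i.1, by omega⟩ with hlo
    set hi : Fin k → Fin (2 * k) := fun i => ⟨k + i.1, by omega⟩ with hhi
    have hlohi : ∀ i j : Fin k, lo i < hi j := by
      intro i j
      simp only [hlo, hhi, Fin.mk_lt_mk]
      omega
    have hAdj : ∀ i j : Fin k, G.Adj (f (g (lo i))).out.1 (f (g (hi j))).out.2 := by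
      intro i j
      exact of_decide_eq_true
        ((key (g (lo i)) (g (hi j)) (g.strictMono (hlohi i j))).2.1.symm.trans
          (cls2 _ (hgcls (lo i))).2.1)
    have hnAA : ∀ i j : Fin k, g (lo i) < g (lo j) →
        ¬ G.Adj (f (g (lo i))).out.1 (f (g (lo j))).out.1 := by
      intro i j hij
      exact of_decide_eq_false
        ((key (g (lo i)) (g (lo j)) hij).1.symm.trans (cls2 _ (hgcls (lo i))).1)
    have hnBB : ∀ i j : Fin k, g (hi i) < g (hi j) →
        ¬ G.Adj (f (g (hi i))).out.2 (f (g (hi j))).out.2 := by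
      intro i j hij
      exact of_decide_eq_false
        ((key (g (hi i)) (g (hi j)) hij).2.2.2.symm.trans (cls2 _ (hgcls (hi i))).2.2)
    have hloinj : Function.Injective lo := by
      intro i j h
      simpa [hlo, Fin.ext_iff] using h
    have hhiinj : Function.Injective hi := by
      intro i j h
      simp only [hhi, Fin.mk.injEq] at h
      exact Fin.ext (by omega)
    have hinjA : Function.Injective (fun i : Fin k => (f (g (lo i))).out.1) := by
      intro i j h
      by_contra hne'
      exact hvert (g (lo i)) (g (lo j))
        (fun hgij => hne' (hloinj (g.injective hgij))) _ (hmema _) _ (hmema _) h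
    have hinjB : Function.Injective (fun i : Fin k => (f (g (hi i))).out.2) := by
      intro i j h
      by_contra hne'
      exact hvert (g (hi i)) (g (hi j))
        (fun hgij => hne' (hhiinj (g.injective hgij))) _ (hmemb _) _ (hmemb _) h
    right; left
    refine ⟨Finset.univ.image (fun i : Fin k => (f (g (lo i))).out.1),
      Finset.univ.image (fun i : Fin k => (f (g (hi i))).out.2), ?_, ?_, ?_, ?_, ?_, ?_⟩
    · rw [Finset.disjoint_left]
      intro a haA haB
      obtain ⟨i, -, rfl⟩ := Finset.mem_image.mp haA
      obtain ⟨j, -, hj⟩ := Finset.mem_image.mp haB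
      exact hvert (g (hi j)) (g (lo i))
        (fun hgij => absurd (g.injective hgij) (Fin.ne_of_gt (hlohi i j)))
        _ (hmemb _) _ (hmema _) hj
    · rw [Finset.card_image_of_injective _ hinjA, Finset.card_univ, Fintype.card_fin]
    · rw [Finset.card_image_of_injective _ hinjB, Finset.card_univ, Fintype.card_fin]
    · intro a haA b hbB
      obtain ⟨i, -, rfl⟩ := Finset.mem_image.mp haA
      obtain ⟨j, -, rfl⟩ := Finset.mem_image.mp hbB
      exact hAdj i j
    · intro a haA a' haA' hadj'
      obtain ⟨i, -, rfl⟩ := Finset.mem_image.mp haA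
      obtain ⟨j, -, rfl⟩ := Finset.mem_image.mp haA'
      rcases eq_or_ne i j with rfl | hij
      · exact G.irrefl hadj'
      · rcases lt_or_gt_of_ne (fun h : g (lo i) = g (lo j) =>
          hij (hloinj (g.injective h))) with h | h
        · exact hnAA i j h hadj'
        · exact hnAA j i h hadj'.symm
    · intro b hbB b' hbB' hadj'
      obtain ⟨i, -, rfl⟩ := Finset.mem_image.mp hbB
      obtain ⟨j, -, rfl⟩ := Finset.mem_image.mp hbB'
      rcases eq_or_ne i j with rfl | hij
      · exact G.irrefl hadj'
      · rcases lt_or_gt_of_ne (fun h : g (hi i) = g (hi j) =>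
          hij (hhiinj (g.injective h))) with h | h
        · exact hnBB i j h hadj'
        · exact hnBB j i h hadj'.symm
  · -- K_{k,k} : b-side early, a-side late
    obtain ⟨F, hFsub, hFcard⟩ := Finset.exists_subset_card_eq h3
    set g : Fin (2 * k) ↪o Fin (7 * k) := F.orderEmbOfFin hFcard with hg
    have hgcls : ∀ i : Fin (2 * k), cls (c (g i)) = 3 := fun i =>
      (Finset.mem_filter.mp (hFsub (F.orderEmbOfFin_mem hFcard i))).2
    set lo : Fin k → Fin (2 * k) := fun i => ⟨i.1, by omega⟩ with hlo
    set hi : Fin k → Fin (2 * k) := fun i => ⟨k + i.1, by omega⟩ with hhi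
    have hlohi : ∀ i j : Fin k, lo i < hi j := by
      intro i j
      simp only [hlo, hhi, Fin.mk_lt_mk]
      omega
    have hAdj : ∀ i j : Fin k, G.Adj (f (g (lo i))).out.2 (f (g (hi j))).out.1 := by
      intro i j
      exact of_decide_eq_true
        ((key (g (lo i)) (g (hi j)) (g.strictMono (hlohi i j))).2.2.1.symm.trans
          (cls3 _ (hgcls (lo i))).2.2.1)
    have hnAA : ∀ i j : Fin k, g (lo i) < g (lo j) →
        ¬ G.Adj (f (g (lo i))).out.2 (f (g (lo j))).out.2 := by
      intro i j hij
      exact of_decide_eq_false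
        ((key (g (lo i)) (g (lo j)) hij).2.2.2.symm.trans (cls3 _ (hgcls (lo i))).2.2.2)
    have hnBB : ∀ i j : Fin k, g (hi i) < g (hi j) →
        ¬ G.Adj (f (g (hi i))).out.1 (f (g (hi j))).out.1 := by
      intro i j hij
      exact of_decide_eq_false
        ((key (g (hi i)) (g (hi j)) hij).1.symm.trans (cls3 _ (hgcls (hi i))).1)
    have hloinj : Function.Injective lo := by
      intro i j h
      simpa [hlo, Fin.ext_iff] using h
    have hhiinj : Function.Injective hi := by
      intro i j h
      simp only [hhi, Fin.mk.injEq] at h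
      exact Fin.ext (by omega)
    have hinjA : Function.Injective (fun i : Fin k => (f (g (lo i))).out.2) := by
      intro i j h
      by_contra hne'
      exact hvert (g (lo i)) (g (lo j))
        (fun hgij => hne' (hloinj (g.injective hgij))) _ (hmemb _) _ (hmemb _) h
    have hinjB : Function.Injective (fun i : Fin k => (f (g (hi i))).out.1) := by
      intro i j h
      by_contra hne'
      exact hvert (g (hi i)) (g (hi j))
        (fun hgij => hne' (hhiinj (g.injective hgij))) _ (hmema _) _ (hmema _) h
    right; left
    refine ⟨Finset.univ.image (fun i : Fin k => (f (g (lo i))).out.2),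
      Finset.univ.image (fun i : Fin k => (f (g (hi i))).out.1), ?_, ?_, ?_, ?_, ?_, ?_⟩
    · rw [Finset.disjoint_left]
      intro a haA haB
      obtain ⟨i, -, rfl⟩ := Finset.mem_image.mp haA
      obtain ⟨j, -, hj⟩ := Finset.mem_image.mp haB
      exact hvert (g (hi j)) (g (lo i))
        (fun hgij => absurd (g.injective hgij) (Fin.ne_of_gt (hlohi i j)))
        _ (hmema _) _ (hmemb _) hj
    · rw [Finset.card_image_of_injective _ hinjA, Finset.card_univ, Fintype.card_fin]
    · rw [Finset.card_image_of_injective _ hinjB, Finset.card_univ, Fintype.card_fin]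
    · intro a haA b hbB
      obtain ⟨i, -, rfl⟩ := Finset.mem_image.mp haA
      obtain ⟨j, -, rfl⟩ := Finset.mem_image.mp hbB
      exact hAdj i j
    · intro a haA a' haA' hadj'
      obtain ⟨i, -, rfl⟩ := Finset.mem_image.mp haA
      obtain ⟨j, -, rfl⟩ := Finset.mem_image.mp haA'
      rcases eq_or_ne i j with rfl | hij
      · exact G.irrefl hadj'
      · rcases lt_or_gt_of_ne (fun h : g (lo i) = g (lo j) =>
          hij (hloinj (g.injective h))) with h | h
        · exact hnAA i j h hadj'
        · exact hnAA j i h hadj'.symm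
    · intro b hbB b' hbB' hadj'
      obtain ⟨i, -, rfl⟩ := Finset.mem_image.mp hbB
      obtain ⟨j, -, rfl⟩ := Finset.mem_image.mp hbB'
      rcases eq_or_ne i j with rfl | hij
      · exact G.irrefl hadj'
      · rcases lt_or_gt_of_ne (fun h : g (hi i) = g (hi j) =>
          hij (hhiinj (g.injective h))) with h | h
        · exact hnBB i j h hadj'
        · exact hnBB j i h hadj'.symm
  · -- induced matching
    obtain ⟨F, hFsub, hFcard⟩ := Finset.exists_subset_card_eq h4
    set g : Fin k ↪o Fin (7 * k) := F.orderEmbOfFin hFcard with hg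
    have hgcls : ∀ i : Fin k, cls (c (g i)) = 4 := fun i =>
      (Finset.mem_filter.mp (hFsub (F.orderEmbOfFin_mem hFcard i))).2
    have hnone : ∀ i j : Fin k, g i < g j →
        ∀ u, u ∈ f (g i) → ∀ v, v ∈ f (g j) → ¬ G.Adj u v := by
      intro i j hij u hu v hv
      have hc4 := cls4 _ (hgcls i)
      obtain ⟨hk1, hk2, hk3, hk4⟩ := key (g i) (g j) hij
      rw [hc4] at hk1 hk2 hk3 hk4
      rw [← hout (f (g i))] at hu
      rw [← hout (f (g j))] at hv
      rcases Sym2.mem_iff.mp hu with rfl | rfl <;> rcases Sym2.mem_iff.mp hv with rfl | rfl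
      · exact of_decide_eq_false hk1.symm
      · exact of_decide_eq_false hk2.symm
      · exact of_decide_eq_false hk3.symm
      · exact of_decide_eq_false hk4.symm
    have hinj2 : Function.Injective (fun i : Fin k => f (g i)) :=
      fun i j h => g.injective (hinj h)
    set M' : Finset (Sym2 V) := Finset.univ.image (fun i : Fin k => f (g i)) with hM'
    have hsub : M' ⊆ M := by
      intro e he
      obtain ⟨i, -, rfl⟩ := Finset.mem_image.mp he
      exact hmemM (g i)
    right; right
    refine ⟨M', ⟨⟨?_, ?_⟩, ?_⟩, ?_⟩
    · exact subset_trans (Finset.coe_subset.mpr hsub) hMm.1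
    · exact hMm.2.mono (Finset.coe_subset.mpr hsub)
    · -- induced
      intro e he hsupp
      induction e using Sym2.ind with
      | _ u v =>
        have huv : G.Adj u v := (SimpleGraph.mem_edgeSet G).mp he
        obtain ⟨eu, heu, hueu⟩ := hsupp u (Sym2.mem_mk_left u v)
        obtain ⟨ev, hev, hvev⟩ := hsupp v (Sym2.mem_mk_right u v)
        obtain ⟨i, -, rfl⟩ := Finset.mem_image.mp heu
        obtain ⟨j, -, rfl⟩ := Finset.mem_image.mp hev
        rcases eq_or_ne i j with rfl | hij
        · have := (Sym2.mem_and_mem_iff huv.ne).mp ⟨hueu, hvev⟩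
          rw [← this]
          exact Finset.mem_image.mpr ⟨i, Finset.mem_univ i, rfl⟩
        · exfalso
          rcases lt_or_gt_of_ne (fun h : g i = g j => hij (g.injective h)) with h | h
          · exact hnone i j h u hueu v hvev huv
          · exact hnone j i h v hvev u hueu huv.symm
    · rw [hM', Finset.card_image_of_injective _ hinj2, Finset.card_univ, Fintype.card_fin]
end

section
/- Let 𝓗 be a class of graphs closed under taking induced subgraphs (hereditary). Then at least one of the following holds: (1) the vertex-cover number is bounded on 𝓗; (2) every clique belongs to 𝓗; (3) every complete bipartite graph K_{k,k} belongs to 𝓗; (4) every 1-regular graph (matching) belongs to 𝓗. -/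
open Finset

/-- `C` is a vertex cover of `G`. -/
def IsVertexCover {V : Type*} (G : SimpleGraph V) (C : Finset V) : Prop :=
  ∀ e ∈ G.edgeSet, ∃ v ∈ C, v ∈ e

/-- The complete bipartite graph `K_{k,k}` on `Fin (2k)`, with parts `{0,…,k-1}` and
`{k,…,2k-1}`. -/
def completeBipGraph (k : ℕ) : SimpleGraph (Fin (2 * k)) :=
  SimpleGraph.fromRel fun i j => i.val < k ∧ ¬ j.val < k

/-- The perfect matching (1-regular graph) on `Fin (2k)`, with edges `{2t, 2t+1}`. -/
def matchingGraph (k : ℕ) : SimpleGraph (Fin (2 * k)) :=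
  SimpleGraph.fromRel fun i j => i.val / 2 = j.val / 2

lemma minHomog {α : Type} [Fintype α] [DecidableEq α] [Nonempty α] (c : ℕ → ℕ → α) :
    ∀ (m : ℕ) (s : Finset ℕ), (Fintype.card α + 1) ^ m ≤ s.card →
    ∃ (T : Finset ℕ) (col : ℕ → α), T ⊆ s ∧ T.card = m ∧
      ∀ i ∈ T, ∀ j ∈ T, i < j → c i j = col i := by
  intro m
  induction m with
  | zero =>
    intro s _
    exact ⟨∅, fun _ => Classical.arbitrary α, empty_subset _, rfl, by simp⟩
  | succ m ih =>
    intro s hs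
    have hpow : 1 ≤ (Fintype.card α + 1) ^ m := Nat.one_le_pow _ _ (by omega)
    have hpow' : (Fintype.card α + 1) ^ (m + 1)
        = (Fintype.card α + 1) * (Fintype.card α + 1) ^ m := by ring
    have hsne : s.Nonempty := card_pos.1 (by nlinarith [hs])
    set a := s.min' hsne with ha
    have haS : a ∈ s := s.min'_mem hsne
    set s' := s.erase a with hs'
    have hcard' : s'.card = s.card - 1 := card_erase_of_mem haS
    have hs2 : Fintype.card α * (Fintype.card α + 1) ^ m + 1 ≤ s.card := by nlinarith
    obtain ⟨y, -, hy⟩ := exists_le_card_fiber_of_mul_le_card_of_maps_to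
      (f := fun x => c a x) (t := (univ : Finset α)) (s := s')
      (n := (Fintype.card α + 1) ^ m)
      (fun x _ => mem_univ _) univ_nonempty
      (by rw [card_univ, hcard']; omega)
    obtain ⟨T', col', hT's, hT'card, hT'mono⟩ := ih _ hy
    have hT'sub : T' ⊆ s' := hT's.trans (filter_subset _ _)
    have haT' : a ∉ T' := fun h => (mem_erase.1 (hT'sub h)).1 rfl
    refine ⟨insert a T', Function.update col' a y, ?_, ?_, ?_⟩
    · exact insert_subset haS (hT'sub.trans (erase_subset _ _))
    · rw [card_insert_of_notMem haT', hT'card]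
    · intro i hi j hj hij
      rcases mem_insert.1 hi with rfl | hiT
      · have hjT : j ∈ T' := by
          rcases mem_insert.1 hj with h | h
          · exact absurd h (by omega)
          · exact h
        have hcy : c a j = y := (mem_filter.1 (hT's hjT)).2
        rw [hcy, Function.update_self]
      · rcases mem_insert.1 hj with rfl | hjT
        · exfalso
          have := s.min'_le i (erase_subset _ _ (hT'sub hiT))
          omega
        · rw [Function.update_of_ne (by rintro rfl; exact haT' hiT)]
          exact hT'mono i hiT j hjT hij

lemma ramseyPairs {α : Type} [Fintype α] [DecidableEq α] [Nonempty α] (c : ℕ → ℕ → α)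
    (K : ℕ) (s : Finset ℕ) (hs : (Fintype.card α + 1) ^ (Fintype.card α * K) ≤ s.card) :
    ∃ (S : Finset ℕ) (y : α), S ⊆ s ∧ K ≤ S.card ∧
      ∀ i ∈ S, ∀ j ∈ S, i < j → c i j = y := by
  obtain ⟨T, col, hTs, hTcard, hmono⟩ := minHomog c _ s hs
  obtain ⟨y, -, hy⟩ := exists_le_card_fiber_of_mul_le_card_of_maps_to
    (f := col) (t := (univ : Finset α)) (s := T)
    (fun x _ => mem_univ _) univ_nonempty (by rw [card_univ, hTcard])
  refine ⟨T.filter (fun x => col x = y), y, (filter_subset _ _).trans hTs, hy, ?_⟩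
  intro i hi j hj hij
  rw [hmono i (filter_subset _ _ hi) j (filter_subset _ _ hj) hij, (mem_filter.1 hi).2]

lemma matching_or_cover (n : ℕ) (G : SimpleGraph (Fin n)) (M : ℕ) :
    (∃ q : Fin (2 * M) → Fin n, Function.Injective q ∧
      ∀ i, (h : i < M) → G.Adj (q ⟨2 * i, by omega⟩) (q ⟨2 * i + 1, by omega⟩)) ∨
    (∃ C : Finset (Fin n), IsVertexCover G C ∧ C.card ≤ 2 * M) := by
  classical
  induction M with
  | zero =>
    left
    exact ⟨fun i => absurd i.isLt (by omega), fun a b _ => absurd a.isLt (by omega),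
      fun i h => absurd h (by omega)⟩
  | succ M ih =>
    rcases ih with ⟨q, hqinj, hq⟩ | ⟨C, hC, hCcard⟩
    · set C := Finset.image q Finset.univ with hCdef
      by_cases hC : IsVertexCover G C
      · right
        refine ⟨C, hC, ?_⟩
        calc C.card ≤ (Finset.univ : Finset (Fin (2 * M))).card := card_image_le
          _ = 2 * M := by simp
          _ ≤ 2 * (M + 1) := by omega
      · left
        rw [IsVertexCover] at hC
        push_neg at hC
        obtain ⟨e, he, hcov⟩ := hC
        obtain ⟨⟨u, v⟩, rfl⟩ := Quot.exists_rep e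
        have huv : G.Adj u v := he
        have hu : ∀ x : Fin (2 * M), q x ≠ u := by
          intro x hx
          exact (hcov u (hx ▸ mem_image_of_mem q (mem_univ x))) (Sym2.mem_mk_left u v)
        have hv : ∀ x : Fin (2 * M), q x ≠ v := by
          intro x hx
          exact (hcov v (hx ▸ mem_image_of_mem q (mem_univ x))) (Sym2.mem_mk_right u v)
        refine ⟨fun j => if h : j.val < 2 * M then q ⟨j, h⟩ else
          if j.val = 2 * M then u else v, ?_, ?_⟩
        · intro a b hab
          by_cases ha : a.val < 2 * M <;> by_cases hb : b.val < 2 * M <;>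
            simp only [dif_pos, dif_neg, ha, hb] at hab
          · have := hqinj hab
            exact Fin.ext (by simpa [Fin.mk.injEq] using congrArg Fin.val this)
          · by_cases hb2 : b.val = 2 * M <;> simp only [hb2, if_pos, if_neg] at hab
            · exact absurd hab (hu _)
            · exact absurd hab (hv _)
          · by_cases ha2 : a.val = 2 * M <;> simp only [ha2, if_pos, if_neg] at hab
            · exact absurd hab.symm (hu _)
            · exact absurd hab.symm (hv _)
          · have ha2 := a.isLt
            have hb2 := b.isLt
            by_cases ha3 : a.val = 2 * M <;> by_cases hb3 : b.val = 2 * M <;>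
              simp only [ha3, hb3, if_pos, if_neg] at hab
            · exact Fin.ext (by omega)
            · exact absurd hab huv.ne
            · exact absurd hab.symm huv.ne
            · exact Fin.ext (by omega)
        · intro i h
          by_cases hi : i < M
          · have h1 : 2 * i < 2 * M := by omega
            have h2 : 2 * i + 1 < 2 * M := by omega
            simp only [dif_pos h1, dif_pos h2]
            exact hq i hi
          · have e1 : ¬ (2 * i < 2 * M) := by omega
            have e2 : ¬ (2 * i + 1 < 2 * M) := by omega
            simp only [dif_neg e1, dif_neg e2, if_pos (by omega : 2 * i = 2 * M),
              if_neg (by omega : ¬ (2 * i + 1 = 2 * M))]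
            exact huv
    · right
      exact ⟨C, hC, by omega⟩

/-- for a hereditary class of graphs `𝓗`, either the vertex-cover number
is bounded on `𝓗`, or `𝓗` contains every clique, every complete bipartite graph
`K_{k,k}`, or every 1-regular graph. -/
theorem hereditary_class_dichotomy (ℋ : ∀ n : ℕ, SimpleGraph (Fin n) → Prop)
    (hered : ∀ (n m : ℕ) (G : SimpleGraph (Fin n)) (G' : SimpleGraph (Fin m)),
      ℋ n G → (∃ f : Fin m ↪ Fin n, ∀ a b, G'.Adj a b ↔ G.Adj (f a) (f b)) → ℋ m G') :
    (∃ b : ℕ, ∀ (n : ℕ) (G : SimpleGraph (Fin n)), ℋ n G →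
        ∃ C : Finset (Fin n), IsVertexCover G C ∧ C.card ≤ b) ∨
    (∀ k : ℕ, ℋ k (⊤ : SimpleGraph (Fin k))) ∨
    (∀ k : ℕ, ℋ (2 * k) (completeBipGraph k)) ∨
    (∀ k : ℕ, ℋ (2 * k) (matchingGraph k)) := by
  classical
  by_cases h1 : ∀ k : ℕ, ℋ k (⊤ : SimpleGraph (Fin k))
  · exact Or.inr (Or.inl h1)
  by_cases h2 : ∀ k : ℕ, ℋ (2 * k) (completeBipGraph k)
  · exact Or.inr (Or.inr (Or.inl h2))
  by_cases h3 : ∀ k : ℕ, ℋ (2 * k) (matchingGraph k)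
  · exact Or.inr (Or.inr (Or.inr h3))
  left
  push_neg at h1 h2 h3
  obtain ⟨k1, hk1⟩ := h1
  obtain ⟨k2, hk2⟩ := h2
  obtain ⟨k3, hk3⟩ := h3
  set K := max k1 (max (2 * k2) k3) with hKdef
  set N := 17 ^ (16 * K) with hNdef
  have hN1 : 1 ≤ N := Nat.one_le_pow _ _ (by omega)
  refine ⟨2 * N, fun n G hG => ?_⟩
  rcases matching_or_cover n G N with ⟨q, hqinj, hq⟩ | hc
  swap
  · exact hc
  exfalso
  set A : ℕ → Fin n := fun i =>
    if h : i < N then q ⟨2 * i, by omega⟩ else q ⟨0, by omega⟩ with hA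
  set B : ℕ → Fin n := fun i =>
    if h : i < N then q ⟨2 * i + 1, by omega⟩ else q ⟨0, by omega⟩ with hB
  have hqv : ∀ (x y : Fin (2 * N)), q x = q y → x.val = y.val :=
    fun x y h => congrArg Fin.val (hqinj h)
  have hAB : ∀ i, i < N → ∀ j, j < N →
      (A i = A j → i = j) ∧ (B i = B j → i = j) ∧ A i ≠ B j := by
    intro i hi j hj
    simp only [hA, hB, dif_pos hi, dif_pos hj]
    refine ⟨fun h => ?_, fun h => ?_, fun h => ?_⟩
    · have := hqv _ _ h; simp only at this; omega
    · have := hqv _ _ h; simp only at this; omega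
    · have := hqv _ _ h; simp only at this; omega
  have hEdge : ∀ i, i < N → G.Adj (A i) (B i) := by
    intro i hi
    simp only [hA, hB, dif_pos hi]
    exact hq i hi
  set c : ℕ → ℕ → Bool × Bool × Bool × Bool := fun i j =>
    (decide (G.Adj (A i) (A j)), decide (G.Adj (A i) (B j)),
     decide (G.Adj (B i) (A j)), decide (G.Adj (B i) (B j))) with hcdef
  have hcard : Fintype.card (Bool × Bool × Bool × Bool) = 16 := by simp
  obtain ⟨S, ⟨p1, p2, p3, p4⟩, hSsub, hScard, hmono⟩ :=
    ramseyPairs c K (Finset.range N) (by rw [hcard, card_range])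
  have hSN : ∀ x ∈ S, x < N := fun x hx => mem_range.1 (hSsub hx)
  have hcolor : ∀ i ∈ S, ∀ j ∈ S, i < j →
      (G.Adj (A i) (A j) ↔ p1 = true) ∧ (G.Adj (A i) (B j) ↔ p2 = true) ∧
      (G.Adj (B i) (A j) ↔ p3 = true) ∧ (G.Adj (B i) (B j) ↔ p4 = true) := by
    intro i hi j hj hij
    have h := hmono i hi j hj hij
    simp only [hcdef, Prod.mk.injEq] at h
    obtain ⟨e1, e2, e3, e4⟩ := h
    rw [← e1, ← e2, ← e3, ← e4]
    simp
  have hsymAA : ∀ i ∈ S, ∀ j ∈ S, i ≠ j → (G.Adj (A i) (A j) ↔ p1 = true) := by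
    intro i hi j hj hij
    rcases lt_or_gt_of_ne hij with h | h
    · exact (hcolor i hi j hj h).1
    · rw [SimpleGraph.adj_comm]; exact (hcolor j hj i hi h).1
  have hsymBB : ∀ i ∈ S, ∀ j ∈ S, i ≠ j → (G.Adj (B i) (B j) ↔ p4 = true) := by
    intro i hi j hj hij
    rcases lt_or_gt_of_ne hij with h | h
    · exact (hcolor i hi j hj h).2.2.2
    · rw [SimpleGraph.adj_comm]; exact (hcolor j hj i hi h).2.2.2
  by_cases hp1 : p1 = true
  · -- clique using A-side
    have hKk : k1 ≤ S.card := le_trans (by omega) hScard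
    obtain ⟨T, hTS, hTcard⟩ := exists_subset_card_eq hKk
    set g := T.orderIsoOfFin hTcard with hg
    have hgT : ∀ a : Fin k1, (g a : ℕ) ∈ S := fun a => hTS (g a).2
    have hgne : ∀ a b : Fin k1, a ≠ b → (g a : ℕ) ≠ (g b : ℕ) :=
      fun a b h hh => h (g.injective (Subtype.ext hh))
    refine hk1 (hered n k1 G ⊤ hG ⟨⟨fun a => A (g a), ?_⟩, ?_⟩)
    · intro a b hab
      by_contra hne
      exact hgne a b hne
        ((hAB _ (hSN _ (hgT a)) _ (hSN _ (hgT b))).1 hab)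
    · intro a b
      simp only [SimpleGraph.top_adj]
      constructor
      · intro hab
        exact (hsymAA _ (hgT a) _ (hgT b) (hgne a b hab)).2 hp1
      · intro hadj heq
        exact G.loopless.irrefl _ (heq ▸ hadj)
  · by_cases hp4 : p4 = true
    · -- clique using B-side
      have hKk : k1 ≤ S.card := le_trans (by omega) hScard
      obtain ⟨T, hTS, hTcard⟩ := exists_subset_card_eq hKk
      set g := T.orderIsoOfFin hTcard with hg
      have hgT : ∀ a : Fin k1, (g a : ℕ) ∈ S := fun a => hTS (g a).2
      have hgne : ∀ a b : Fin k1, a ≠ b → (g a : ℕ) ≠ (g b : ℕ) :=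
        fun a b h hh => h (g.injective (Subtype.ext hh))
      refine hk1 (hered n k1 G ⊤ hG ⟨⟨fun a => B (g a), ?_⟩, ?_⟩)
      · intro a b hab
        by_contra hne
        exact hgne a b hne
          ((hAB _ (hSN _ (hgT a)) _ (hSN _ (hgT b))).2.1 hab)
      · intro a b
        simp only [SimpleGraph.top_adj]
        constructor
        · intro hab
          exact (hsymBB _ (hgT a) _ (hgT b) (hgne a b hab)).2 hp4
        · intro hadj heq
          exact G.loopless.irrefl _ (heq ▸ hadj)
    · -- p1, p4 false
      have hnAA : ∀ i ∈ S, ∀ j ∈ S, i ≠ j → ¬G.Adj (A i) (A j) :=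
        fun i hi j hj hij h => hp1 ((hsymAA i hi j hj hij).1 h)
      have hnBB : ∀ i ∈ S, ∀ j ∈ S, i ≠ j → ¬G.Adj (B i) (B j) :=
        fun i hi j hj hij h => hp4 ((hsymBB i hi j hj hij).1 h)
      by_cases hp2 : p2 = true
      · -- complete bipartite, A-side low
        have hKk : 2 * k2 ≤ S.card := le_trans (by omega) hScard
        obtain ⟨T, hTS, hTcard⟩ := exists_subset_card_eq hKk
        set g := T.orderIsoOfFin hTcard with hg
        have hgT : ∀ a : Fin (2 * k2), (g a : ℕ) ∈ S := fun a => hTS (g a).2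
        have hgne : ∀ a b : Fin (2 * k2), a ≠ b → (g a : ℕ) ≠ (g b : ℕ) :=
          fun a b h hh => h (g.injective (Subtype.ext hh))
        have hglt : ∀ a b : Fin (2 * k2), a < b → (g a : ℕ) < (g b : ℕ) :=
          fun a b h => g.strictMono h
        refine hk2 (hered n (2 * k2) G (completeBipGraph k2) hG
          ⟨⟨fun a => if a.val < k2 then A (g a) else B (g a), ?_⟩, ?_⟩)
        · intro a b hab
          by_contra hne
          by_cases ha : a.val < k2 <;> by_cases hb : b.val < k2 <;>
            simp only [if_pos, if_neg, ha, hb] at hab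
          · exact hgne a b hne ((hAB _ (hSN _ (hgT a)) _ (hSN _ (hgT b))).1 hab)
          · exact (hAB _ (hSN _ (hgT a)) _ (hSN _ (hgT b))).2.2 hab
          · exact (hAB _ (hSN _ (hgT b)) _ (hSN _ (hgT a))).2.2 hab.symm
          · exact hgne a b hne ((hAB _ (hSN _ (hgT a)) _ (hSN _ (hgT b))).2.1 hab)
        · intro a b
          simp only [completeBipGraph, SimpleGraph.fromRel_adj,
            Function.Embedding.coeFn_mk]
          show _ ↔ G.Adj (ite _ _ _) (ite _ _ _)
          by_cases ha : a.val < k2 <;> by_cases hb : b.val < k2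
          · rw [if_pos ha, if_pos hb]
            refine iff_of_false (by simp [ha, hb]) ?_
            intro h
            by_cases hab : a = b
            · exact G.loopless.irrefl _ (hab ▸ h)
            · exact hnAA _ (hgT a) _ (hgT b) (hgne a b hab) h
          · rw [if_pos ha, if_neg hb]
            have hlt : a < b := by
              rw [Fin.lt_def]; omega
            refine iff_of_true ⟨by rintro rfl; omega, Or.inl ⟨ha, hb⟩⟩ ?_
            exact (hcolor _ (hgT a) _ (hgT b) (hglt a b hlt)).2.1.2 hp2
          · rw [if_neg ha, if_pos hb]
            have hlt : b < a := by
              rw [Fin.lt_def]; omega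
            refine iff_of_true ⟨by rintro rfl; omega, Or.inr ⟨hb, ha⟩⟩ ?_
            exact ((hcolor _ (hgT b) _ (hgT a) (hglt b a hlt)).2.1.2 hp2).symm
          · rw [if_neg ha, if_neg hb]
            refine iff_of_false (by simp [ha, hb]) ?_
            intro h
            by_cases hab : a = b
            · exact G.loopless.irrefl _ (hab ▸ h)
            · exact hnBB _ (hgT a) _ (hgT b) (hgne a b hab) h
      · by_cases hp3 : p3 = true
        · -- complete bipartite, B-side low
          have hKk : 2 * k2 ≤ S.card := le_trans (by omega) hScard
          obtain ⟨T, hTS, hTcard⟩ := exists_subset_card_eq hKk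
          set g := T.orderIsoOfFin hTcard with hg
          have hgT : ∀ a : Fin (2 * k2), (g a : ℕ) ∈ S := fun a => hTS (g a).2
          have hgne : ∀ a b : Fin (2 * k2), a ≠ b → (g a : ℕ) ≠ (g b : ℕ) :=
            fun a b h hh => h (g.injective (Subtype.ext hh))
          have hglt : ∀ a b : Fin (2 * k2), a < b → (g a : ℕ) < (g b : ℕ) :=
            fun a b h => g.strictMono h
          refine hk2 (hered n (2 * k2) G (completeBipGraph k2) hG
            ⟨⟨fun a => if a.val < k2 then B (g a) else A (g a), ?_⟩, ?_⟩)
          · intro a b hab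
            by_contra hne
            by_cases ha : a.val < k2 <;> by_cases hb : b.val < k2 <;>
              simp only [if_pos, if_neg, ha, hb] at hab
            · exact hgne a b hne ((hAB _ (hSN _ (hgT a)) _ (hSN _ (hgT b))).2.1 hab)
            · exact (hAB _ (hSN _ (hgT b)) _ (hSN _ (hgT a))).2.2 hab.symm
            · exact (hAB _ (hSN _ (hgT a)) _ (hSN _ (hgT b))).2.2 hab
            · exact hgne a b hne ((hAB _ (hSN _ (hgT a)) _ (hSN _ (hgT b))).1 hab)
          · intro a b
            simp only [completeBipGraph, SimpleGraph.fromRel_adj,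
              Function.Embedding.coeFn_mk]
            show _ ↔ G.Adj (ite _ _ _) (ite _ _ _)
            by_cases ha : a.val < k2 <;> by_cases hb : b.val < k2
            · rw [if_pos ha, if_pos hb]
              refine iff_of_false (by simp [ha, hb]) ?_
              intro h
              by_cases hab : a = b
              · exact G.loopless.irrefl _ (hab ▸ h)
              · exact hnBB _ (hgT a) _ (hgT b) (hgne a b hab) h
            · rw [if_pos ha, if_neg hb]
              have hlt : a < b := by
                rw [Fin.lt_def]; omega
              refine iff_of_true ⟨by rintro rfl; omega, Or.inl ⟨ha, hb⟩⟩ ?_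
              exact (hcolor _ (hgT a) _ (hgT b) (hglt a b hlt)).2.2.1.2 hp3
            · rw [if_neg ha, if_pos hb]
              have hlt : b < a := by
                rw [Fin.lt_def]; omega
              refine iff_of_true ⟨by rintro rfl; omega, Or.inr ⟨hb, ha⟩⟩ ?_
              exact ((hcolor _ (hgT b) _ (hgT a) (hglt b a hlt)).2.2.1.2 hp3).symm
            · rw [if_neg ha, if_neg hb]
              refine iff_of_false (by simp [ha, hb]) ?_
              intro h
              by_cases hab : a = b
              · exact G.loopless.irrefl _ (hab ▸ h)
              · exact hnAA _ (hgT a) _ (hgT b) (hgne a b hab) h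
        · -- all false : induced matching
          have hnone : ∀ i ∈ S, ∀ j ∈ S, i ≠ j →
              ¬G.Adj (A i) (A j) ∧ ¬G.Adj (A i) (B j) ∧
              ¬G.Adj (B i) (A j) ∧ ¬G.Adj (B i) (B j) := by
            intro i hi j hj hij
            refine ⟨hnAA i hi j hj hij, ?_, ?_, hnBB i hi j hj hij⟩
            · rcases lt_or_gt_of_ne hij with h | h
              · exact fun hh => hp2 ((hcolor i hi j hj h).2.1.1 hh)
              · exact fun hh => hp3 ((hcolor j hj i hi h).2.2.1.1 hh.symm)
            · rcases lt_or_gt_of_ne hij with h | h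
              · exact fun hh => hp3 ((hcolor i hi j hj h).2.2.1.1 hh)
              · exact fun hh => hp2 ((hcolor j hj i hi h).2.1.1 hh.symm)
          have hKk : k3 ≤ S.card := le_trans (by omega) hScard
          obtain ⟨T, hTS, hTcard⟩ := exists_subset_card_eq hKk
          set g := T.orderIsoOfFin hTcard with hg
          have hgT : ∀ a : Fin k3, (g a : ℕ) ∈ S := fun a => hTS (g a).2
          have hgne : ∀ a b : Fin k3, a ≠ b → (g a : ℕ) ≠ (g b : ℕ) :=
            fun a b h hh => h (g.injective (Subtype.ext hh))
          have hdiv : ∀ a : Fin (2 * k3), a.val / 2 < k3 := fun a => by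
            have := a.isLt; omega
          refine hk3 (hered n (2 * k3) G (matchingGraph k3) hG
            ⟨⟨fun a => if a.val % 2 = 0 then A (g ⟨a.val / 2, hdiv a⟩)
                else B (g ⟨a.val / 2, hdiv a⟩), ?_⟩, ?_⟩)
          · intro a b hab
            by_contra hne
            have hvne : a.val ≠ b.val := fun h => hne (Fin.ext h)
            by_cases hq2 : a.val / 2 = b.val / 2
            · have heq : (⟨a.val / 2, hdiv a⟩ : Fin k3) = ⟨b.val / 2, hdiv b⟩ :=
                Fin.ext hq2
              by_cases pa : a.val % 2 = 0 <;> by_cases pb : b.val % 2 = 0 <;>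
                simp only [if_pos, if_neg, pa, pb, heq] at hab
              · omega
              · exact (hAB _ (hSN _ (hgT _)) _ (hSN _ (hgT _))).2.2 hab
              · exact (hAB _ (hSN _ (hgT _)) _ (hSN _ (hgT _))).2.2 hab.symm
              · omega
            · have hne2 : (⟨a.val / 2, hdiv a⟩ : Fin k3) ≠ ⟨b.val / 2, hdiv b⟩ := by
                intro h
                exact hq2 (by simpa using congrArg Fin.val h)
              have hne3 := hgne _ _ hne2
              have h1 := (hAB _ (hSN _ (hgT ⟨a.val / 2, hdiv a⟩))
                _ (hSN _ (hgT ⟨b.val / 2, hdiv b⟩)))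
              by_cases pa : a.val % 2 = 0 <;> by_cases pb : b.val % 2 = 0 <;>
                simp only [if_pos, if_neg, pa, pb] at hab
              · exact hne3 (h1.1 hab)
              · exact h1.2.2 hab
              · exact (hAB _ (hSN _ (hgT ⟨b.val / 2, hdiv b⟩))
                  _ (hSN _ (hgT ⟨a.val / 2, hdiv a⟩))).2.2 hab.symm
              · exact hne3 (h1.2.1 hab)
          · intro a b
            simp only [matchingGraph, SimpleGraph.fromRel_adj,
              Function.Embedding.coeFn_mk]
            show _ ↔ G.Adj (ite _ _ _) (ite _ _ _)
            by_cases hab : a = b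
            · subst hab
              exact iff_of_false (by simp) (G.loopless.irrefl _)
            have hvne : a.val ≠ b.val := fun h => hab (Fin.ext h)
            by_cases hq2 : a.val / 2 = b.val / 2
            · have heq : (⟨a.val / 2, hdiv a⟩ : Fin k3) = ⟨b.val / 2, hdiv b⟩ :=
                Fin.ext hq2
              refine iff_of_true ⟨hab, Or.inl hq2⟩ ?_
              by_cases pa : a.val % 2 = 0 <;> by_cases pb : b.val % 2 = 0
              · exact (hvne (by omega)).elim
              · rw [if_pos pa, if_neg pb, heq]
                exact hEdge _ (hSN _ (hgT _))
              · rw [if_neg pa, if_pos pb, heq]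
                exact (hEdge _ (hSN _ (hgT _))).symm
              · exact (hvne (by omega)).elim
            · refine iff_of_false (by rintro ⟨-, h | h⟩ <;> omega) ?_
              have hne2 : (⟨a.val / 2, hdiv a⟩ : Fin k3) ≠ ⟨b.val / 2, hdiv b⟩ := by
                intro h
                exact hq2 (by simpa using congrArg Fin.val h)
              have hne3 := hgne _ _ hne2
              have h1 := hnone _ (hgT ⟨a.val / 2, hdiv a⟩)
                _ (hgT ⟨b.val / 2, hdiv b⟩) hne3
              by_cases pa : a.val % 2 = 0 <;> by_cases pb : b.val % 2 = 0
              · rw [if_pos pa, if_pos pb]; exact h1.1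
              · rw [if_pos pa, if_neg pb]; exact h1.2.1
              · rw [if_neg pa, if_pos pb]; exact h1.2.2.1
              · rw [if_neg pa, if_neg pb]; exact h1.2.2.2
end

section
/- For every graph H without isolated vertices there exists a 3-regular bipartite graph H† with |V(H†)| = O(|E(H)|) such that H is a minor of H†. -/
/-- `H` is a minor of `G`, witnessed by a minor model: pairwise disjoint nonempty
connected branch sets, with an edge between the branch sets of adjacent vertices. -/
def MinorOf {W V : Type*} (H : SimpleGraph W) (G : SimpleGraph V) : Prop :=
  ∃ B : W → Set V,
    (∀ w, (B w).Nonempty) ∧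
    (Pairwise fun w w' => Disjoint (B w) (B w')) ∧
    (∀ w, (G.induce (B w)).Connected) ∧
    ∀ w w', H.Adj w w' → ∃ u ∈ B w, ∃ v ∈ B w', G.Adj u v

open SimpleGraph

set_option linter.unusedSectionVars false


namespace CubicAux
variable {V : Type} [Fintype V] [DecidableEq V] (H : SimpleGraph V) [DecidableRel H.Adj]

noncomputable def pidx {v u : V} (h : H.Adj v u) : ℕ :=
  2 * ((H.neighborFinset v).equivFin ⟨u, (H.mem_neighborFinset v u).2 h⟩ : Fin _).val

lemma pidx_lt {v u : V} (h : H.Adj v u) : pidx H h < 2 * H.degree v + 2 := by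
  have := ((H.neighborFinset v).equivFin ⟨u, (H.mem_neighborFinset v u).2 h⟩).isLt
  unfold pidx; unfold SimpleGraph.degree at *; omega

noncomputable def port {v u : V} (h : H.Adj v u) : ZMod (2 * H.degree v + 2) :=
  (pidx H h : ZMod (2 * H.degree v + 2))

lemma pidx_even {v u : V} (h : H.Adj v u) : pidx H h % 2 = 0 := by
  unfold pidx; omega

lemma port_val {v u : V} (h : H.Adj v u) : (port H h).val = pidx H h :=
  ZMod.val_cast_of_lt (pidx_lt H h)

lemma port_inj {v u u' : V} (h : H.Adj v u) (h' : H.Adj v u')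
    (he : port H h = port H h') : u = u' := by
  have h1 : pidx H h = pidx H h' := by
    rw [← port_val H h, ← port_val H h', he]
  have h2 := (H.neighborFinset v).equivFin.injective
    (Fin.ext (by unfold pidx at h1; omega) :
      (H.neighborFinset v).equivFin ⟨u, (H.mem_neighborFinset v u).2 h⟩
        = (H.neighborFinset v).equivFin ⟨u', (H.mem_neighborFinset v u').2 h'⟩)
  exact congrArg Subtype.val h2

/-- core vertex type: cycles around each vertex, plus one midpoint per edge -/
abbrev Core := (Σ v : V, ZMod (2 * H.degree v + 2)) ⊕ {e : Sym2 V // e ∈ H.edgeFinset}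

lemma edge_mem {v u : V} (h : H.Adj v u) : s(v, u) ∈ H.edgeFinset := by
  rw [SimpleGraph.mem_edgeFinset, SimpleGraph.mem_edgeSet]; exact h

/-- half of the core adjacency relation -/
def Half : Core H → Core H → Prop := fun a b =>
  (∃ v p, a = .inl ⟨v, p⟩ ∧ b = .inl ⟨v, p + 1⟩) ∨
  (∃ (v u : V) (h : H.Adj v u), a = .inl ⟨v, port H h⟩ ∧ b = .inr ⟨s(v, u), edge_mem H h⟩)

def isPort : Core H → Prop := fun a => ∃ (v u : V) (h : H.Adj v u), a = .inl ⟨v, port H h⟩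

lemma one_ne_zero' (v : V) : (1 : ZMod (2 * H.degree v + 2)) ≠ 0 := by
  haveI : Fact (1 < 2 * H.degree v + 2) := ⟨by omega⟩
  exact one_ne_zero

lemma half_irrefl (a : Core H) : ¬ Half H a a := by
  rintro (⟨v, p, h1, h2⟩ | ⟨v, u, h, h1, h2⟩)
  · rw [h1] at h2
    simp only [Sum.inl.injEq, Sigma.mk.inj_iff, heq_eq_eq, true_and] at h2
    exact one_ne_zero' H v (by rwa [left_eq_add] at h2)
  · rw [h1] at h2; exact (by simp at h2)

/-- the full graph: two copies of the core graph, with non-port vertices joined to twins -/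
noncomputable def Gr : SimpleGraph (Core H × Bool) where
  Adj x y := (x.2 = y.2 ∧ (Half H x.1 y.1 ∨ Half H y.1 x.1)) ∨
    (x.1 = y.1 ∧ x.2 ≠ y.2 ∧ ¬ isPort H x.1)
  symm := by
    constructor
    rintro ⟨a, b⟩ ⟨c, d⟩ (⟨h1, h2⟩ | ⟨h1, h2, h3⟩)
    · exact Or.inl ⟨h1.symm, h2.symm⟩
    · exact Or.inr ⟨h1.symm, h2.symm, h1 ▸ h3⟩
  loopless := by
    constructor
    rintro ⟨a, b⟩ (⟨-, h2 | h2⟩ | ⟨-, h2, -⟩)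
    · exact half_irrefl H a h2
    · exact half_irrefl H a h2
    · exact h2 rfl

lemma half_to_inl_iff {v : V} {p : ZMod (2 * H.degree v + 2)} {c : Core H} :
    Half H c (.inl ⟨v, p⟩) ↔ c = .inl ⟨v, p - 1⟩ := by
  constructor
  · rintro (⟨v', q, h1, h2⟩ | ⟨v', u, h, h1, h2⟩)
    · simp only [Sum.inl.injEq, Sigma.mk.inj_iff] at h2
      obtain ⟨rfl, h2⟩ := h2
      rw [heq_eq_eq] at h2
      subst h1
      subst h2
      congr 1
      ring_nf
    · simp at h2
  · rintro rfl
    exact Or.inl ⟨v, p - 1, rfl, by rw [sub_add_cancel]⟩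

lemma half_inl_iff {v : V} {p : ZMod (2 * H.degree v + 2)} {c : Core H} :
    Half H (.inl ⟨v, p⟩) c ↔
      c = .inl ⟨v, p + 1⟩ ∨
      ∃ (u : V) (h : H.Adj v u), p = port H h ∧ c = .inr ⟨s(v, u), edge_mem H h⟩ := by
  constructor
  · rintro (⟨v', q, h1, h2⟩ | ⟨v', u, h, h1, h2⟩)
    · simp only [Sum.inl.injEq, Sigma.mk.inj_iff] at h1
      obtain ⟨rfl, h1⟩ := h1
      rw [heq_eq_eq] at h1
      subst h1
      exact Or.inl h2
    · simp only [Sum.inl.injEq, Sigma.mk.inj_iff] at h1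
      obtain ⟨rfl, h1⟩ := h1
      rw [heq_eq_eq] at h1
      exact Or.inr ⟨u, h, h1, h2⟩
  · rintro (rfl | ⟨u, h, rfl, rfl⟩)
    · exact Or.inl ⟨v, p, rfl, rfl⟩
    · exact Or.inr ⟨v, u, h, rfl, rfl⟩

lemma half_inr_not {e : Sym2 V} {he : e ∈ H.edgeFinset} {c : Core H} :
    ¬ Half H (.inr ⟨e, he⟩) c := by
  rintro (⟨v', q, h1, -⟩ | ⟨v', u, h, h1, -⟩) <;> simp at h1

lemma half_to_inr_iff {e : Sym2 V} {he : e ∈ H.edgeFinset} {c : Core H} :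
    Half H c (.inr ⟨e, he⟩) ↔
      ∃ (v u : V) (h : H.Adj v u), e = s(v, u) ∧ c = .inl ⟨v, port H h⟩ := by
  constructor
  · rintro (⟨v', q, -, h2⟩ | ⟨v', u, h, h1, h2⟩)
    · simp at h2
    · simp only [Sum.inr.injEq, Subtype.mk.injEq] at h2
      exact ⟨v', u, h, h2, h1⟩
  · rintro ⟨v, u, h, rfl, rfl⟩
    exact Or.inr ⟨v, u, h, rfl, rfl⟩


lemma two_ne_zero' {v : V} (hd : 0 < H.degree v) :
    ((2 : ℕ) : ZMod (2 * H.degree v + 2)) ≠ 0 := by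
  intro hc
  have h := ZMod.val_cast_of_lt (show 2 < 2 * H.degree v + 2 by omega)
  rw [hc, ZMod.val_zero] at h
  omega

lemma add_one_ne_sub_one {v : V} (hd : 0 < H.degree v) (p : ZMod (2 * H.degree v + 2)) :
    p + 1 ≠ p - 1 := by
  intro hc
  apply two_ne_zero' H hd
  push_cast
  linear_combination hc

lemma gr_adj_iff (x y : Core H × Bool) :
    (Gr H).Adj x y ↔ ((x.2 = y.2 ∧ (Half H x.1 y.1 ∨ Half H y.1 x.1)) ∨
      (x.1 = y.1 ∧ x.2 ≠ y.2 ∧ ¬ isPort H x.1)) := Iff.rfl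

lemma nbrs_inl_port {v u : V} (h : H.Adj v u) (b : Bool) :
    (Gr H).neighborSet (.inl ⟨v, port H h⟩, b) =
      {(.inl ⟨v, port H h + 1⟩, b), (.inl ⟨v, port H h - 1⟩, b),
       (.inr ⟨s(v, u), edge_mem H h⟩, b)} := by
  ext ⟨c, b2⟩
  rw [mem_neighborSet, gr_adj_iff]
  simp only [half_inl_iff, half_to_inl_iff]
  constructor
  · rintro (⟨rfl, (rfl | ⟨u', h', hp, rfl⟩) | rfl⟩ | ⟨-, -, hnp⟩)
    · left; rfl
    · right; right
      have := port_inj H h h' hp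
      subst this
      rfl
    · right; left; rfl
    · exact absurd ⟨v, u, h, rfl⟩ hnp
  · intro hmem
    simp only [Set.mem_insert_iff, Set.mem_singleton_iff] at hmem
    rcases hmem with h1 | h1 | h1 <;> rw [Prod.ext_iff] at h1 <;> obtain ⟨h1, h2⟩ := h1 <;>
      rw [show b2 = b from h2] <;> subst h1
    · exact Or.inl ⟨rfl, Or.inl (Or.inl rfl)⟩
    · exact Or.inl ⟨rfl, Or.inr rfl⟩
    · exact Or.inl ⟨rfl, Or.inl (Or.inr ⟨u, h, rfl, rfl⟩)⟩

lemma nbrs_inl_nonport {v : V} {p : ZMod (2 * H.degree v + 2)}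
    (hnp : ¬ isPort H (.inl ⟨v, p⟩ : Core H)) (b : Bool) :
    (Gr H).neighborSet (.inl ⟨v, p⟩, b) =
      {(.inl ⟨v, p + 1⟩, b), (.inl ⟨v, p - 1⟩, b), ((.inl ⟨v, p⟩ : Core H), !b)} := by
  ext ⟨c, b2⟩
  rw [mem_neighborSet, gr_adj_iff]
  simp only [half_inl_iff, half_to_inl_iff]
  constructor
  · rintro (⟨rfl, (rfl | ⟨u', h', hp, rfl⟩) | rfl⟩ | ⟨rfl, hb, -⟩)
    · left; rfl
    · exact absurd ⟨v, u', h', by rw [hp]⟩ hnp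
    · right; left; rfl
    · right; right
      rw [Set.mem_singleton_iff, Prod.mk.injEq]
      exact ⟨rfl, by cases b <;> cases b2 <;> simp_all⟩
  · intro hmem
    simp only [Set.mem_insert_iff, Set.mem_singleton_iff] at hmem
    rcases hmem with h1 | h1 | h1 <;> rw [Prod.ext_iff] at h1 <;> obtain ⟨h1, h2⟩ := h1
    · rw [show b2 = b from h2]; subst h1
      exact Or.inl ⟨rfl, Or.inl (Or.inl rfl)⟩
    · rw [show b2 = b from h2]; subst h1
      exact Or.inl ⟨rfl, Or.inr rfl⟩
    · subst h1
      refine Or.inr ⟨rfl, ?_, hnp⟩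
      intro hb
      rw [← hb] at h2
      simp at h2

lemma nbrs_inr {a b' : V} (h : H.Adj a b') (b : Bool) :
    (Gr H).neighborSet (.inr ⟨s(a, b'), edge_mem H h⟩, b) =
      {(.inl ⟨a, port H h⟩, b), (.inl ⟨b', port H h.symm⟩, b),
       ((.inr ⟨s(a, b'), edge_mem H h⟩ : Core H), !b)} := by
  ext ⟨c, b2⟩
  rw [mem_neighborSet, gr_adj_iff]
  constructor
  · rintro (⟨rfl, hh | hh⟩ | ⟨rfl, hb, -⟩)
    · exact absurd hh (half_inr_not H)
    · rw [half_to_inr_iff] at hh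
      obtain ⟨v', u', h', he, rfl⟩ := hh
      rw [Sym2.eq, Sym2.rel_iff'] at he
      rcases he with he | he
      · obtain ⟨rfl, rfl⟩ := Prod.mk.injEq .. ▸ he
        left; rfl
      · rw [Prod.ext_iff] at he
        obtain ⟨rfl, rfl⟩ := he
        right; left
        have : h' = h.symm := rfl
        rfl
    · right; right
      rw [Set.mem_singleton_iff, Prod.mk.injEq]
      exact ⟨rfl, by cases b <;> cases b2 <;> simp_all⟩
  · intro hmem
    simp only [Set.mem_insert_iff, Set.mem_singleton_iff] at hmem
    rcases hmem with h1 | h1 | h1 <;> rw [Prod.ext_iff] at h1 <;> obtain ⟨h1, h2⟩ := h1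
    · rw [show b2 = b from h2]; subst h1
      exact Or.inl ⟨rfl, Or.inr ((half_to_inr_iff H).2 ⟨a, b', h, rfl, rfl⟩)⟩
    · rw [show b2 = b from h2]; subst h1
      exact Or.inl ⟨rfl, Or.inr ((half_to_inr_iff H).2 ⟨b', a, h.symm, Sym2.eq_swap, rfl⟩)⟩
    · subst h1
      refine Or.inr ⟨rfl, ?_, ?_⟩
      · intro hb
        rw [← hb] at h2
        simp at h2
      · rintro ⟨v', u', h', hc⟩; simp at hc


lemma ncard_triple {α : Type*} {x y z : α} (h1 : x ≠ y) (h2 : x ≠ z) (h3 : y ≠ z) :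
    ({x, y, z} : Set α).ncard = 3 := by
  rw [Set.ncard_insert_of_notMem (by simp [h1, h2]) (Set.toFinite _), Set.ncard_pair h3]

theorem gr_degree (hd : ∀ v : V, 0 < H.degree v) (x : Core H × Bool) :
    ((Gr H).neighborSet x).ncard = 3 := by
  obtain ⟨c, b⟩ := x
  rcases c with ⟨v, p⟩ | ⟨e, he⟩
  · by_cases hp : isPort H (.inl ⟨v, p⟩ : Core H)
    · obtain ⟨v', u, h, hpe⟩ := hp
      simp only [Sum.inl.injEq, Sigma.mk.inj_iff] at hpe
      obtain ⟨rfl, hpe⟩ := hpe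
      rw [heq_eq_eq] at hpe
      subst hpe
      rw [nbrs_inl_port H h b]
      refine ncard_triple ?_ ?_ ?_
      · intro hc
        simp only [Prod.mk.injEq, Sum.inl.injEq, Sigma.mk.inj_iff, heq_eq_eq, true_and,
          and_true] at hc
        exact add_one_ne_sub_one H (hd v) _ hc
      · intro hc; injection hc with hc1 hc2; simp at hc1
      · intro hc; injection hc with hc1 hc2; simp at hc1
    · rw [nbrs_inl_nonport H hp b]
      refine ncard_triple ?_ ?_ ?_
      · intro hc
        simp only [Prod.mk.injEq, Sum.inl.injEq, Sigma.mk.inj_iff, heq_eq_eq, true_and,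
          and_true] at hc
        exact add_one_ne_sub_one H (hd v) _ hc
      · intro hc; injection hc with hc1 hc2; simp at hc2
      · intro hc; injection hc with hc1 hc2; simp at hc2
  · have hee := he
    induction e using Sym2.ind with
    | _ a b' =>
      have h : H.Adj a b' := by rwa [SimpleGraph.mem_edgeFinset, SimpleGraph.mem_edgeSet] at he
      rw [show (⟨s(a, b'), he⟩ : {e : Sym2 V // e ∈ H.edgeFinset}) = ⟨s(a, b'), edge_mem H h⟩
        from rfl, nbrs_inr H h b]
      refine ncard_triple ?_ ?_ ?_
      · intro hc
        simp only [Prod.mk.injEq, Sum.inl.injEq, Sigma.mk.inj_iff, and_true] at hc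
        exact h.ne hc.1
      · intro hc; injection hc with hc1 hc2; simp at hc1
      · intro hc; injection hc with hc1 hc2; simp at hc1


lemma parity_flip {v : V} (p : ZMod (2 * H.degree v + 2)) :
    (p + 1).val % 2 ≠ p.val % 2 := by
  haveI : NeZero (2 * H.degree v + 2) := ⟨by omega⟩
  haveI : Fact (1 < 2 * H.degree v + 2) := ⟨by omega⟩
  have h1 : (p + 1).val = (p.val + 1) % (2 * H.degree v + 2) := by
    rw [ZMod.val_add, ZMod.val_one]
  have h2 : p.val < 2 * H.degree v + 2 := ZMod.val_lt p
  rcases Nat.lt_or_ge (p.val + 1) (2 * H.degree v + 2) with hlt | hge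
  · rw [Nat.mod_eq_of_lt hlt] at h1; omega
  · have h3 : p.val + 1 = 2 * H.degree v + 2 := by omega
    rw [h3, Nat.mod_self] at h1
    omega

noncomputable def col : Core H → Bool
  | .inl ⟨_, p⟩ => decide (p.val % 2 = 1)
  | .inr _ => true

lemma half_col {a c : Core H} (h : Half H a c) : col H a ≠ col H c := by
  rcases h with ⟨v, p, rfl, rfl⟩ | ⟨v, u, h, rfl, rfl⟩
  · have := parity_flip H p
    simp only [col, ne_eq, decide_eq_decide]
    omega
  · have h1 := port_val H h
    have h2 := pidx_even H h
    simp only [col, ne_eq, decide_eq_true_eq]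
    omega

lemma gr_colorable : (Gr H).Colorable 2 := by
  have hcard : Fintype.card Bool = 2 := by simp
  rw [← hcard]
  refine SimpleGraph.Coloring.colorable (SimpleGraph.Coloring.mk
    (fun x => xor (col H x.1) x.2) ?_)
  rintro ⟨a, b⟩ ⟨c, b2⟩ hadj
  rcases hadj with ⟨hb, hH | hH⟩ | ⟨hc, hb, -⟩
  · have := half_col H hH
    simp only at hb ⊢
    subst hb
    rcases Bool.eq_false_or_eq_true (col H a) with h1 | h1 <;>
      rcases Bool.eq_false_or_eq_true (col H c) with h2 | h2 <;> cases b <;> simp_all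
  · have := half_col H hH
    simp only at hb ⊢
    subst hb
    rcases Bool.eq_false_or_eq_true (col H a) with h1 | h1 <;>
      rcases Bool.eq_false_or_eq_true (col H c) with h2 | h2 <;> cases b <;> simp_all
  · simp only at hc hb ⊢
    subst hc
    cases b <;> cases b2 <;> simp_all


/-- branch set of `v`: the cycle of `v` in copy `false`, plus the midpoints of edges
whose chosen (`Quot.out`) endpoint is `v`. -/
noncomputable def B (v : V) : Set (Core H × Bool) :=
  {x | (∃ p, x = (.inl ⟨v, p⟩, false)) ∨
       (∃ (e : Sym2 V) (he : e ∈ H.edgeFinset), (Quot.out e).1 = v ∧ x = (.inr ⟨e, he⟩, false))}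

lemma B_nonempty (v : V) : (B H v).Nonempty :=
  ⟨(.inl ⟨v, 0⟩, false), Or.inl ⟨0, rfl⟩⟩

lemma B_disjoint : Pairwise fun v w => Disjoint (B H v) (B H w) := by
  intro v w hvw
  rw [Set.disjoint_left]
  rintro x (⟨p, rfl⟩ | ⟨e, he, hp, rfl⟩) (⟨p', hx⟩ | ⟨e', he', hp', hx⟩)
  · rw [Prod.ext_iff] at hx
    simp only [Sum.inl.injEq, Sigma.mk.inj_iff] at hx
    exact hvw hx.1.1
  · rw [Prod.ext_iff] at hx
    simp at hx
  · rw [Prod.ext_iff] at hx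
    simp at hx
  · rw [Prod.ext_iff] at hx
    simp only [Sum.inr.injEq, Subtype.mk.injEq] at hx
    exact hvw (by rw [← hp, ← hp', hx.1])

lemma B_adj {w w' : V} (h : H.Adj w w') :
    ∃ u ∈ B H w, ∃ x ∈ B H w', (Gr H).Adj u x := by
  have hmem : (Quot.out s(w, w')).1 ∈ s(w, w') := Sym2.out_fst_mem _
  rw [Sym2.mem_iff] at hmem
  rcases hmem with hpick | hpick
  · refine ⟨(.inr ⟨s(w, w'), edge_mem H h⟩, false), Or.inr ⟨s(w, w'), edge_mem H h, hpick, rfl⟩,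
      (.inl ⟨w', port H h.symm⟩, false), Or.inl ⟨_, rfl⟩, ?_⟩
    exact Or.inl ⟨rfl, Or.inr ((half_to_inr_iff H).2 ⟨w', w, h.symm, Sym2.eq_swap.symm, rfl⟩)⟩
  · refine ⟨(.inl ⟨w, port H h⟩, false), Or.inl ⟨_, rfl⟩,
      (.inr ⟨s(w, w'), edge_mem H h⟩, false), ?_, ?_⟩
    · right
      refine ⟨s(w, w'), edge_mem H h, ?_, rfl⟩
      rw [hpick]
    · exact Or.inl ⟨rfl, Or.inl (Or.inr ⟨w, w', h, rfl, rfl⟩)⟩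

lemma B_connected (v : V) : ((Gr H).induce (B H v)).Connected := by
  haveI : NeZero (2 * H.degree v + 2) := ⟨by omega⟩
  set G' := (Gr H).induce (B H v) with hG'
  let x0 : ↥(B H v) := ⟨(.inl ⟨v, 0⟩, false), Or.inl ⟨0, rfl⟩⟩
  have claim1 : ∀ (k : ℕ) (y : ↥(B H v)),
      y.val = (.inl ⟨v, (k : ZMod (2 * H.degree v + 2))⟩, false) → G'.Reachable x0 y := by
    intro k
    induction k with
    | zero =>
      intro y hy
      have : y = x0 := Subtype.ext (by rw [hy]; norm_num; rfl)
      rw [this]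
    | succ k ih =>
      intro y hy
      have hz : G'.Reachable x0 ⟨(.inl ⟨v, (k : ZMod (2 * H.degree v + 2))⟩, false),
          Or.inl ⟨_, rfl⟩⟩ := ih _ rfl
      refine hz.trans (SimpleGraph.Adj.reachable ?_)
      show (Gr H).Adj (.inl ⟨v, (k : ZMod (2 * H.degree v + 2))⟩, false) y.val
      rw [hy]
      refine Or.inl ⟨rfl, Or.inl (Or.inl ⟨v, (k : ZMod (2 * H.degree v + 2)), rfl, ?_⟩)⟩
      push_cast
      rfl
  have claim2 : ∀ (p : ZMod (2 * H.degree v + 2)) (y : ↥(B H v)),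
      y.val = (.inl ⟨v, p⟩, false) → G'.Reachable x0 y := by
    intro p y hy
    exact claim1 p.val y (by rw [hy, ZMod.natCast_rightInverse p])
  have claim3 : ∀ (y : ↥(B H v)), G'.Reachable x0 y := by
    rintro ⟨yv, ⟨p, rfl⟩ | ⟨e, he, hp, rfl⟩⟩
    · exact claim2 p _ rfl
    · have hout : Sym2.mk (Quot.out e).1 (Quot.out e).2 = e := Quot.out_eq e
      have hes : e = s(v, (Quot.out e).2) := by
        conv_lhs => rw [← hout]
        rw [← hp]
      have h : H.Adj v (Quot.out e).2 := by
        have := he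
        rw [SimpleGraph.mem_edgeFinset, hes, SimpleGraph.mem_edgeSet] at this
        exact this
      have hz : G'.Reachable x0 ⟨(.inl ⟨v, port H h⟩, false), Or.inl ⟨_, rfl⟩⟩ :=
        claim2 _ _ rfl
      refine hz.trans (SimpleGraph.Adj.reachable ?_)
      show (Gr H).Adj (.inl ⟨v, port H h⟩, false) (.inr ⟨e, he⟩, false)
      refine Or.inl ⟨rfl, Or.inl ((half_to_inr_iff H).2 ⟨v, (Quot.out e).2, h, hes, rfl⟩)⟩
  haveI : Nonempty ↥(B H v) := ⟨x0⟩
  exact ⟨fun a b => (claim3 a).symm.trans (claim3 b)⟩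


lemma card_core :
    Fintype.card (Core H × Bool)
      = 2 * ((∑ v : V, (2 * H.degree v + 2)) + H.edgeFinset.card) := by
  have hz : ∀ v : V, Fintype.card (ZMod (2 * H.degree v + 2)) = 2 * H.degree v + 2 := by
    intro v
    haveI : NeZero (2 * H.degree v + 2) := ⟨by omega⟩
    exact ZMod.card _
  rw [Fintype.card_prod, Fintype.card_bool, Fintype.card_sum, Fintype.card_sigma]
  simp only [hz, Fintype.card_coe]
  ring

end CubicAux

lemma minorOf_iso {W X Y : Type*} {H : SimpleGraph W} {G : SimpleGraph X} {G' : SimpleGraph Y}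
    (φ : G ≃g G') (h : MinorOf H G) : MinorOf H G' := by
  obtain ⟨B, hne, hdisj, hconn, hadj⟩ := h
  refine ⟨fun w => φ '' B w, fun w => (hne w).image _, ?_, ?_, ?_⟩
  · intro w w' hww
    simp only
    rw [Set.disjoint_image_iff φ.injective]
    exact hdisj hww
  · intro w
    refine SimpleGraph.Connected.map
      (⟨fun x => ⟨φ x.1, ⟨x.1, x.2, rfl⟩⟩, ?_⟩ : G.induce (B w) →g G'.induce (φ '' B w))
      ?_ (hconn w)
    · intro a b hab
      exact φ.map_rel_iff.2 hab
    · rintro ⟨y, x, hx, rfl⟩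
      exact ⟨⟨x, hx⟩, rfl⟩
  · intro w w' hww
    obtain ⟨u, hu, x, hx, hux⟩ := hadj w w' hww
    exact ⟨φ u, ⟨u, hu, rfl⟩, φ x, ⟨x, hx, rfl⟩, φ.map_rel_iff.2 hux⟩



/-- every graph `H` without isolated vertices is a minor of a 3-regular
bipartite graph `H†` with `|V(H†)| = O(|E(H)|)`. -/
theorem minor_of_cubic_bipartite :
    ∃ c : ℕ, ∀ (V : Type) [Fintype V] (H : SimpleGraph V),
      (∀ v : V, ∃ u, H.Adj v u) →
      ∃ (n : ℕ) (H' : SimpleGraph (Fin n)),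
        n ≤ c * (H.edgeSet.ncard + 1) ∧
        H'.Colorable 2 ∧
        (∀ v : Fin n, (H'.neighborSet v).ncard = 3) ∧
        MinorOf H H' := by
  classical
  refine ⟨18, ?_⟩
  intro V _ H hiso
  letI : DecidableEq V := Classical.decEq V
  letI : DecidableRel H.Adj := Classical.decRel _
  have hd : ∀ v : V, 0 < H.degree v := by
    intro v
    rw [SimpleGraph.degree_pos_iff_exists_adj]
    exact hiso v
  set n := Fintype.card (CubicAux.Core H × Bool) with hn
  let eqv : (CubicAux.Core H × Bool) ≃ Fin n := Fintype.equivFin _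
  let H' : SimpleGraph (Fin n) := SimpleGraph.map eqv.toEmbedding (CubicAux.Gr H)
  let iso : CubicAux.Gr H ≃g H' := SimpleGraph.Iso.map eqv (CubicAux.Gr H)
  have hm : H.edgeSet.ncard = H.edgeFinset.card := by
    rw [← SimpleGraph.coe_edgeFinset, Set.ncard_coe_finset]
  refine ⟨n, H', ?_, ?_, ?_, ?_⟩
  · -- cardinality bound
    have h1 : n = 2 * ((∑ v : V, (2 * H.degree v + 2)) + H.edgeFinset.card) :=
      CubicAux.card_core H
    have h2 : ∑ v : V, H.degree v = 2 * H.edgeFinset.card :=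
      SimpleGraph.sum_degrees_eq_twice_card_edges H
    have h3 : (∑ v : V, (2 * H.degree v + 2))
        = 2 * (∑ v : V, H.degree v) + 2 * Fintype.card V := by
      rw [Finset.sum_add_distrib, Finset.mul_sum, Finset.sum_const]
      simp [mul_comm]
    have h4 : Fintype.card V ≤ ∑ v : V, H.degree v := by
      calc Fintype.card V = ∑ _v : V, 1 := by simp
        _ ≤ ∑ v : V, H.degree v := Finset.sum_le_sum (fun v _ => hd v)
    rw [hm]
    omega
  · obtain ⟨C⟩ := CubicAux.gr_colorable H
    exact ⟨C.comp iso.symm.toHom⟩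
  · intro i
    have h3 := CubicAux.gr_degree H hd (eqv.symm i)
    have hiso_i : iso (eqv.symm i) = i := iso.toEquiv.apply_symm_apply i
    calc (H'.neighborSet i).ncard
        = Nat.card (H'.neighborSet i) := (Nat.card_coe_set_eq _).symm
      _ = Nat.card ((CubicAux.Gr H).neighborSet (eqv.symm i)) := by
          conv_lhs => rw [← hiso_i]
          exact (Nat.card_congr (SimpleGraph.Iso.mapNeighborSet iso (eqv.symm i))).symm
      _ = 3 := by rw [Nat.card_coe_set_eq]; exact h3
  · refine minorOf_iso iso ⟨CubicAux.B H, CubicAux.B_nonempty H, CubicAux.B_disjoint H,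
      CubicAux.B_connected H, fun w w' h => CubicAux.B_adj H h⟩
end

section
/- Let G be a bipartite graph with bipartition V(G) = L ∪ R, and let G' be the directed graph obtained by directing each edge of G from L to R and additionally adding a directed edge from r to l for every r ∈ R and l ∈ L. Then the number of directed cycles of length 2k in G' equals (k−1)! times the number of k-matchings (sets of k pairwise disjoint edges) in G. -/
/-- `C` is (the edge set of) a simple directed cycle of length `m` in the digraph with
edge relation `D`: the vertices can be enumerated injectively as `f 0, f 1, …` cyclically
(`finRotate` is the cyclic successor on `Fin m`), with consecutive vertices joined by an
arc. Since a directed cycle is determined by its edge set, this counts cycles up to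
cyclic rotation of the starting vertex. -/
def IsDirCycle {V : Type*} [DecidableEq V] (D : V → V → Prop) (m : ℕ)
    (C : Finset (V × V)) : Prop :=
  ∃ f : Fin m → V, Function.Injective f ∧ (∀ i, D (f i) (f (finRotate m i))) ∧
    C = Finset.image (fun i => (f i, f (finRotate m i))) Finset.univ

lemma my_count {α β : Type*} [Finite α] (f : α → β) (s : Set β) (c : ℕ)
    (hmem : ∀ a, f a ∈ s) (hs : s.Finite)
    (hfib : ∀ b ∈ s, Nat.card {a // f a = b} = c) :
    Nat.card α = c * s.ncard := by
  classical
  haveI : Fintype α := Fintype.ofFinite α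
  rw [Nat.card_eq_fintype_card, ← Finset.card_univ,
    Finset.card_eq_sum_card_fiberwise (f := f) (t := hs.toFinset)
      (fun a _ => hs.mem_toFinset.2 (hmem a))]
  have : ∀ b ∈ hs.toFinset, (Finset.univ.filter (fun a => f a = b)).card = c := by
    intro b hb
    rw [← Fintype.card_subtype, ← Nat.card_eq_fintype_card]
    exact hfib b (hs.mem_toFinset.1 hb)
  rw [Finset.sum_congr rfl this, Finset.sum_const, smul_eq_mul,
    ← Set.ncard_eq_toFinset_card s hs, mul_comm]


section Defs
variable {V : Type*}

def fp (k : ℕ) (p : Fin k → V × V) : Fin (2 * k) → V := fun t =>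
  if t.val % 2 = 0 then (p ⟨t.val / 2, by have := t.isLt; omega⟩).1
  else (p ⟨t.val / 2, by have := t.isLt; omega⟩).2

def Good (G : SimpleGraph V) (L R : Set V) (k : ℕ) (p : Fin k → V × V) : Prop :=
  (∀ j, (p j).1 ∈ L ∧ (p j).2 ∈ R ∧ G.Adj (p j).1 (p j).2) ∧ Function.Injective (fp k p)

def cycleOf [DecidableEq V] (k : ℕ) (p : Fin k → V × V) : Finset (V × V) :=
  Finset.image (fun t => (fp k p t, fp k p (finRotate (2 * k) t))) Finset.univ

def edgeOf (k : ℕ) (p : Fin k → V × V) (j : Fin k) : Sym2 V := s((p j).1, (p j).2)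

def mOf [DecidableEq V] (k : ℕ) (p : Fin k → V × V) : Finset (Sym2 V) :=
  Finset.image (edgeOf k p) Finset.univ

lemma fp_even {k : ℕ} (p : Fin k → V × V) (j : Fin k) (h : 2 * j.val < 2 * k) :
    fp k p ⟨2 * j.val, h⟩ = (p j).1 := by
  have h2 : (2 * j.val) % 2 = 0 := by omega
  have h3 : (2 * j.val) / 2 = j.val := by omega
  simp only [fp, h2, h3, Fin.eta, if_true, eq_self_iff_true]

lemma fp_odd {k : ℕ} (p : Fin k → V × V) (j : Fin k) (h : 2 * j.val + 1 < 2 * k) :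
    fp k p ⟨2 * j.val + 1, h⟩ = (p j).2 := by
  have h2 : ¬ ((2 * j.val + 1) % 2 = 0) := by omega
  have h3 : (2 * j.val + 1) / 2 = j.val := by omega
  simp only [fp, if_neg h2, h3, Fin.eta]

lemma finRotate_val' {m : ℕ} (hm : 0 < m) (i : Fin m) :
    (finRotate m i).val = (i.val + 1) % m := by
  rcases m with _ | n
  · omega
  · rw [finRotate_succ_apply]
    simp [Fin.add_def]

-- injectivity consequences of Good
variable {G : SimpleGraph V} {L R : Set V} {k : ℕ} {p : Fin k → V × V}

lemma good_fst_inj (hg : Good G L R k p) {i j : Fin k} (h : (p i).1 = (p j).1) : i = j := by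
  have hi : 2 * i.val < 2 * k := by have := i.isLt; omega
  have hj : 2 * j.val < 2 * k := by have := j.isLt; omega
  have := hg.2 (a₁ := ⟨2 * i.val, hi⟩) (a₂ := ⟨2 * j.val, hj⟩)
    (by rw [fp_even, fp_even]; exact h)
  ext
  have := Fin.mk.injEq _ _ _ _ ▸ this
  omega

lemma good_snd_inj (hg : Good G L R k p) {i j : Fin k} (h : (p i).2 = (p j).2) : i = j := by
  have hi : 2 * i.val + 1 < 2 * k := by have := i.isLt; omega
  have hj : 2 * j.val + 1 < 2 * k := by have := j.isLt; omega
  have := hg.2 (a₁ := ⟨2 * i.val + 1, hi⟩) (a₂ := ⟨2 * j.val + 1, hj⟩)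
    (by rw [fp_odd, fp_odd]; exact h)
  ext
  have := Fin.mk.injEq _ _ _ _ ▸ this
  omega

lemma good_fst_ne_snd (hpart : ∀ v : V, v ∈ L ↔ v ∉ R) (hg : Good G L R k p)
    (i j : Fin k) : (p i).1 ≠ (p j).2 := by
  intro h
  have h1 : (p i).1 ∈ L := (hg.1 i).1
  have h2 : (p j).2 ∈ R := (hg.1 j).2.1
  rw [h] at h1
  exact (hpart _).1 h1 h2

lemma edgeOf_inj (hpart : ∀ v : V, v ∈ L ↔ v ∉ R) (hg : Good G L R k p) :
    Function.Injective (edgeOf k p) := by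
  intro i j h
  rcases Sym2.eq_iff.1 h with ⟨h1, _⟩ | ⟨h1, _⟩
  · exact good_fst_inj hg h1
  · exact absurd h1 (good_fst_ne_snd hpart hg i j)
end Defs

section Part2
variable {V : Type*} [DecidableEq V]
  {G : SimpleGraph V} {L R : Set V} {k : ℕ} {p : Fin k → V × V}


lemma mOf_matching (hpart : ∀ v : V, v ∈ L ↔ v ∉ R) (hg : Good G L R k p) :
    IsMatching' G (mOf k p) ∧ (mOf k p).card = k := by
  refine ⟨⟨?_, ?_⟩, ?_⟩
  · intro e he
    simp only [mOf, Finset.coe_image, Set.mem_image] at he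
    obtain ⟨j, _, rfl⟩ := he
    exact (hg.1 j).2.2
  · intro e he f hf hef v hve hvf
    simp only [mOf, Finset.coe_image, Set.mem_image] at he hf
    obtain ⟨i, _, rfl⟩ := he
    obtain ⟨j, _, rfl⟩ := hf
    have hij : i ≠ j := fun h => hef (by rw [h])
    rw [edgeOf, Sym2.mem_iff] at hve hvf
    rcases hve with rfl | rfl <;> rcases hvf with h | h
    · exact hij (good_fst_inj hg h)
    · exact good_fst_ne_snd hpart hg i j h
    · exact good_fst_ne_snd hpart hg j i h.symm
    · exact hij (good_snd_inj hg h)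
  · rw [mOf, Finset.card_image_of_injective _ (edgeOf_inj hpart hg), Finset.card_univ,
      Fintype.card_fin]

lemma good_isDirCycle (hpart : ∀ v : V, v ∈ L ↔ v ∉ R) (hk : 0 < k) (hg : Good G L R k p) :
    IsDirCycle (fun u v => (u ∈ L ∧ v ∈ R ∧ G.Adj u v) ∨ (u ∈ R ∧ v ∈ L)) (2 * k)
      (cycleOf k p) := by
  refine ⟨fp k p, hg.2, ?_, rfl⟩
  intro t
  have hrot : (finRotate (2 * k) t).val = (t.val + 1) % (2 * k) := finRotate_val' (by omega) t
  by_cases ht : t.val % 2 = 0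
  · -- even position: edge from L to R
    left
    have hj : t.val / 2 < k := by have := t.isLt; omega
    have e1 : fp k p t = (p ⟨t.val / 2, hj⟩).1 := by
      have ht2 : t = ⟨2 * (t.val / 2), by have := t.isLt; omega⟩ := by ext; simp; omega
      conv_lhs => rw [ht2]
      rw [fp_even p ⟨t.val / 2, hj⟩]
    have hlt : t.val + 1 < 2 * k := by have := t.isLt; omega
    have e2 : fp k p (finRotate (2 * k) t) = (p ⟨t.val / 2, hj⟩).2 := by
      have hr2 : finRotate (2 * k) t = ⟨2 * (t.val / 2) + 1, by have := t.isLt; omega⟩ := by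
        apply Fin.ext; rw [hrot, Nat.mod_eq_of_lt hlt]; show t.val + 1 = 2 * (t.val / 2) + 1
        omega
      rw [hr2, fp_odd p ⟨t.val / 2, hj⟩]
    rw [e1, e2]
    exact hg.1 _
  · -- odd position: R to L
    right
    constructor
    · have hj : t.val / 2 < k := by have := t.isLt; omega
      have ht2 : t = ⟨2 * (t.val / 2) + 1, by have := t.isLt; omega⟩ := by ext; simp; omega
      have e : fp k p t = (p ⟨t.val / 2, hj⟩).2 := by
        conv_lhs => rw [ht2]
        exact fp_odd p ⟨t.val / 2, hj⟩ _
      rw [e]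
      exact (hg.1 _).2.1
    · -- target is a fst, in L
      have hlt := t.isLt
      by_cases h2 : t.val + 1 = 2 * k
      · have hr : finRotate (2 * k) t = ⟨2 * 0, by omega⟩ := by
          apply Fin.ext; rw [hrot, h2, Nat.mod_self]
        rw [hr, fp_even p ⟨0, by omega⟩]
        exact (hg.1 _).1
      · have hj2 : (t.val + 1) / 2 < k := by omega
        have hr : finRotate (2 * k) t = ⟨2 * ((t.val + 1) / 2), by omega⟩ := by
          apply Fin.ext; rw [hrot, Nat.mod_eq_of_lt (by omega)]
          show t.val + 1 = 2 * ((t.val + 1) / 2)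
          omega
        rw [hr, fp_even p ⟨(t.val + 1) / 2, hj2⟩]
        exact (hg.1 _).1

lemma arc_even_mem (j : Fin k) : ((p j).1, (p j).2) ∈ cycleOf k p := by
  have hj2 : 2 * j.val < 2 * k := by have := j.isLt; omega
  have hj21 : 2 * j.val + 1 < 2 * k := by have := j.isLt; omega
  apply Finset.mem_image.2
  refine ⟨⟨2 * j.val, hj2⟩, Finset.mem_univ _, ?_⟩
  rw [fp_even]
  have : finRotate (2 * k) ⟨2 * j.val, hj2⟩ = ⟨2 * j.val + 1, hj21⟩ := by
    ext; rw [finRotate_val' (by omega)]; exact Nat.mod_eq_of_lt hj21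
  rw [this, fp_odd]

lemma arc_odd_mem (hk : 0 < k) (j : Fin k) :
    ((p j).2, (p ⟨(j.val + 1) % k, Nat.mod_lt _ hk⟩).1) ∈ cycleOf k p := by
  have hj21 : 2 * j.val + 1 < 2 * k := by have := j.isLt; omega
  apply Finset.mem_image.2
  refine ⟨⟨2 * j.val + 1, hj21⟩, Finset.mem_univ _, ?_⟩
  rw [fp_odd]
  have key : (finRotate (2 * k) ⟨2 * j.val + 1, hj21⟩) =
      ⟨2 * ((j.val + 1) % k), by have := Nat.mod_lt (j.val+1) hk; omega⟩ := by
    ext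
    rw [finRotate_val' (by omega)]
    simp only
    by_cases h2 : j.val + 1 = k
    · have : 2 * j.val + 1 + 1 = 2 * k := by omega
      rw [this, Nat.mod_self, h2, Nat.mod_self]
    · have hlt : j.val + 1 < k := by have := j.isLt; omega
      rw [Nat.mod_eq_of_lt (by omega), Nat.mod_eq_of_lt hlt]
      omega
  rw [key, fp_even p ⟨(j.val + 1) % k, Nat.mod_lt _ hk⟩]

lemma source_unique {m : ℕ} (f : Fin m → V) (hf : Function.Injective f) {u v w : V}
    (h1 : (u, v) ∈ Finset.image (fun i => (f i, f (finRotate m i))) Finset.univ)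
    (h2 : (u, w) ∈ Finset.image (fun i => (f i, f (finRotate m i))) Finset.univ) : v = w := by
  obtain ⟨i, _, hi⟩ := Finset.mem_image.1 h1
  obtain ⟨j, _, hj⟩ := Finset.mem_image.1 h2
  obtain ⟨hi1, hi2⟩ := Prod.mk.injEq .. ▸ hi
  obtain ⟨hj1, hj2⟩ := Prod.mk.injEq .. ▸ hj
  have : i = j := hf (by rw [hi1, hj1])
  rw [← hi2, ← hj2, this]



end Part2
section Part3
variable {V : Type*} [DecidableEq V]
  {G : SimpleGraph V} {L R : Set V} {k : ℕ}

lemma finRotate_val'' {m : ℕ} (hm : 0 < m) (i : Fin m) :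
    (finRotate m i).val = (i.val + 1) % m := by
  rcases m with _ | n
  · omega
  · rw [finRotate_succ_apply]; simp [Fin.add_def]

lemma anchor_parity (hpart : ∀ v : V, v ∈ L ↔ v ∉ R) (hk : 0 < k)
    (f : Fin (2 * k) → V)
    (hD : ∀ i, (f i ∈ L ∧ f (finRotate (2 * k) i) ∈ R ∧ G.Adj (f i) (f (finRotate (2 * k) i)))
      ∨ (f i ∈ R ∧ f (finRotate (2 * k) i) ∈ L))
    (i0 : Fin (2 * k)) (h0 : f i0 ∈ L) :
    ∀ n : ℕ, (n % 2 = 0 → f ⟨(i0.val + n) % (2 * k), Nat.mod_lt _ (by omega)⟩ ∈ L) ∧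
             (n % 2 = 1 → f ⟨(i0.val + n) % (2 * k), Nat.mod_lt _ (by omega)⟩ ∈ R) := by
  intro n
  induction n with
  | zero =>
    have he : (⟨(i0.val + 0) % (2 * k), Nat.mod_lt _ (by omega)⟩ : Fin (2 * k)) = i0 := by
      apply Fin.ext; simp [Nat.mod_eq_of_lt i0.isLt]
    rw [he]
    exact ⟨fun _ => h0, fun h => by omega⟩
  | succ n ih =>
    have hrot : finRotate (2 * k) ⟨(i0.val + n) % (2 * k), Nat.mod_lt _ (by omega)⟩ =
        ⟨(i0.val + (n + 1)) % (2 * k), Nat.mod_lt _ (by omega)⟩ := by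
      apply Fin.ext
      rw [finRotate_val'' (by omega)]
      show ((i0.val + n) % (2 * k) + 1) % (2 * k) = _
      rw [Nat.mod_add_mod]
      show (i0.val + n + 1) % (2 * k) = (i0.val + (n + 1)) % (2 * k)
      rw [Nat.add_assoc]
    by_cases hn : n % 2 = 0
    · have hL := ih.1 hn
      rcases hD ⟨(i0.val + n) % (2 * k), Nat.mod_lt _ (by omega)⟩ with h | h
      · rw [hrot] at h
        exact ⟨fun hc => by omega, fun _ => h.2.1⟩
      · exact absurd h.1 ((hpart _).1 hL)
    · have hR := ih.2 (by omega)
      rcases hD ⟨(i0.val + n) % (2 * k), Nat.mod_lt _ (by omega)⟩ with h | h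
      · exact absurd hR ((hpart _).1 h.1)
      · rw [hrot] at h
        exact ⟨fun _ => h.2, fun hc => by omega⟩

lemma shift_inj (hk : 0 < k) (i0 : Fin (2 * k)) {s t : ℕ} (hs : s < 2 * k) (ht : t < 2 * k)
    (h : (i0.val + s) % (2 * k) = (i0.val + t) % (2 * k)) : s = t := by
  have : s % (2 * k) = t % (2 * k) := Nat.ModEq.add_left_cancel' i0.val h
  rwa [Nat.mod_eq_of_lt hs, Nat.mod_eq_of_lt ht] at this

lemma shift_surj (hk : 0 < k) (i0 : Fin (2 * k)) (s : Fin (2 * k)) :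
    ∃ t : Fin (2 * k), (i0.val + t.val) % (2 * k) = s.val := by
  refine ⟨⟨(s.val + 2 * k - i0.val) % (2 * k), Nat.mod_lt _ (by omega)⟩, ?_⟩
  show (i0.val + (s.val + 2 * k - i0.val) % (2 * k)) % (2 * k) = s.val
  conv_lhs => rw [Nat.add_comm i0.val _, Nat.mod_add_mod]
  rw [show s.val + 2 * k - i0.val + i0.val = s.val + 2 * k from by have := i0.isLt; omega,
    Nat.add_mod_right, Nat.mod_eq_of_lt s.isLt]
end Part3

section Part4
variable {V : Type*} [DecidableEq V] {G : SimpleGraph V} {L R : Set V} {k : ℕ}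

lemma pointed_count (hpart : ∀ v : V, v ∈ L ↔ v ∉ R) (hk : 0 < k)
    (f : Fin (2 * k) → V) (hf : Function.Injective f)
    (hD : ∀ i, (f i ∈ L ∧ f (finRotate (2 * k) i) ∈ R ∧ G.Adj (f i) (f (finRotate (2 * k) i)))
      ∨ (f i ∈ R ∧ f (finRotate (2 * k) i) ∈ L)) :
    Nat.card {a : V × V //
      a ∈ Finset.image (fun i => (f i, f (finRotate (2 * k) i))) Finset.univ ∧ a.1 ∈ L} = k := by
  classical
  obtain ⟨i0, h0⟩ : ∃ i0, f i0 ∈ L := by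
    rcases hD ⟨0, by omega⟩ with h | h
    · exact ⟨_, h.1⟩
    · exact ⟨_, h.2⟩
  have par := anchor_parity hpart hk f hD i0 h0
  set σ : Fin k → Fin (2 * k) :=
    fun j => ⟨(i0.val + 2 * j.val) % (2 * k), Nat.mod_lt _ (by omega)⟩ with hσ
  set β : Fin k → {a : V × V //
      a ∈ Finset.image (fun i => (f i, f (finRotate (2 * k) i))) Finset.univ ∧ a.1 ∈ L} :=
    fun j => ⟨(f (σ j), f (finRotate (2 * k) (σ j))),
      Finset.mem_image.2 ⟨σ j, Finset.mem_univ _, rfl⟩, (par (2 * j.val)).1 (by omega)⟩ with hβ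
  have hbij : Function.Bijective β := by
    constructor
    · intro i j h
      have h1 : f (σ i) = f (σ j) := congrArg (fun x => x.1.1) h
      have h2 := hf h1
      have h3 : (i0.val + 2 * i.val) % (2 * k) = (i0.val + 2 * j.val) % (2 * k) :=
        congrArg Fin.val h2
      have := shift_inj hk i0 (by have := i.isLt; omega) (by have := j.isLt; omega) h3
      exact Fin.ext (by omega)
    · rintro ⟨⟨u, v⟩, hmem, huL⟩
      obtain ⟨s, _, hs⟩ := Finset.mem_image.1 hmem
      obtain ⟨t, ht⟩ := shift_surj hk i0 s
      have hst : (⟨(i0.val + t.val) % (2 * k), Nat.mod_lt _ (by omega)⟩ : Fin (2 * k)) = s :=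
        Fin.ext ht
      have hu : f s = u := congrArg Prod.fst hs
      have hteven : t.val % 2 = 0 := by
        by_contra hodd
        have hR : f s ∈ R := by rw [← hst]; exact (par t.val).2 (by omega)
        rw [hu] at hR
        exact (hpart u).1 huL hR
      refine ⟨⟨t.val / 2, by have := t.isLt; omega⟩, ?_⟩
      have hσs : σ ⟨t.val / 2, by have := t.isLt; omega⟩ = s := by
        rw [← hst]
        apply Fin.ext
        show (i0.val + 2 * (t.val / 2)) % (2 * k) = (i0.val + t.val) % (2 * k)
        congr 2
        omega
      apply Subtype.ext
      show (f (σ _), f (finRotate (2 * k) (σ _))) = (u, v)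
      rw [hσs, hs]
  rw [← Nat.card_eq_of_bijective β hbij]
  simp

end Part4

section Part5
variable {V : Type*} [DecidableEq V] {G : SimpleGraph V} {L R : Set V} {k : ℕ}

lemma good_of_anchor (hpart : ∀ v : V, v ∈ L ↔ v ∉ R) (hk : 0 < k)
    (f : Fin (2 * k) → V) (hf : Function.Injective f)
    (hD : ∀ i, (f i ∈ L ∧ f (finRotate (2 * k) i) ∈ R ∧ G.Adj (f i) (f (finRotate (2 * k) i)))
      ∨ (f i ∈ R ∧ f (finRotate (2 * k) i) ∈ L))
    (i0 : Fin (2 * k)) (h0 : f i0 ∈ L) :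
    ∃ p : Fin k → V × V, Good G L R k p ∧
      cycleOf k p = Finset.image (fun i => (f i, f (finRotate (2 * k) i))) Finset.univ ∧
      p ⟨0, hk⟩ = (f i0, f (finRotate (2 * k) i0)) := by
  have par := anchor_parity hpart hk f hD i0 h0
  set g : ℕ → V := fun n => f ⟨(i0.val + n) % (2 * k), Nat.mod_lt _ (by omega)⟩ with hg
  have gmod : ∀ n, g (n % (2 * k)) = g n := by
    intro n
    apply congrArg f
    apply Fin.ext
    show (i0.val + n % (2 * k)) % (2 * k) = (i0.val + n) % (2 * k)
    conv_lhs => rw [Nat.add_comm, Nat.mod_add_mod, Nat.add_comm]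
  have gstep : ∀ n, g (n + 1) =
      f (finRotate (2 * k) ⟨(i0.val + n) % (2 * k), Nat.mod_lt _ (by omega)⟩) := by
    intro n
    apply congrArg f
    apply Fin.ext
    rw [finRotate_val'' (by omega)]
    show (i0.val + (n + 1)) % (2 * k) = ((i0.val + n) % (2 * k) + 1) % (2 * k)
    rw [Nat.mod_add_mod, Nat.add_assoc]
  set p : Fin k → V × V := fun j => (g (2 * j.val), g (2 * j.val + 1)) with hp
  have fpg : ∀ t : Fin (2 * k), fp k p t = g t.val := by
    intro t
    by_cases ht : t.val % 2 = 0
    · simp only [fp, if_pos ht]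
      show g (2 * (t.val / 2)) = g t.val
      congr 1
      omega
    · simp only [fp, if_neg ht]
      show g (2 * (t.val / 2) + 1) = g t.val
      congr 1
      omega
  have hadjs : ∀ j : Fin k, G.Adj (g (2 * j.val)) (g (2 * j.val + 1)) := by
    intro j
    have hL : g (2 * j.val) ∈ L := (par (2 * j.val)).1 (by omega)
    rcases hD ⟨(i0.val + 2 * j.val) % (2 * k), Nat.mod_lt _ (by omega)⟩ with h | h
    · rw [gstep (2 * j.val)]
      exact h.2.2
    · exact absurd h.1 ((hpart _).1 hL)
  have hgood : Good G L R k p := by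
    constructor
    · intro j
      exact ⟨(par (2 * j.val)).1 (by omega), (par (2 * j.val + 1)).2 (by omega), hadjs j⟩
    · intro s t h
      rw [fpg, fpg] at h
      have := hf h
      have := congrArg Fin.val this
      exact Fin.ext (shift_inj hk i0 s.isLt t.isLt this)
  refine ⟨p, hgood, ?_, ?_⟩
  · ext x
    simp only [cycleOf, Finset.mem_image, Finset.mem_univ, true_and]
    constructor
    · rintro ⟨t, rfl⟩
      refine ⟨⟨(i0.val + t.val) % (2 * k), Nat.mod_lt _ (by omega)⟩, ?_⟩
      have e1 : f ⟨(i0.val + t.val) % (2 * k), Nat.mod_lt _ (by omega)⟩ = fp k p t := by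
        rw [fpg t]
      have e2 : f (finRotate (2 * k) ⟨(i0.val + t.val) % (2 * k), Nat.mod_lt _ (by omega)⟩) =
          fp k p (finRotate (2 * k) t) := by
        rw [← gstep t.val, fpg, finRotate_val'' (by omega), gmod]
      rw [e1, e2]
    · rintro ⟨s, rfl⟩
      obtain ⟨t, ht⟩ := shift_surj hk i0 s
      have hst : (⟨(i0.val + t.val) % (2 * k), Nat.mod_lt _ (by omega)⟩ : Fin (2 * k)) = s :=
        Fin.ext ht
      refine ⟨t, ?_⟩
      have e1 : fp k p t = f s := by
        rw [fpg t]
        exact congrArg f hst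
      have e2 : fp k p (finRotate (2 * k) t) = f (finRotate (2 * k) s) := by
        rw [fpg, finRotate_val'' (by omega), gmod, gstep t.val, hst]
      rw [e1, e2]
  · have e0 : g 0 = f i0 := by
      apply congrArg f
      apply Fin.ext
      show (i0.val + 0) % (2 * k) = i0.val
      rw [Nat.add_zero, Nat.mod_eq_of_lt i0.isLt]
    have e1 : g 1 = f (finRotate (2 * k) i0) := by
      rw [show (1 : ℕ) = 0 + 1 from rfl, gstep 0]
      refine congrArg f (congrArg (finRotate (2 * k)) (Fin.ext ?_))
      show (i0.val + 0) % (2 * k) = i0.val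
      rw [Nat.add_zero, Nat.mod_eq_of_lt i0.isLt]
    show (g (2 * 0), g (2 * 0 + 1)) = _
    rw [show 2 * 0 = 0 from rfl, e0, show (0 + 1 : ℕ) = 1 from rfl, e1]

end Part5

section Part6
variable {V : Type*} [DecidableEq V] {G : SimpleGraph V} {L R : Set V} {k : ℕ}

lemma cycle_source_unique {p : Fin k → V × V} (hg : Good G L R k p) {u v w : V}
    (h1 : (u, v) ∈ cycleOf k p) (h2 : (u, w) ∈ cycleOf k p) : v = w :=
  source_unique (fp k p) hg.2 h1 h2

lemma phi_inj (hpart : ∀ v : V, v ∈ L ↔ v ∉ R) (hk : 0 < k) {p q : Fin k → V × V}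
    (hgp : Good G L R k p) (hgq : Good G L R k q)
    (hC : cycleOf k p = cycleOf k q) (h0 : p ⟨0, hk⟩ = q ⟨0, hk⟩) : p = q := by
  have key : ∀ n, ∀ hn : n < k, p ⟨n, hn⟩ = q ⟨n, hn⟩ := by
    intro n
    induction n with
    | zero => intro hn; exact h0
    | succ n ih =>
      intro hn
      have hnk : n < k := by omega
      have e := ih hnk
      have hsucc : (⟨(n + 1) % k, Nat.mod_lt _ hk⟩ : Fin k) = ⟨n + 1, hn⟩ :=
        Fin.ext (Nat.mod_eq_of_lt hn)
      have m1 : ((p ⟨n, hnk⟩).2, (p ⟨n + 1, hn⟩).1) ∈ cycleOf k p := by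
        have := arc_odd_mem hk (p := p) ⟨n, hnk⟩
        rwa [hsucc] at this
      have m2 : ((p ⟨n, hnk⟩).2, (q ⟨n + 1, hn⟩).1) ∈ cycleOf k p := by
        have := arc_odd_mem hk (p := q) ⟨n, hnk⟩
        rw [hsucc] at this
        rw [hC, e]
        exact this
      have hfst : (p ⟨n + 1, hn⟩).1 = (q ⟨n + 1, hn⟩).1 :=
        cycle_source_unique hgp m1 m2
      have m3 : ((p ⟨n + 1, hn⟩).1, (p ⟨n + 1, hn⟩).2) ∈ cycleOf k p :=
        arc_even_mem _
      have m4 : ((p ⟨n + 1, hn⟩).1, (q ⟨n + 1, hn⟩).2) ∈ cycleOf k p := by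
        rw [hC, hfst]
        exact arc_even_mem _
      have hsnd : (p ⟨n + 1, hn⟩).2 = (q ⟨n + 1, hn⟩).2 :=
        cycle_source_unique hgp m3 m4
      exact Prod.ext hfst hsnd
  funext j
  have := key j.val j.isLt
  simpa using this

end Part6

section Part7
variable {V : Type*} [DecidableEq V] {G : SimpleGraph V} {L R : Set V} {k : ℕ}

lemma orient (hbip : ∀ u v : V, G.Adj u v → (u ∈ L ∧ v ∈ R) ∨ (u ∈ R ∧ v ∈ L)) :
    ∀ e ∈ G.edgeSet, ∃ a b : V, a ∈ L ∧ b ∈ R ∧ G.Adj a b ∧ e = s(a, b) := by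
  intro e
  induction e using Sym2.ind with
  | _ u v =>
    intro he
    have hadj : G.Adj u v := he
    rcases hbip u v hadj with ⟨hu, hv⟩ | ⟨hu, hv⟩
    · exact ⟨u, v, hu, hv, hadj, rfl⟩
    · exact ⟨v, u, hv, hu, hadj.symm, Sym2.eq_swap⟩

lemma matching_fiber (hpart : ∀ v : V, v ∈ L ↔ v ∉ R)
    (hbip : ∀ u v : V, G.Adj u v → (u ∈ L ∧ v ∈ R) ∨ (u ∈ R ∧ v ∈ L))
    {M : Finset (Sym2 V)} (hM : IsMatching' G M) (hMc : M.card = k) :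
    Nat.card {x : {p : Fin k → V × V // Good G L R k p} // mOf k x.1 = M} = k.factorial := by
  classical
  have hcard : Fintype.card {e // e ∈ M} = k := by simp [Fintype.card_coe, hMc]
  have ends : ∀ e : {e // e ∈ M}, ∃ x : V × V, x.1 ∈ L ∧ x.2 ∈ R ∧ G.Adj x.1 x.2 ∧
      (e : Sym2 V) = s(x.1, x.2) := by
    rintro ⟨e, he⟩
    obtain ⟨x, y, h1, h2, h3, h4⟩ := orient hbip e (hM.1 he)
    exact ⟨(x, y), h1, h2, h3, h4⟩
  choose o ha hb hadj heq using ends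
  set a : {e // e ∈ M} → V := fun e => (o e).1 with hadef
  set b : {e // e ∈ M} → V := fun e => (o e).2 with hbdef
  have key2 : ∀ (i j : {e // e ∈ M}) (v : V),
      v ∈ (i : Sym2 V) → v ∈ (j : Sym2 V) → i = j := by
    intro i j v hvi hvj
    by_contra hne
    have hne' : (i : Sym2 V) ≠ (j : Sym2 V) := fun hc => hne (Subtype.ext hc)
    exact hM.2 i.2 j.2 hne' v hvi hvj
  have memA : ∀ i : {e // e ∈ M}, a i ∈ (i : Sym2 V) := fun i => by
    rw [heq i]; exact Sym2.mem_mk_left _ _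
  have memB : ∀ i : {e // e ∈ M}, b i ∈ (i : Sym2 V) := fun i => by
    rw [heq i]; exact Sym2.mem_mk_right _ _
  have hab : ∀ i j : {e // e ∈ M}, a i ≠ b j := by
    intro i j hc
    have := (hpart (a i)).1 (ha i)
    rw [hc] at this
    exact this (hb j)
  have Fbij : ∀ x : {p : Fin k → V × V // Good G L R k p}, ∀ hx : mOf k x.1 = M,
      Function.Bijective (fun j : Fin k => (⟨edgeOf k x.1 j, by
        rw [← hx]; exact Finset.mem_image_of_mem _ (Finset.mem_univ j)⟩ :
        {e // e ∈ M})) := by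
    intro x hx
    refine (Fintype.bijective_iff_injective_and_card _).2 ⟨?_, by simp [hcard]⟩
    intro i j h
    exact edgeOf_inj hpart x.2 (congrArg Subtype.val h)
  set F : {x : {p : Fin k → V × V // Good G L R k p} // mOf k x.1 = M} →
      (Fin k ≃ {e // e ∈ M}) := fun x => Equiv.ofBijective _ (Fbij x.1 x.2) with hFdef
  have hFapp : ∀ x j, ((F x) j : Sym2 V) = edgeOf k x.1.1 j := fun x j => rfl
  have hFbij : Function.Bijective F := by
    constructor
    · intro x y h
      apply Subtype.ext
      apply Subtype.ext
      funext j
      have hj : edgeOf k x.1.1 j = edgeOf k y.1.1 j := by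
        rw [← hFapp x j, ← hFapp y j, h]
      rcases Sym2.eq_iff.1 hj with ⟨h1, h2⟩ | ⟨h1, h2⟩
      · exact Prod.ext h1 h2
      · exfalso
        have hx1 : (x.1.1 j).1 ∈ L := (x.1.2.1 j).1
        have hy2 : (y.1.1 j).2 ∈ R := (y.1.2.1 j).2.1
        rw [h1] at hx1
        exact (hpart _).1 hx1 hy2
    · intro g
      set p : Fin k → V × V := fun j => (a (g j), b (g j)) with hpdef
      have fpval0 : ∀ t : Fin (2 * k), t.val % 2 = 0 →
          fp k p t = a (g ⟨t.val / 2, by have := t.isLt; omega⟩) := by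
        intro t ht
        simp only [fp, if_pos ht, hpdef]
      have fpval1 : ∀ t : Fin (2 * k), t.val % 2 = 1 →
          fp k p t = b (g ⟨t.val / 2, by have := t.isLt; omega⟩) := by
        intro t ht
        simp only [fp, if_neg (by omega : ¬ t.val % 2 = 0), hpdef]
      have hvert : ∀ t : Fin (2 * k),
          fp k p t ∈ ((g ⟨t.val / 2, by have := t.isLt; omega⟩ : {e // e ∈ M}) : Sym2 V) := by
        intro t
        by_cases ht : t.val % 2 = 0
        · rw [fpval0 t ht]; exact memA _
        · rw [fpval1 t (by omega)]; exact memB _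
      have hgood : Good G L R k p := by
        refine ⟨fun j => ⟨ha _, hb _, hadj _⟩, ?_⟩
        intro s t h
        have hgst : g ⟨s.val / 2, by have := s.isLt; omega⟩ =
            g ⟨t.val / 2, by have := t.isLt; omega⟩ :=
          key2 _ _ (fp k p s) (hvert s) (h ▸ hvert t)
        have hj : s.val / 2 = t.val / 2 := congrArg Fin.val (g.injective hgst)
        by_cases es : s.val % 2 = 0 <;> by_cases et : t.val % 2 = 0
        · exact Fin.ext (by omega)
        · exfalso
          rw [fpval0 s es, fpval1 t (by omega)] at h
          exact hab _ _ h
        · exfalso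
          rw [fpval1 s (by omega), fpval0 t et] at h
          exact hab _ _ h.symm
        · exact Fin.ext (by omega)
      have hedge : ∀ j, edgeOf k p j = ((g j : {e // e ∈ M}) : Sym2 V) := by
        intro j
        rw [edgeOf, hpdef]
        exact (heq (g j)).symm
      have hmeq : mOf k p = M := by
        apply Finset.ext
        intro e
        simp only [mOf, Finset.mem_image, Finset.mem_univ, true_and]
        constructor
        · rintro ⟨j, rfl⟩
          rw [hedge j]
          exact (g j).2
        · intro he
          refine ⟨g.symm ⟨e, he⟩, ?_⟩
          rw [hedge]
          exact congrArg Subtype.val (g.apply_symm_apply ⟨e, he⟩)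
      refine ⟨⟨⟨p, hgood⟩, hmeq⟩, ?_⟩
      apply Equiv.ext
      intro j
      apply Subtype.ext
      rw [hFapp]
      exact hedge j
  rw [Nat.card_eq_of_bijective F hFbij, Nat.card_eq_fintype_card,
    Fintype.card_equiv (Fintype.equivOfCardEq (by simp [hcard])), Fintype.card_fin]

end Part7

/-- if `G` is bipartite with parts `L, R`, and `G'` is the digraph obtained
by directing every edge of `G` from `L` to `R` and adding all arcs from `R` to `L`, then
the number of directed cycles of length `2k` in `G'` is `(k−1)!` times the number of
`k`-matchings of `G`. -/
theorem dirCycles_eq_factorial_mul_matchings {V : Type*} [Fintype V] [DecidableEq V]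
    (G : SimpleGraph V) (L R : Set V) (k : ℕ) (hk : 1 ≤ k)
    (hpart : ∀ v : V, v ∈ L ↔ v ∉ R)
    (hbip : ∀ u v : V, G.Adj u v → (u ∈ L ∧ v ∈ R) ∨ (u ∈ R ∧ v ∈ L)) :
    {C : Finset (V × V) |
        IsDirCycle (fun u v => (u ∈ L ∧ v ∈ R ∧ G.Adj u v) ∨ (u ∈ R ∧ v ∈ L)) (2 * k) C}.ncard
      = (k - 1).factorial *
        {M : Finset (Sym2 V) | IsMatching' G M ∧ M.card = k}.ncard := by
  classical
  have hk0 : 0 < k := hk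
  -- Step 1: count sequences by matchings
  have hS : Nat.card {p : Fin k → V × V // Good G L R k p} =
      k.factorial * {M : Finset (Sym2 V) | IsMatching' G M ∧ M.card = k}.ncard := by
    apply my_count (f := fun x => mOf k x.1)
    · intro x
      exact mOf_matching hpart x.2
    · exact Set.toFinite _
    · intro M hM
      exact matching_fiber hpart hbip hM.1 hM.2
  -- Step 2: count pointed cycles by cycles
  have hPC : Nat.card {x : Finset (V × V) × (V × V) //
      IsDirCycle (fun u v => (u ∈ L ∧ v ∈ R ∧ G.Adj u v) ∨ (u ∈ R ∧ v ∈ L)) (2 * k) x.1 ∧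
      x.2 ∈ x.1 ∧ x.2.1 ∈ L} =
      k * {C : Finset (V × V) |
        IsDirCycle (fun u v => (u ∈ L ∧ v ∈ R ∧ G.Adj u v) ∨ (u ∈ R ∧ v ∈ L)) (2 * k) C}.ncard := by
    apply my_count (f := fun x => x.1.1)
    · intro x
      exact x.2.1
    · exact Set.toFinite _
    · intro C hC
      obtain ⟨f, hf, hDf, rfl⟩ := hC
      refine Eq.trans ?_ (pointed_count hpart hk0 f hf hDf)
      apply Nat.card_eq_of_bijective
        (f := fun x => (⟨x.1.1.2, ⟨by have h := x.1.2.2.1; rw [x.2] at h; exact h,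
          x.1.2.2.2⟩⟩ :
          {a : V × V // a ∈ Finset.image (fun i => (f i, f (finRotate (2 * k) i)))
            Finset.univ ∧ a.1 ∈ L}))
      constructor
      · intro x y h
        have hval : x.1.1.2 = y.1.1.2 := congrArg Subtype.val h
        have h1 : x.1.1 = y.1.1 := Prod.ext (x.2.trans y.2.symm) hval
        exact Subtype.ext (Subtype.ext h1)
      · rintro ⟨a, haC, haL⟩
        exact ⟨⟨⟨(Finset.image (fun i => (f i, f (finRotate (2 * k) i))) Finset.univ, a),
          ⟨f, hf, hDf, rfl⟩, haC, haL⟩, rfl⟩, rfl⟩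
  -- Step 3: sequences biject with pointed cycles
  have hbij : Nat.card {p : Fin k → V × V // Good G L R k p} =
      Nat.card {x : Finset (V × V) × (V × V) //
      IsDirCycle (fun u v => (u ∈ L ∧ v ∈ R ∧ G.Adj u v) ∨ (u ∈ R ∧ v ∈ L)) (2 * k) x.1 ∧
      x.2 ∈ x.1 ∧ x.2.1 ∈ L} := by
    apply Nat.card_eq_of_bijective
      (f := fun x => ⟨(cycleOf k x.1, x.1 ⟨0, hk0⟩), good_isDirCycle hpart hk0 x.2,
        (by have := arc_even_mem (p := x.1) ⟨0, hk0⟩; rwa [Prod.mk.eta] at this),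
        (x.2.1 ⟨0, hk0⟩).1⟩)
    constructor
    · intro x y h
      have h' := congrArg Subtype.val h
      have h1 : cycleOf k x.1 = cycleOf k y.1 := congrArg Prod.fst h'
      have h2 : x.1 ⟨0, hk0⟩ = y.1 ⟨0, hk0⟩ := congrArg Prod.snd h'
      exact Subtype.ext (phi_inj hpart hk0 x.2 y.2 h1 h2)
    · rintro ⟨⟨C, apt⟩, hcyc, haC, haL⟩
      obtain ⟨f, hf, hDf, hCeq⟩ := hcyc
      have haC' : apt ∈ Finset.image (fun i => (f i, f (finRotate (2 * k) i))) Finset.univ := by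
        rw [← hCeq]; exact haC
      obtain ⟨i0, -, hi0⟩ := Finset.mem_image.1 haC'
      have h0 : f i0 ∈ L := by
        rw [show f i0 = apt.1 from congrArg Prod.fst hi0]
        exact haL
      obtain ⟨p, hgood, hcyceq, hp0⟩ := good_of_anchor hpart hk0 f hf hDf i0 h0
      refine ⟨⟨p, hgood⟩, Subtype.ext ?_⟩
      show (cycleOf k p, p ⟨0, hk0⟩) = (C, apt)
      rw [hcyceq, ← hCeq, hp0, hi0]
  -- final arithmetic
  obtain ⟨k', rfl⟩ : ∃ k', k = k' + 1 := ⟨k - 1, by omega⟩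
  apply Nat.eq_of_mul_eq_mul_left (show 0 < k' + 1 by omega)
  rw [← hPC, hbij.symm, hS]
  simp only [Nat.add_sub_cancel, Nat.factorial_succ]
  ring
end

section
/- Let A and B be edge-disjointly colored graphs whose edge colors lie in a finite set Δ, with each graph edge-colorful (all edge colors distinct within each graph). For n ≥ 0 let A + n·B be the disjoint union of A with n vertex-disjoint copies of B. Then for every X ⊆ Δ, the number of matchings in A + n·B that contain exactly one edge of each color in X (and no other edges) is a polynomial in n of degree at most |X|. -/
set_option linter.unusedSectionVars false

/-- The graph `A + n·B`: the disjoint union of `A` with `n` vertex-disjoint copies of `B`,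
on the vertex set `α ⊕ (Fin n × β)`. -/
def unionGraph {α β : Type*} (A : SimpleGraph α) (B : SimpleGraph β) (n : ℕ) :
    SimpleGraph (α ⊕ Fin n × β) :=
  SimpleGraph.fromRel fun x y =>
    match x, y with
    | .inl a, .inl a' => A.Adj a a'
    | .inr p, .inr q => p.1 = q.1 ∧ B.Adj p.2 q.2
    | _, _ => False

/-- The number of `X`-colorful matchings of a graph `G` with edge coloring `c`: matchings
containing exactly one edge of each color in `X` and no other edges. -/
noncomputable def colorfulMatchingCount {W Δ : Type*} (G : SimpleGraph W)
    (c : Sym2 W → Δ) (X : Finset Δ) : ℕ :=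
  {M : Finset (Sym2 W) | ↑M ⊆ G.edgeSet ∧
    ((M : Set (Sym2 W)).Pairwise fun e f => ∀ v, v ∈ e → v ∉ f) ∧
    (∀ e ∈ M, c e ∈ X) ∧ (∀ x ∈ X, ∃! e, e ∈ M ∧ c e = x)}.ncard

namespace CMAux

open Finset

attribute [local instance] Classical.propDecidable

variable {α β Δ : Type*} [Fintype α] [Fintype β] [Fintype Δ]

/-- The matching predicate. -/
def P (A : SimpleGraph α) (B : SimpleGraph β) (X : Finset Δ) (n : ℕ)
    (c : Sym2 (α ⊕ Fin n × β) → Δ) (M : Finset (Sym2 (α ⊕ Fin n × β))) : Prop :=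
  ↑M ⊆ (unionGraph A B n).edgeSet ∧
    ((M : Set (Sym2 (α ⊕ Fin n × β))).Pairwise fun e f => ∀ v, v ∈ e → v ∉ f) ∧
    (∀ e ∈ M, c e ∈ X) ∧ (∀ x ∈ X, ∃! e, e ∈ M ∧ c e = x)

/-- The set of copies of `B` used by a set of edges. -/
noncomputable def usedF (n : ℕ) (M : Finset (Sym2 (α ⊕ Fin n × β))) : Finset (Fin n) :=
  Finset.univ.filter fun i => ∃ e ∈ M, ∃ b : β, Sum.inr (i, b) ∈ e

lemma mem_usedF {n : ℕ} {M : Finset (Sym2 (α ⊕ Fin n × β))} {i : Fin n} :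
    i ∈ usedF n M ↔ ∃ e ∈ M, ∃ b : β, Sum.inr (i, b) ∈ e := by
  simp [usedF]

lemma edge_iff (A : SimpleGraph α) (B : SimpleGraph β) (n : ℕ) (e : Sym2 (α ⊕ Fin n × β)) :
    e ∈ (unionGraph A B n).edgeSet ↔
      (∃ a a', A.Adj a a' ∧ e = s(Sum.inl a, Sum.inl a')) ∨
      (∃ (i : Fin n) (b b' : β), B.Adj b b' ∧ e = s(Sum.inr (i, b), Sum.inr (i, b'))) := by
  induction e using Sym2.ind with
  | _ x y =>
    rw [SimpleGraph.mem_edgeSet, unionGraph, SimpleGraph.fromRel_adj]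
    constructor
    · rintro ⟨hne, h | h⟩ <;> rcases x with a | ⟨i, b⟩ <;> rcases y with a' | ⟨i', b'⟩ <;>
        simp only [] at h
      · exact Or.inl ⟨a, a', h, rfl⟩
      · obtain ⟨rfl, hB⟩ := h
        exact Or.inr ⟨i, b, b', hB, rfl⟩
      · exact Or.inl ⟨a', a, h, Sym2.eq_swap⟩
      · obtain ⟨rfl, hB⟩ := h
        exact Or.inr ⟨i', b', b, hB, Sym2.eq_swap⟩
    · rintro (⟨a, a', hA, he⟩ | ⟨i, b, b', hB, he⟩)
      · rw [Sym2.eq_iff] at he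
        rcases he with ⟨rfl, rfl⟩ | ⟨rfl, rfl⟩
        · exact ⟨by simp [hA.ne], Or.inl hA⟩
        · exact ⟨by simp [hA.ne'], Or.inr hA⟩
      · rw [Sym2.eq_iff] at he
        rcases he with ⟨rfl, rfl⟩ | ⟨rfl, rfl⟩
        · exact ⟨by simp [hB.ne], Or.inl ⟨rfl, hB⟩⟩
        · exact ⟨by simp [hB.ne'], Or.inr ⟨rfl, hB⟩⟩

variable (cA : Sym2 α → Δ) (cB : Sym2 β → Δ)

/-- A canonical coloring of `A + n·B` compatible with `cA`, `cB`. -/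
noncomputable def canon (n : ℕ) : Sym2 (α ⊕ Fin n × β) → Δ :=
  Sym2.lift ⟨fun x y =>
    match x, y with
    | .inl a, .inl a' => cA s(a, a')
    | .inr p, .inr q => cB s(p.2, q.2)
    | .inl a, .inr _ => cA s(a, a)
    | .inr _, .inl a => cA s(a, a), by
      intro x y
      rcases x with a | p <;> rcases y with a' | q <;> simp only []
      · rw [Sym2.eq_swap]
      · rw [Sym2.eq_swap]⟩

lemma canon_inl (n : ℕ) (a a' : α) :
    canon cA cB n s(Sum.inl a, Sum.inl a') = cA s(a, a') := rfl

lemma canon_inr (n : ℕ) (i : Fin n) (b b' : β) :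
    canon cA cB n s(Sum.inr (i, b), Sum.inr (i, b')) = cB s(b, b') := rfl

variable (A : SimpleGraph α) (B : SimpleGraph β) (X : Finset Δ)

/-- number of colorful matchings using all copies. -/
noncomputable def g (k : ℕ) : ℕ :=
  (univ.filter fun M => P A B X k (canon cA cB k) M ∧ usedF k M = univ).card

/-- A colorful matching uses at most `|X|` copies. -/
lemma used_card_le {n : ℕ} {c : Sym2 (α ⊕ Fin n × β) → Δ} {M : Finset (Sym2 (α ⊕ Fin n × β))}
    (hM : P A B X n c M) : (usedF n M).card ≤ X.card := by
  obtain ⟨hE, hpw, hcX, hun⟩ := hM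
  -- pick an edge for each used copy
  have hpick : ∀ i ∈ usedF n M, ∃ e ∈ M, ∃ b : β, Sum.inr (i, b) ∈ e := fun i hi =>
    mem_usedF.mp hi
  choose ed hed hmem using hpick
  rcases eq_or_ne (usedF n M) ∅ with h0 | h0
  · simp [h0]
  obtain ⟨i0, hi0⟩ := Finset.nonempty_iff_ne_empty.mpr h0
  have hΔ : Nonempty Δ := ⟨c (ed i0 hi0)⟩
  apply Finset.card_le_card_of_injOn
      (fun i => if h : i ∈ usedF n M then c (ed i h) else Classical.choice hΔ)
  · intro i hi
    simp only [mem_coe] at hi ⊢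
    simp only [dif_pos hi]
    exact hcX _ (hed i hi)
  · intro i hi j hj hij
    simp only [mem_coe] at hi hj
    simp only [dif_pos hi, dif_pos hj] at hij
    -- unique edge of that color
    have hx : c (ed i hi) ∈ X := hcX _ (hed i hi)
    obtain ⟨f, -, hfu⟩ := hun _ hx
    have h1 : ed i hi = f := hfu _ ⟨hed i hi, rfl⟩
    have h2 : ed j hj = f := hfu _ ⟨hed j hj, hij.symm⟩
    have heq : ed i hi = ed j hj := h1.trans h2.symm
    -- both inr vertices lie in the same edge, which is an edge of the graph
    obtain ⟨b, hb⟩ := hmem i hi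
    obtain ⟨b', hb'⟩ := hmem j hj
    rw [heq] at hb
    rcases (edge_iff A B n _).mp (hE (hed j hj)) with ⟨a, a', -, hform⟩ |
        ⟨i0, b0, b0', -, hform⟩
    · rw [hform] at hb
      simp [Sym2.mem_iff] at hb
    · rw [hform] at hb hb'
      simp only [Sym2.mem_iff, Sum.inr.injEq, Prod.mk.injEq] at hb hb'
      rcases hb with ⟨h, -⟩ | ⟨h, -⟩ <;> rcases hb' with ⟨h', -⟩ | ⟨h', -⟩ <;>
        exact h.trans h'.symm

lemma g_eq_zero {k : ℕ} (hk : X.card < k) : g cA cB A B X k = 0 := by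
  rw [g, Finset.card_eq_zero, Finset.filter_eq_empty_iff]
  rintro M -
  rintro ⟨hP, hu⟩
  have := used_card_le A B X hP
  rw [hu] at this
  simp only [Finset.card_univ, Fintype.card_fin] at this
  omega

set_option maxHeartbeats 1000000 in
lemma card_fiber (n k : ℕ) (c : Sym2 (α ⊕ Fin n × β) → Δ) (c' : Sym2 (α ⊕ Fin k × β) → Δ)
    (hc1 : ∀ a a', c s(Sum.inl a, Sum.inl a') = cA s(a, a'))
    (hc2 : ∀ (i : Fin n) (b b'), c s(Sum.inr (i, b), Sum.inr (i, b')) = cB s(b, b'))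
    (hc'1 : ∀ a a', c' s(Sum.inl a, Sum.inl a') = cA s(a, a'))
    (hc'2 : ∀ (j : Fin k) (b b'), c' s(Sum.inr (j, b), Sum.inr (j, b')) = cB s(b, b'))
    (T : Finset (Fin n)) (hT : T.card = k) :
    (univ.filter fun M => P A B X n c M ∧ usedF n M = T).card =
    (univ.filter fun M => P A B X k c' M ∧ usedF k M = univ).card := by
  classical
  let σ : Fin k ≃ {i // i ∈ T} := (Finset.equivFinOfCardEq hT).symm
  have hσ : ∀ j j' : Fin k, ((σ j : Fin n) = (σ j' : Fin n)) ↔ j = j' := by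
    intro j j'
    constructor
    · intro h
      exact σ.injective (Subtype.ext h)
    · rintro rfl; rfl
  let ψ : (α ⊕ Fin k × β) → (α ⊕ Fin n × β) :=
    Sum.map id (fun p => ((σ p.1 : Fin n), p.2))
  have hψinl : ∀ a : α, ψ (Sum.inl a) = Sum.inl a := fun _ => rfl
  have hψinr : ∀ (j : Fin k) (b : β), ψ (Sum.inr (j, b)) = Sum.inr ((σ j : Fin n), b) :=
    fun _ _ => rfl
  have hψ : Function.Injective ψ := by
    rintro (a | ⟨j, b⟩) (a' | ⟨j', b'⟩) h <;>
      simp only [hψinl, hψinr, Sum.inl.injEq, Sum.inr.injEq, Prod.mk.injEq,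
        reduceCtorEq] at h
    · rw [h]
    · rw [(hσ j j').mp h.1, h.2]
  let mψ : Sym2 (α ⊕ Fin k × β) → Sym2 (α ⊕ Fin n × β) := Sym2.map ψ
  have hmψ : Function.Injective mψ := Sym2.map.injective hψ
  -- adjacency transfer
  have hadj : ∀ x y, (unionGraph A B n).Adj (ψ x) (ψ y) ↔ (unionGraph A B k).Adj x y := by
    rintro (a | ⟨j, b⟩) (a' | ⟨j', b'⟩) <;>
      simp only [hψinl, hψinr, unionGraph, SimpleGraph.fromRel_adj, ne_eq, Sum.inl.injEq,
        Sum.inr.injEq, Prod.mk.injEq, reduceCtorEq, hσ, not_false_eq_true, true_and,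
        false_and, and_false, or_self, not_and, and_true]
  have hedge : ∀ e, mψ e ∈ (unionGraph A B n).edgeSet ↔ e ∈ (unionGraph A B k).edgeSet := by
    intro e
    induction e using Sym2.ind with
    | _ x y =>
      rw [show mψ s(x, y) = s(ψ x, ψ y) from Sym2.map_pair_eq ψ x y,
        SimpleGraph.mem_edgeSet, SimpleGraph.mem_edgeSet]
      exact hadj x y
  -- color transfer
  have hcol : ∀ e, e ∈ (unionGraph A B k).edgeSet → c (mψ e) = c' e := by
    intro e he
    rcases (edge_iff A B k e).mp he with ⟨a, a', -, rfl⟩ | ⟨j, b, b', -, rfl⟩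
    · rw [show mψ s(Sum.inl a, Sum.inl a') = s(Sum.inl a, Sum.inl a') from rfl,
        hc1, hc'1]
    · rw [show mψ s(Sum.inr (j, b), Sum.inr (j, b'))
          = s(Sum.inr ((σ j : Fin n), b), Sum.inr ((σ j : Fin n), b')) from rfl,
        hc2, hc'2]
  -- usedF transfer
  have hused : ∀ M : Finset (Sym2 (α ⊕ Fin k × β)),
      usedF n (M.image mψ) = (usedF k M).image (fun j => (σ j : Fin n)) := by
    intro M
    ext i
    simp only [mem_usedF, Finset.mem_image]
    constructor
    · rintro ⟨e, he, b, hb⟩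
      obtain ⟨e0, he0, rfl⟩ := he
      obtain ⟨u, hu, hub⟩ := Sym2.mem_map.mp hb
      rcases u with a | ⟨j, b0⟩
      · exact absurd hub (by simp [hψinl])
      · rw [hψinr] at hub
        have h1 : ((σ j : Fin n)) = i := congrArg Prod.fst (Sum.inr.inj hub)
        exact ⟨j, ⟨e0, he0, b0, hu⟩, h1⟩
    · rintro ⟨j, hj, rfl⟩
      obtain ⟨e0, he0, b, hb⟩ := hj
      exact ⟨mψ e0, ⟨e0, he0, rfl⟩, b,
        Sym2.mem_map.mpr ⟨Sum.inr (j, b), hb, rfl⟩⟩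
  have himg : ∀ S : Finset (Fin k), S.image (fun j => (σ j : Fin n)) = T ↔ S = univ := by
    intro S
    constructor
    · intro h
      apply Finset.eq_univ_of_card
      have hcard : (S.image (fun j => (σ j : Fin n))).card = S.card :=
        Finset.card_image_of_injective _ (fun j j' hh => (hσ j j').mp hh)
      rw [h, hT] at hcard
      rw [← hcard, Fintype.card_fin]
    · rintro rfl
      ext i
      simp only [Finset.mem_image, Finset.mem_univ, true_and]
      constructor
      · rintro ⟨j, -, rfl⟩
        exact (σ j).2
      · intro hi
        exact ⟨σ.symm ⟨i, hi⟩, by simp⟩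
  -- P transfer
  have hP : ∀ M : Finset (Sym2 (α ⊕ Fin k × β)), (↑M : Set _) ⊆ (unionGraph A B k).edgeSet →
      (P A B X n c (M.image mψ) ↔ P A B X k c' M) := by
    intro M hE
    have hcolM : ∀ e ∈ M, c (mψ e) = c' e := fun e he => hcol e (hE he)
    constructor
    · rintro ⟨-, hpw, hcX, hun⟩
      refine ⟨hE, ?_, ?_, ?_⟩
      · intro e he f hf hef v hve hvf
        have h1 : mψ e ∈ (↑(M.image mψ) : Set _) := Finset.mem_coe.mpr
          (Finset.mem_image_of_mem _ (Finset.mem_coe.mp he))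
        have h2 : mψ f ∈ (↑(M.image mψ) : Set _) := Finset.mem_coe.mpr
          (Finset.mem_image_of_mem _ (Finset.mem_coe.mp hf))
        exact hpw h1 h2 (fun hh => hef (hmψ hh)) (ψ v)
          (Sym2.mem_map.mpr ⟨v, hve, rfl⟩) (Sym2.mem_map.mpr ⟨v, hvf, rfl⟩)
      · intro e he
        rw [← hcolM e he]
        exact hcX _ (Finset.mem_image_of_mem _ he)
      · intro x hx
        obtain ⟨f, ⟨hf, hfc⟩, hfu⟩ := hun x hx
        obtain ⟨e, he, rfl⟩ := Finset.mem_image.mp hf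
        refine ⟨e, ⟨he, by rw [← hcolM e he]; exact hfc⟩, ?_⟩
        intro e' ⟨he', he'c⟩
        apply hmψ
        exact hfu _ ⟨Finset.mem_image_of_mem _ he', by rw [hcolM e' he']; exact he'c⟩
    · rintro ⟨-, hpw, hcX, hun⟩
      refine ⟨?_, ?_, ?_, ?_⟩
      · intro e he
        obtain ⟨e0, he0, rfl⟩ := Finset.mem_image.mp he
        exact (hedge e0).mpr (hE he0)
      · intro e he f hf hef v hve hvf
        obtain ⟨e0, he0, rfl⟩ := Finset.mem_image.mp (Finset.mem_coe.mp he)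
        obtain ⟨f0, hf0, rfl⟩ := Finset.mem_image.mp (Finset.mem_coe.mp hf)
        obtain ⟨u, hu, rfl⟩ := Sym2.mem_map.mp hve
        obtain ⟨u', hu', huu⟩ := Sym2.mem_map.mp hvf
        have huu' : u' = u := hψ huu
        exact hpw (Finset.mem_coe.mpr he0) (Finset.mem_coe.mpr hf0)
          (fun hh => hef (congrArg mψ hh)) u hu (huu' ▸ hu')
      · intro e he
        obtain ⟨e0, he0, rfl⟩ := Finset.mem_image.mp he
        rw [hcolM e0 he0]
        exact hcX _ he0
      · intro x hx
        obtain ⟨e, ⟨he, hec⟩, heu⟩ := hun x hx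
        refine ⟨mψ e, ⟨Finset.mem_image_of_mem _ he, by rw [hcolM e he]; exact hec⟩, ?_⟩
        rintro f ⟨hf, hfc⟩
        obtain ⟨f0, hf0, rfl⟩ := Finset.mem_image.mp hf
        rw [heu f0 ⟨hf0, by rw [← hcolM f0 hf0]; exact hfc⟩]
  -- the bijection
  symm
  apply Finset.card_bij (fun M _ => M.image mψ)
  · intro M hM
    rw [Finset.mem_filter] at hM ⊢
    obtain ⟨-, hPk, hu⟩ := hM
    refine ⟨Finset.mem_univ _, (hP M hPk.1).mpr hPk, ?_⟩
    rw [hused, hu]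
    exact (himg univ).mpr rfl
  · intro M hM M' hM' h
    exact Finset.image_injective hmψ h
  · intro M' hM'
    rw [Finset.mem_filter] at hM'
    obtain ⟨-, hPn, hu⟩ := hM'
    have hEn := hPn.1
    have hmr : ∀ (j : Fin k) (b b' : β), mψ s(Sum.inr (j, b), Sum.inr (j, b'))
        = s(Sum.inr ((σ j : Fin n), b), Sum.inr ((σ j : Fin n), b')) := fun _ _ _ => rfl
    set M : Finset (Sym2 (α ⊕ Fin k × β)) := univ.filter (fun e => mψ e ∈ M') with hMdef
    have himage : M.image mψ = M' := by
      apply Finset.Subset.antisymm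
      · intro f hf
        obtain ⟨e, he, rfl⟩ := Finset.mem_image.mp hf
        exact (Finset.mem_filter.mp he).2
      · intro f hf
        have hfe := hEn (Finset.mem_coe.mpr hf)
        rcases (edge_iff A B n f).mp hfe with ⟨a, a', -, rfl⟩ | ⟨i, b, b', -, rfl⟩
        · refine Finset.mem_image.mpr ⟨s(Sum.inl a, Sum.inl a'), ?_, rfl⟩
          exact Finset.mem_filter.mpr ⟨Finset.mem_univ _, hf⟩
        · have hiT : i ∈ T := by
            rw [← hu]
            exact mem_usedF.mpr ⟨_, hf, b, Sym2.mem_mk_left _ _⟩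
          have hsimp : (σ (σ.symm ⟨i, hiT⟩) : Fin n) = i := by simp
          refine Finset.mem_image.mpr
            ⟨s(Sum.inr (σ.symm ⟨i, hiT⟩, b), Sum.inr (σ.symm ⟨i, hiT⟩, b')), ?_, ?_⟩
          · refine Finset.mem_filter.mpr ⟨Finset.mem_univ _, ?_⟩
            rw [hmr, hsimp]
            exact hf
          · rw [hmr, hsimp]
    have hEk : (↑M : Set _) ⊆ (unionGraph A B k).edgeSet := by
      intro e he
      have hmem : mψ e ∈ M' := (Finset.mem_filter.mp (Finset.mem_coe.mp he)).2
      exact (hedge e).mp (hEn (Finset.mem_coe.mpr hmem))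
    refine ⟨M, Finset.mem_filter.mpr ⟨Finset.mem_univ _, (hP M hEk).mp ?_, ?_⟩, himage⟩
    · rw [himage]
      exact hPn
    · have hh := hused M
      rw [himage, hu] at hh
      exact (himg _).mp hh.symm

lemma count_eq (n : ℕ) (c : Sym2 (α ⊕ Fin n × β) → Δ)
    (hc1 : ∀ a a', c s(Sum.inl a, Sum.inl a') = cA s(a, a'))
    (hc2 : ∀ (i : Fin n) (b b'), c s(Sum.inr (i, b), Sum.inr (i, b')) = cB s(b, b')) :
    colorfulMatchingCount (unionGraph A B n) c X =
      ∑ j ∈ range (X.card + 1), n.choose j * g cA cB A B X j := by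
  classical
  have hstep1 : colorfulMatchingCount (unionGraph A B n) c X =
      (univ.filter fun M => P A B X n c M).card := by
    rw [colorfulMatchingCount, ← Set.ncard_coe_finset]
    congr 1
    ext M
    simp only [Set.mem_setOf_eq, Finset.coe_filter, Finset.mem_univ, true_and]
    exact Iff.rfl
  rw [hstep1,
    Finset.card_eq_sum_card_fiberwise
      (f := usedF n) (t := (univ : Finset (Fin n)).powerset)
      (fun M _ => Finset.mem_powerset.mpr (Finset.subset_univ _))]
  have hstep2 : ∀ T ∈ (univ : Finset (Fin n)).powerset,
      ((univ.filter fun M => P A B X n c M).filter fun M => usedF n M = T).card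
        = g cA cB A B X T.card := by
    intro T _
    rw [Finset.filter_filter]
    exact card_fiber cA cB A B X n T.card c (canon cA cB T.card) hc1 hc2
      (canon_inl cA cB _) (canon_inr cA cB _) T rfl
  rw [Finset.sum_congr rfl hstep2, Finset.sum_powerset]
  have hstep3 : ∀ j ∈ range ((univ : Finset (Fin n)).card + 1),
      ∑ T ∈ Finset.powersetCard j (univ : Finset (Fin n)), g cA cB A B X T.card
        = n.choose j * g cA cB A B X j := by
    intro j _
    rw [Finset.sum_congr rfl (fun T hT => by
      rw [(Finset.mem_powersetCard.mp hT).2]), Finset.sum_const, smul_eq_mul,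
      Finset.card_powersetCard, Finset.card_univ, Fintype.card_fin]
  rw [Finset.sum_congr rfl hstep3]
  have hrange : (univ : Finset (Fin n)).card + 1 = n + 1 := by
    rw [Finset.card_univ, Fintype.card_fin]
  rw [hrange]
  -- change the summation range
  have h1 : ∑ j ∈ range (n + 1), n.choose j * g cA cB A B X j
      = ∑ j ∈ range (n + X.card + 1), n.choose j * g cA cB A B X j := by
    apply Finset.sum_subset (Finset.range_subset_range.mpr (by omega))
    intro j _ hj
    rw [Finset.mem_range, not_lt] at hj
    rw [Nat.choose_eq_zero_of_lt (by omega), Nat.zero_mul]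
  have h2 : ∑ j ∈ range (X.card + 1), n.choose j * g cA cB A B X j
      = ∑ j ∈ range (n + X.card + 1), n.choose j * g cA cB A B X j := by
    apply Finset.sum_subset (Finset.range_subset_range.mpr (by omega))
    intro j _ hj
    rw [Finset.mem_range, not_lt] at hj
    rw [g_eq_zero cA cB A B X (by omega), Nat.mul_zero]
  rw [h1, ← h2]

end CMAux

/-- let `A`, `B` be edge-colorful edge-colored graphs with colors in a finite
set `Δ`. Then for every `X ⊆ Δ`, the number of `X`-colorful matchings in `A + n·B`
is a polynomial in `n` of degree at most `|X|`. (The edge coloring of `A + n·B` is any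
coloring agreeing with that of `A` on the copy of `A` and with that of `B` on each copy
of `B`.) -/
theorem colorful_matchings_polynomial {α β Δ : Type*} [Fintype α] [Fintype β] [Fintype Δ]
    (A : SimpleGraph α) (B : SimpleGraph β) (cA : Sym2 α → Δ) (cB : Sym2 β → Δ)
    (hcA : Set.InjOn cA A.edgeSet) (hcB : Set.InjOn cB B.edgeSet) (X : Finset Δ) :
    ∃ p : Polynomial ℚ, p.natDegree ≤ X.card ∧
      ∀ (n : ℕ) (c : Sym2 (α ⊕ Fin n × β) → Δ),
        (∀ a a' : α, c s(Sum.inl a, Sum.inl a') = cA s(a, a')) →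
        (∀ (i : Fin n) (b b' : β),
          c s(Sum.inr (i, b), Sum.inr (i, b')) = cB s(b, b')) →
        (colorfulMatchingCount (unionGraph A B n) c X : ℚ) = p.eval (n : ℚ) := by
  classical
  refine ⟨∑ j ∈ Finset.range (X.card + 1),
      Polynomial.C ((CMAux.g cA cB A B X j : ℚ) / (j.factorial : ℚ)) * descPochhammer ℚ j,
    ?_, ?_⟩
  · apply Polynomial.natDegree_sum_le_of_forall_le
    intro j hj
    refine (Polynomial.natDegree_C_mul_le _ _).trans ?_
    rw [descPochhammer_natDegree]
    exact Nat.lt_succ_iff.mp (Finset.mem_range.mp hj)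
  · intro n c hc1 hc2
    rw [CMAux.count_eq cA cB A B X n c hc1 hc2]
    rw [Polynomial.eval_finset_sum]
    push_cast
    apply Finset.sum_congr rfl
    intro j _
    rw [Polynomial.eval_mul, Polynomial.eval_C, descPochhammer_eval_eq_descFactorial,
      Nat.descFactorial_eq_factorial_mul_choose]
    have hj : (j.factorial : ℚ) ≠ 0 := Nat.cast_ne_zero.mpr j.factorial_ne_zero
    push_cast
    field_simp
end

section
/- Let H be a graph, M an induced k-matching in H, and C = V(H) \ V(M). Suppose every vertex of C is adjacent to at most one vertex of V(M). Then for every C' ⊆ V(H) and every isomorphism f from H[C] to H[C'] such that (C1) H \ C' has no isolated vertex, (C2) H \ C' is bipartite, and (C3) f maps ∂_H(C) onto ∂_H(C'), the graph H \ C' is a k-matching (i.e., isomorphic to k disjoint edges). -/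
/-- `∂_G(C)`: the vertices of `C` having a neighbor outside `C`. -/
def Boundary {V : Type*} (G : SimpleGraph V) (C : Set V) : Set V :=
  {v | v ∈ C ∧ ∃ u ∉ C, G.Adj v u}

open Classical in
/-- The finset of elements of a set, with a fixed classical instance everywhere. -/
noncomputable def tset {V : Type*} [Fintype V] (A : Set V) : Finset V :=
  Finset.univ.filter (fun v => v ∈ A)

open Classical in
lemma mem_tset {V : Type*} [Fintype V] {A : Set V} {v : V} : v ∈ tset A ↔ v ∈ A := by
  simp [tset]

lemma tset_card {V : Type*} [Fintype V] (A : Set V) : (tset A).card = A.ncard := by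
  classical
  rw [Set.ncard_eq_toFinset_card']
  congr 1
  ext v
  rw [mem_tset, Set.mem_toFinset]

open Classical in
/-- Ordered adjacent pairs with first coordinate in `A`, second in `B`. -/
noncomputable def pf {V : Type*} [Fintype V] (H : SimpleGraph V) (A B : Set V) :
    Finset (V × V) :=
  Finset.univ.filter (fun p => p.1 ∈ A ∧ p.2 ∈ B ∧ H.Adj p.1 p.2)

open Classical in
lemma mem_pf {V : Type*} [Fintype V] {H : SimpleGraph V} {A B : Set V} {p : V × V} :
    p ∈ pf H A B ↔ p.1 ∈ A ∧ p.2 ∈ B ∧ H.Adj p.1 p.2 := by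
  simp [pf]

open Classical in
lemma pf_split_right {V : Type*} [Fintype V] (H : SimpleGraph V) (A B : Set V) :
    (pf H A B).card + (pf H A Bᶜ).card = (pf H A Set.univ).card := by
  classical
  have h1 : pf H A B = (pf H A Set.univ).filter (fun p => p.2 ∈ B) := by
    ext p; simp only [mem_pf, Finset.mem_filter, Set.mem_univ]; tauto
  have h2 : pf H A Bᶜ = (pf H A Set.univ).filter (fun p => ¬ p.2 ∈ B) := by
    ext p; simp only [mem_pf, Finset.mem_filter, Set.mem_univ, Set.mem_compl_iff]; tauto
  rw [h1, h2]
  exact Finset.card_filter_add_card_filter_not _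

open Classical in
lemma pf_split_left {V : Type*} [Fintype V] (H : SimpleGraph V) (A : Set V) :
    (pf H A Set.univ).card + (pf H Aᶜ Set.univ).card = (pf H Set.univ Set.univ).card := by
  classical
  have h1 : pf H A Set.univ = (pf H Set.univ Set.univ).filter (fun p => p.1 ∈ A) := by
    ext p; simp only [mem_pf, Finset.mem_filter, Set.mem_univ]; tauto
  have h2 : pf H Aᶜ Set.univ = (pf H Set.univ Set.univ).filter (fun p => ¬ p.1 ∈ A) := by
    ext p; simp only [mem_pf, Finset.mem_filter, Set.mem_univ, Set.mem_compl_iff]; tauto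
  rw [h1, h2]
  exact Finset.card_filter_add_card_filter_not _

lemma pf_swap {V : Type*} [Fintype V] (H : SimpleGraph V) (A B : Set V) :
    (pf H A B).card = (pf H B A).card := by
  apply Finset.card_nbij Prod.swap
  · intro p hp
    rw [Finset.mem_coe, mem_pf] at hp ⊢
    exact ⟨hp.2.1, hp.1, hp.2.2.symm⟩
  · exact fun p _ q _ h => Prod.swap_injective h
  · intro p hp
    refine ⟨p.swap, ?_, Prod.swap_swap p⟩
    rw [Finset.mem_coe, mem_pf]
    rw [Finset.mem_coe, mem_pf] at hp
    exact ⟨hp.2.1, hp.1, hp.2.2.symm⟩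

open Classical in
lemma msupport_ncard {V : Type*} [Fintype V] {H : SimpleGraph V} {M : Finset (Sym2 V)}
    (hM : IsMatching' H M) : (MSupport M).ncard = 2 * M.card := by
  classical
  rw [Set.ncard_eq_toFinset_card']
  have key : (MSupport M).toFinset = M.biUnion (fun e => {x | x ∈ e}.toFinset) := by
    ext v
    rw [Set.mem_toFinset]
    simp [MSupport, Set.mem_toFinset, Finset.mem_biUnion]
  rw [key, Finset.card_biUnion]
  · rw [Finset.sum_congr rfl (g := fun _ => 2), Finset.sum_const, smul_eq_mul, mul_comm]
    intro e he
    have hd : ¬ e.IsDiag := by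
      have := hM.1 he
      exact SimpleGraph.not_isDiag_of_mem_edgeSet H this
    induction e with
    | _ a b =>
      have hab : a ≠ b := by simpa [Sym2.mk_isDiag_iff] using hd
      have : {x | x ∈ s(a, b)} = ({a, b} : Set V) := by
        ext x; simp [Sym2.mem_iff]
      rw [← Set.ncard_eq_toFinset_card', this, Set.ncard_pair hab]
  · intro e1 h1 e2 h2 hne
    rw [Function.onFun, Finset.disjoint_left]
    intro v hv1 hv2
    rw [Set.mem_toFinset, Set.mem_setOf_eq] at hv1 hv2
    exact hM.2 h1 h2 hne v hv1 hv2

open Classical in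
lemma pf_support_card {V : Type*} [Fintype V] {H : SimpleGraph V} {M : Finset (Sym2 V)}
    (hM : IsInducedMatching H M) :
    (pf H (MSupport M) (MSupport M)).card = 2 * M.card := by
  classical
  rw [Finset.card_eq_sum_card_fiberwise (f := fun p => s(p.1, p.2)) (t := M) ?hmem]
  case hmem =>
    intro p hp
    rw [Finset.mem_coe, mem_pf] at hp
    refine hM.2 _ (H.mem_edgeSet.mpr hp.2.2) ?_
    intro v hv
    rw [Sym2.mem_iff] at hv
    rcases hv with rfl | rfl
    · exact hp.1
    · exact hp.2.1
  · rw [Finset.sum_congr rfl (g := fun _ => 2), Finset.sum_const, smul_eq_mul, mul_comm]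
    intro e he
    induction e with
    | _ a b =>
      have hadj : H.Adj a b := H.mem_edgeSet.mp (hM.1.1 he)
      have hab : a ≠ b := hadj.ne
      have haS : a ∈ MSupport M := ⟨s(a, b), he, Sym2.mem_mk_left a b⟩
      have hbS : b ∈ MSupport M := ⟨s(a, b), he, Sym2.mem_mk_right a b⟩
      have key : (pf H (MSupport M) (MSupport M)).filter (fun p => s(p.1, p.2) = s(a, b))
          = {(a, b), (b, a)} := by
        ext ⟨x, y⟩
        simp only [Finset.mem_filter, mem_pf, Finset.mem_insert, Finset.mem_singleton,
          Prod.mk.injEq, Sym2.eq_iff]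
        constructor
        · rintro ⟨-, (⟨rfl, rfl⟩ | ⟨rfl, rfl⟩)⟩
          · exact Or.inl ⟨rfl, rfl⟩
          · exact Or.inr ⟨rfl, rfl⟩
        · rintro (⟨rfl, rfl⟩ | ⟨rfl, rfl⟩)
          · exact ⟨⟨haS, hbS, hadj⟩, Or.inl ⟨rfl, rfl⟩⟩
          · exact ⟨⟨hbS, haS, hadj.symm⟩, Or.inr ⟨rfl, rfl⟩⟩
      rw [key]
      rw [Finset.card_insert_of_notMem (by simp [hab]), Finset.card_singleton]

/-- let `M` be an induced `k`-matching in `H`, `C = V(H) \ V(M)`, and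
suppose every vertex of `C` is adjacent to at most one vertex of `V(M)`. Then for every
`C' ⊆ V(H)` and isomorphism `f : H[C] ≅ H[C']` such that (C1) `H \ C'` has no isolated
vertex, (C2) `H \ C'` is bipartite, and (C3) `f` maps `∂(C)` onto `∂(C')`, the graph
`H \ C'` is a `k`-matching: it has `2k` vertices and every vertex of it has exactly one
neighbor inside it. -/
theorem nocommon_matching_gadget {V : Type*} [Fintype V] (H : SimpleGraph V) (k : ℕ)
    (M : Finset (Sym2 V)) (hM : IsInducedMatching H M) (hk : M.card = k)
    (hcommon : ∀ v : V, v ∉ MSupport M →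
      Set.Subsingleton {u | u ∈ MSupport M ∧ H.Adj v u})
    (C' : Set V) (f : H.induce (MSupport M)ᶜ ≃g H.induce C')
    (hC1 : ∀ v ∉ C', ∃ u ∉ C', H.Adj v u)
    (hC2 : (H.induce C'ᶜ).Colorable 2)
    (hC3 : ∀ v : ((MSupport M)ᶜ : Set V),
      (v : V) ∈ Boundary H (MSupport M)ᶜ ↔ (f v : V) ∈ Boundary H C') :
    (C'ᶜ : Set V).ncard = 2 * k ∧ ∀ v ∉ C', ∃! u, u ∉ C' ∧ H.Adj v u := by
  classical
  -- cardinality of the support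
  have hcardS : (MSupport M).ncard = 2 * k := by rw [msupport_ncard hM.1, hk]
  -- |C'| = |(MSupport M)ᶜ|
  have hCC' : ((MSupport M)ᶜ : Set V).ncard = C'.ncard := by
    rw [← Nat.card_coe_set_eq, ← Nat.card_coe_set_eq]
    exact Nat.card_congr f.toEquiv
  have hcomp1 := Set.ncard_add_ncard_compl (MSupport M)
  have hcomp2 := Set.ncard_add_ncard_compl C'
  have hDcard : (C'ᶜ : Set V).ncard = 2 * k := by omega
  -- adjacency transfer along f
  have hadjf : ∀ u v : ((MSupport M)ᶜ : Set V),
      H.Adj (f u : V) (f v : V) ↔ H.Adj (u : V) (v : V) := by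
    intro u v
    simpa using f.map_adj_iff (v := u) (w := v)
  -- pairs within C equal pairs within C'
  have hPcc : (pf H (MSupport M)ᶜ (MSupport M)ᶜ).card = (pf H C' C').card := by
    apply Finset.card_bij
      (i := fun p hp => ((f ⟨p.1, (mem_pf.mp hp).1⟩ : V), (f ⟨p.2, (mem_pf.mp hp).2.1⟩ : V)))
    · intro p hp
      rw [mem_pf]
      exact ⟨(f _).2, (f _).2, (hadjf _ _).mpr (mem_pf.mp hp).2.2⟩
    · intro p hp q hq h
      obtain ⟨h1', h2'⟩ := Prod.mk.injEq .. ▸ h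
      have e1 : p.1 = q.1 := congrArg Subtype.val (f.toEquiv.injective (Subtype.ext h1'))
      have e2 : p.2 = q.2 := congrArg Subtype.val (f.toEquiv.injective (Subtype.ext h2'))
      exact Prod.ext e1 e2
    · intro q hq
      rw [mem_pf] at hq
      refine ⟨((f.symm ⟨q.1, hq.1⟩ : V), (f.symm ⟨q.2, hq.2.1⟩ : V)), ?_, ?_⟩
      · rw [mem_pf]
        refine ⟨(f.symm _).2, (f.symm _).2, ?_⟩
        have := (hadjf (f.symm ⟨q.1, hq.1⟩) (f.symm ⟨q.2, hq.2.1⟩)).mp ?_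
        · exact this
        · rw [f.apply_symm_apply, f.apply_symm_apply]
          exact hq.2.2
      · simp only [Subtype.coe_eta, f.apply_symm_apply]
  -- pairs from C to MSupport count the boundary of C
  have hPcs : (pf H (MSupport M)ᶜ (MSupport M)).card
      = (tset (Boundary H (MSupport M)ᶜ)).card := by
    apply Finset.card_nbij Prod.fst
    · intro p hp
      rw [Finset.mem_coe, mem_pf] at hp
      rw [Finset.mem_coe, mem_tset]
      exact ⟨hp.1, p.2, by simpa using hp.2.1, hp.2.2⟩
    · intro p hp q hq h
      rw [Finset.mem_coe, mem_pf] at hp hq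
      have hsub := hcommon p.1 (by simpa using hp.1)
      have h2' : p.2 = q.2 := hsub ⟨hp.2.1, hp.2.2⟩ ⟨hq.2.1, h ▸ hq.2.2⟩
      exact Prod.ext h h2'
    · intro v hv
      rw [Finset.mem_coe, mem_tset] at hv
      obtain ⟨hvC, u, huS, hadj⟩ := hv
      refine ⟨(v, u), ?_, rfl⟩
      rw [Finset.mem_coe, mem_pf]
      exact ⟨hvC, by simpa using huS, hadj⟩
  -- boundaries correspond under f
  have hBB' : (tset (Boundary H (MSupport M)ᶜ)).card = (tset (Boundary H C')).card := by
    apply Finset.card_bij (i := fun v hv => (f ⟨v, (mem_tset.mp hv).1⟩ : V))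
    · intro v hv
      rw [mem_tset]
      exact (hC3 _).mp (mem_tset.mp hv)
    · intro a ha b hb h
      exact congrArg Subtype.val (f.toEquiv.injective (Subtype.ext h))
    · intro w hw
      rw [mem_tset] at hw
      have hwC' : w ∈ C' := hw.1
      have hmem : (f.symm ⟨w, hwC'⟩ : V) ∈ tset (Boundary H (MSupport M)ᶜ) := by
        rw [mem_tset]
        have := hC3 (f.symm ⟨w, hwC'⟩)
        rw [f.apply_symm_apply] at this
        exact this.mpr hw
      refine ⟨(f.symm ⟨w, hwC'⟩ : V), hmem, ?_⟩
      simp only [Subtype.coe_eta, f.apply_symm_apply]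
  -- neighbor choice function outside C'
  set g : V → V := fun v => if h : ∃ u, u ∉ C' ∧ H.Adj v u then h.choose else v with hgdef
  have hgspec : ∀ v, (∃ u, u ∉ C' ∧ H.Adj v u) → (g v ∉ C' ∧ H.Adj v (g v)) := by
    intro v h
    simp only [hgdef, dif_pos h]
    exact h.choose_spec
  -- boundary of C' injects into pairs from C' to C'ᶜ
  have hB'le : (tset (Boundary H C')).card ≤ (pf H C' C'ᶜ).card := by
    apply Finset.card_le_card_of_injOn (fun v => (v, g v))
    · intro v hv
      rw [Finset.mem_coe, mem_tset] at hv
      obtain ⟨hvC', u, hu, hadj⟩ := hv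
      have hg := hgspec v ⟨u, hu, hadj⟩
      rw [Finset.mem_coe, mem_pf]
      exact ⟨hvC', hg.1, hg.2⟩
    · intro a _ b _ h
      simpa using congrArg Prod.fst h
  -- C'ᶜ injects into pairs inside C'ᶜ
  have hDle : (tset (C'ᶜ : Set V)).card ≤ (pf H C'ᶜ C'ᶜ).card := by
    apply Finset.card_le_card_of_injOn (fun v => (v, g v))
    · intro v hv
      rw [Finset.mem_coe, mem_tset, Set.mem_compl_iff] at hv
      obtain ⟨u, hu, hadj⟩ := hC1 v hv
      have hg := hgspec v ⟨u, hu, hadj⟩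
      rw [Finset.mem_coe, mem_pf]
      exact ⟨hv, hg.1, hg.2⟩
    · intro a _ b _ h
      simpa using congrArg Prod.fst h
  have hDtset : (tset (C'ᶜ : Set V)).card = 2 * k := by rw [tset_card]; exact hDcard
  -- the two ways of splitting all adjacent pairs
  have t1 := pf_split_left H (MSupport M)
  have t2 := pf_split_right H (MSupport M) (MSupport M)
  have t3 := pf_split_right H (MSupport M)ᶜ (MSupport M)
  have t1' := pf_split_left H C'
  have t2' := pf_split_right H C' C'
  have t3' := pf_split_right H C'ᶜ C'
  have sw1 : (pf H (MSupport M) (MSupport M)ᶜ).card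
      = (pf H (MSupport M)ᶜ (MSupport M)).card := pf_swap H (MSupport M) (MSupport M)ᶜ
  have sw2 : (pf H C' C'ᶜ).card = (pf H C'ᶜ C').card := pf_swap H C' C'ᶜ
  have hPss : (pf H (MSupport M) (MSupport M)).card = 2 * k := by
    rw [pf_support_card hM, hk]
  -- hence the number of adjacent pairs inside C'ᶜ is exactly 2 * k
  have hPdd : (pf H C'ᶜ C'ᶜ).card = 2 * k := by omega
  -- each vertex of C'ᶜ has exactly one neighbor in C'ᶜ
  have hsum : (pf H C'ᶜ C'ᶜ).card
      = ∑ v ∈ tset (C'ᶜ : Set V), ((tset (C'ᶜ : Set V)).filter (fun u => H.Adj v u)).card := by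
    rw [Finset.card_eq_sum_card_fiberwise (f := Prod.fst) (t := tset (C'ᶜ : Set V))
      (fun p hp => mem_tset.mpr (mem_pf.mp hp).1)]
    apply Finset.sum_congr rfl
    intro v hv
    have key : (pf H C'ᶜ C'ᶜ).filter (fun p => p.1 = v)
        = ((tset (C'ᶜ : Set V)).filter (fun u => H.Adj v u)).image (fun u => (v, u)) := by
      ext ⟨x, y⟩
      simp only [Finset.mem_filter, mem_pf, Finset.mem_image, mem_tset]
      constructor
      · rintro ⟨⟨hx, hy, hadj⟩, rfl⟩
        exact ⟨y, ⟨hy, hadj⟩, rfl⟩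
      · rintro ⟨u, ⟨hu, hadj⟩, h⟩
        obtain ⟨rfl, rfl⟩ := Prod.mk.injEq .. ▸ h
        exact ⟨⟨mem_tset.mp hv, hu, hadj⟩, rfl⟩
    rw [key, Finset.card_image_of_injective _ (fun a b h => by simpa using h)]
  have hle1 : ∀ v ∈ tset (C'ᶜ : Set V),
      1 ≤ ((tset (C'ᶜ : Set V)).filter (fun u => H.Adj v u)).card := by
    intro v hv
    rw [mem_tset, Set.mem_compl_iff] at hv
    obtain ⟨u, hu, hadj⟩ := hC1 v hv
    exact Finset.card_pos.mpr ⟨u, Finset.mem_filter.mpr ⟨mem_tset.mpr hu, hadj⟩⟩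
  have hsum1 : ∑ v ∈ tset (C'ᶜ : Set V), 1
      = ∑ v ∈ tset (C'ᶜ : Set V), ((tset (C'ᶜ : Set V)).filter (fun u => H.Adj v u)).card := by
    rw [← hsum, hPdd, Finset.sum_const, smul_eq_mul, mul_one, hDtset]
  have hdeg1 : ∀ v ∈ tset (C'ᶜ : Set V),
      ((tset (C'ᶜ : Set V)).filter (fun u => H.Adj v u)).card = 1 := by
    intro v hv
    exact ((Finset.sum_eq_sum_iff_of_le hle1).mp hsum1 v hv).symm
  constructor
  · exact hDcard
  · intro v hv
    have hvD : v ∈ tset (C'ᶜ : Set V) := mem_tset.mpr hv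
    obtain ⟨u, hu⟩ := Finset.card_eq_one.mp (hdeg1 v hvD)
    have hmem : u ∈ (tset (C'ᶜ : Set V)).filter (fun u => H.Adj v u) := by
      rw [hu]; exact Finset.mem_singleton_self u
    rw [Finset.mem_filter, mem_tset, Set.mem_compl_iff] at hmem
    refine ⟨u, ⟨hmem.1, hmem.2⟩, ?_⟩
    intro u' hu'
    have : u' ∈ (tset (C'ᶜ : Set V)).filter (fun u => H.Adj v u) := by
      rw [Finset.mem_filter, mem_tset, Set.mem_compl_iff]
      exact ⟨hu'.1, hu'.2⟩
    rw [hu] at this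
    exact Finset.mem_singleton.mp this
end

section
/- Let 𝓒 be a finite multiset of at least (1 + z·r)·k subsets of a universe U, each of size at most r. Then there is a sub-multiset 𝓒' ⊆ 𝓒 of size exactly k such that for every x ∈ U, either at most one member of 𝓒' contains x, or at least z members of 𝓒 \ 𝓒' contain x. -/
theorem multiset_selection_aux {U : Type*} [DecidableEq U] (z r : ℕ) :
    ∀ (k : ℕ) (𝓒 : Multiset (Finset U)), (1 + z * r) * k ≤ Multiset.card 𝓒 →
    (∀ S ∈ 𝓒, Finset.card S ≤ r) →
    ∃ 𝓒' ≤ 𝓒, Multiset.card 𝓒' = k ∧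
      ∀ x : U, Multiset.card (𝓒'.filter fun S => x ∈ S) ≤ 1 ∨
        z ≤ Multiset.card ((𝓒 - 𝓒').filter fun S => x ∈ S) := by
  intro k
  induction k with
  | zero =>
    intro 𝓒 _ _
    exact ⟨0, zero_le, rfl, fun x => Or.inl (by simp)⟩
  | succ k ih =>
    intro 𝓒 hcard hsize
    obtain ⟨S, hS⟩ : ∃ S, S ∈ 𝓒 := by
      apply Multiset.exists_mem_of_ne_zero
      intro h
      rw [h] at hcard
      simp only [Multiset.card_zero, Nat.le_zero, Nat.mul_eq_zero] at hcard
      omega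
    set 𝓒₀ := 𝓒.erase S with h𝓒₀
    have hcons : S ::ₘ 𝓒₀ = 𝓒 := Multiset.cons_erase hS
    set f : U → Multiset (Finset U) :=
      fun x => (((𝓒₀.filter (fun T => x ∈ T)).toList.take z : List (Finset U)) : Multiset (Finset U)) with hf
    have hfle : ∀ x, f x ≤ 𝓒₀.filter (fun T => x ∈ T) := by
      intro x
      rw [hf]
      calc ((((𝓒₀.filter (fun T => x ∈ T)).toList.take z : List (Finset U))) : Multiset (Finset U))
          ≤ ((𝓒₀.filter (fun T => x ∈ T)).toList : Multiset (Finset U)) := by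
            exact (List.take_sublist z _).subperm
        _ = 𝓒₀.filter (fun T => x ∈ T) := Multiset.coe_toList _
    have hfcard : ∀ x, Multiset.card (f x) = min z (Multiset.card (𝓒₀.filter (fun T => x ∈ T))) := by
      intro x
      rw [hf]
      simp [Multiset.coe_card, List.length_take]
    set D : Multiset (Finset U) := ∑ x ∈ S, f x with hD
    have hDcard : Multiset.card D ≤ z * r := by
      have hcs : ∀ (A : Finset U), Multiset.card (∑ x ∈ A, f x) = ∑ x ∈ A, Multiset.card (f x) := by
        intro A
        induction A using Finset.cons_induction with
        | empty => simp
        | cons a A ha ihA => simp [Finset.sum_cons, ihA]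
      rw [hD, hcs]
      calc ∑ x ∈ S, Multiset.card (f x) ≤ ∑ _x ∈ S, z := by
            apply Finset.sum_le_sum
            intro x _
            rw [hfcard]
            exact min_le_left _ _
        _ = S.card * z := by simp [Finset.sum_const, smul_eq_mul]
        _ ≤ r * z := Nat.mul_le_mul_right z (hsize S hS)
        _ = z * r := Nat.mul_comm r z
    have hDx : ∀ x ∈ S, f x ≤ D := by
      intro x hx
      exact Finset.single_le_sum (fun i _ => zero_le) hx
    set P := 𝓒₀ - D with hP
    have hP𝓒₀ : P ≤ 𝓒₀ := tsub_le_self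
    have hcard𝓒 : Multiset.card 𝓒 = Multiset.card 𝓒₀ + 1 := by
      rw [← hcons, Multiset.card_cons]
    have h𝓒₀split : Multiset.card 𝓒₀ ≤ Multiset.card D + Multiset.card P := by
      have h1 : 𝓒₀ ≤ D + P := le_tsub_add.trans (by rw [add_comm])
      have := Multiset.card_le_card h1
      rwa [Multiset.card_add] at this
    have hPcard : (1 + z * r) * k ≤ Multiset.card P := by
      have hexp : (1 + z * r) * (k + 1) = (1 + z * r) * k + z * r + 1 := by ring
      omega
    have hPsize : ∀ T ∈ P, Finset.card T ≤ r := by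
      intro T hT
      exact hsize T (Multiset.mem_of_le (hP𝓒₀.trans (Multiset.erase_le S 𝓒)) hT)
    obtain ⟨𝓒', h𝓒'P, hcardk, hprop⟩ := ih P hPcard hPsize
    have h𝓒'𝓒₀ : 𝓒' ≤ 𝓒₀ := h𝓒'P.trans hP𝓒₀
    refine ⟨S ::ₘ 𝓒', ?_, ?_, ?_⟩
    · rw [← hcons]
      exact Multiset.cons_le_cons S h𝓒'𝓒₀
    · rw [Multiset.card_cons, hcardk]
    · intro x
      have hsub : 𝓒 - (S ::ₘ 𝓒') = 𝓒₀ - 𝓒' := by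
        rw [← hcons, Multiset.sub_cons, Multiset.erase_cons_head]
      by_cases hx : x ∈ S
      · by_cases hz' : z ≤ Multiset.card (𝓒₀.filter (fun T => x ∈ T))
        · -- heavy: reserved z sets remain in 𝓒 - 𝓒'
          right
          rw [hsub]
          have h1 : 𝓒' ≤ 𝓒₀ - f x :=
            h𝓒'P.trans (tsub_le_tsub_left (hDx x hx) 𝓒₀)
          have h2 : f x ≤ 𝓒₀ - 𝓒' := by
            have hfx𝓒₀ : f x ≤ 𝓒₀ := (hfle x).trans (Multiset.filter_le _ _)
            calc f x = 𝓒₀ - (𝓒₀ - f x) := (tsub_tsub_cancel_of_le hfx𝓒₀).symm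
              _ ≤ 𝓒₀ - 𝓒' := tsub_le_tsub_left h1 𝓒₀
          have h3 : (f x).filter (fun T => x ∈ T) = f x := by
            rw [Multiset.filter_eq_self]
            intro T hT
            have := Multiset.mem_of_le (hfle x) hT
            exact (Multiset.mem_filter.1 this).2
          calc z = Multiset.card (f x) := by rw [hfcard, min_eq_left hz']
            _ = Multiset.card ((f x).filter (fun T => x ∈ T)) := by rw [h3]
            _ ≤ Multiset.card ((𝓒₀ - 𝓒').filter (fun T => x ∈ T)) :=
                Multiset.card_le_card (Multiset.filter_le_filter _ h2)
        · -- light: all sets containing x were removed from the pool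
          left
          have hfx : f x = 𝓒₀.filter (fun T => x ∈ T) := by
            apply Multiset.eq_of_le_of_card_le (hfle x)
            rw [hfcard]
            omega
          have h1 : 𝓒' ≤ 𝓒₀ - 𝓒₀.filter (fun T => x ∈ T) := by
            rw [← hfx]
            exact h𝓒'P.trans (tsub_le_tsub_left (hDx x hx) 𝓒₀)
          have h2 : 𝓒₀ - 𝓒₀.filter (fun T => x ∈ T) = 𝓒₀.filter (fun T => ¬ x ∈ T) := by
            exact Multiset.sub_filter_eq_filter_not _ 𝓒₀
          have h3 : 𝓒'.filter (fun T => x ∈ T) = 0 := by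
            have h4 : 𝓒'.filter (fun T => x ∈ T) ≤
                (𝓒₀.filter (fun T => ¬ x ∈ T)).filter (fun T => x ∈ T) :=
              Multiset.filter_le_filter _ (h1.trans_eq h2)
            have h5 : (𝓒₀.filter (fun T => ¬ x ∈ T)).filter (fun T => x ∈ T) = 0 := by
              rw [Multiset.filter_filter]
              apply Multiset.filter_eq_nil.2
              tauto
            exact le_antisymm (h4.trans_eq h5) zero_le
          rw [Multiset.filter_cons_of_pos (p := fun T => x ∈ T) _ hx, Multiset.card_cons, h3]
          simp
      · rcases hprop x with h | h
        · left
          rwa [Multiset.filter_cons_of_neg (p := fun T => x ∈ T) _ hx]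
        · right
          rw [hsub]
          refine h.trans (Multiset.card_le_card (Multiset.filter_le_filter _ ?_))
          exact tsub_le_tsub_right hP𝓒₀ 𝓒'
/-- if `𝓒` is a multiset of at least `(1 + z·r)·k` subsets of a universe
`U`, each of size at most `r`, then there is a sub-multiset `𝓒' ⊆ 𝓒` of size exactly `k`
such that for every `x ∈ U`, either at most one member of `𝓒'` contains `x`, or at least
`z` members of `𝓒 \ 𝓒'` contain `x`. -/
theorem multiset_selection {U : Type*} [DecidableEq U] (k z r : ℕ)
    (hk : 0 < k) (hz : 0 < z) (hr : 0 < r)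
    (𝓒 : Multiset (Finset U)) (hcard : (1 + z * r) * k ≤ Multiset.card 𝓒)
    (hsize : ∀ S ∈ 𝓒, Finset.card S ≤ r) :
    ∃ 𝓒' ≤ 𝓒, Multiset.card 𝓒' = k ∧
      ∀ x : U, Multiset.card (𝓒'.filter fun S => x ∈ S) ≤ 1 ∨
        z ≤ Multiset.card ((𝓒 - 𝓒').filter fun S => x ∈ S) := by
  exact multiset_selection_aux z r k 𝓒 hcard hsize
end

section
/- Let F be an induced matching in a graph H in which every subdivided star has at most L ≥ 1 leaves (ψ(H) ≤ L). For every x ≥ 2L+2 and y ≥ 1, there exist an induced matching F' ⊆ F with |F'| ≥ |F|/2 and an integer g with x ≤ g ≤ x + 4(2L+2)y such that no vertex in the neighborhood N(V(F')) has degree in H belonging to the interval {g, g+1, …, g+y−1}. -/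
lemma pick_lemma {V : Type*} [Fintype V] [DecidableEq V] (H : SimpleGraph V)
    [DecidableRel H.Adj] (u : V) :
    ∀ (n : ℕ) (A X : Finset V), A.card = n →
      (∀ a ∈ A, 2 * A.card + X.card ≤ H.degree a) →
      ∃ f : V → V, (∀ a ∈ A, H.Adj a (f a)) ∧
        (∀ a ∈ A, f a ≠ u ∧ f a ∉ A ∧ f a ∉ X) ∧ Set.InjOn f ↑A := by
  intro n
  induction n with
  | zero =>
    intro A X hA _
    rw [Finset.card_eq_zero] at hA
    subst hA
    exact ⟨id, by simp, by simp, by simp⟩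
  | succ n ih =>
    intro A X hA hdeg
    obtain ⟨a, ha⟩ : A.Nonempty := Finset.card_pos.mp (by omega)
    have hdega : 2 * A.card + X.card ≤ H.degree a := hdeg a ha
    have hb : (H.neighborFinset a \ insert u (A.erase a ∪ X)).Nonempty := by
      rw [← Finset.card_pos]
      have h1 : (insert u (A.erase a ∪ X)).card ≤ 1 + ((A.card - 1) + X.card) := by
        calc (insert u (A.erase a ∪ X)).card ≤ (A.erase a ∪ X).card + 1 :=
              Finset.card_insert_le _ _
          _ ≤ (A.erase a).card + X.card + 1 := by
              have := Finset.card_union_le (A.erase a) X; omega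
          _ = 1 + ((A.card - 1) + X.card) := by
              rw [Finset.card_erase_of_mem ha]; omega
      have h2 : (H.neighborFinset a).card = H.degree a := H.card_neighborFinset_eq_degree a
      have h3 := Finset.card_le_card_sdiff_add_card (s := H.neighborFinset a)
        (t := insert u (A.erase a ∪ X))
      omega
    obtain ⟨b, hbmem⟩ := hb
    rw [Finset.mem_sdiff, H.mem_neighborFinset] at hbmem
    obtain ⟨hab, hbavoid⟩ := hbmem
    have hbu : b ≠ u := fun h => hbavoid (by simp [h])
    have hbX : b ∉ X := fun h => hbavoid (by simp [h])
    have hbA : b ∉ A := fun h => hbavoid (by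
      simp only [Finset.mem_insert, Finset.mem_union, Finset.mem_erase]
      exact Or.inr (Or.inl ⟨(H.ne_of_adj hab).symm, h⟩))
    obtain ⟨f', hadj', havoid', hinj'⟩ := ih (A.erase a) (insert a (insert b X))
      (by rw [Finset.card_erase_of_mem ha, hA]; omega)
      (by
        intro a' ha'
        have hd := hdeg a' (Finset.mem_of_mem_erase ha')
        have h4 := Finset.card_insert_le a (insert b X)
        have h5 := Finset.card_insert_le b X
        have h6 : (A.erase a).card = n := by rw [Finset.card_erase_of_mem ha, hA]; omega
        omega)
    have hA' : ∀ a'' ∈ A, a'' ≠ a → a'' ∈ A.erase a :=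
      fun a'' h hne => Finset.mem_erase.mpr ⟨hne, h⟩
    refine ⟨Function.update f' a b, ?_, ?_, ?_⟩
    · intro a'' ha''
      rcases eq_or_ne a'' a with rfl | hne
      · simpa using hab
      · rw [Function.update_of_ne hne]
        exact hadj' a'' (hA' a'' ha'' hne)
    · intro a'' ha''
      rcases eq_or_ne a'' a with rfl | hne
      · simpa using ⟨hbu, hbA, hbX⟩
      · rw [Function.update_of_ne hne]
        obtain ⟨h1, h2, h3⟩ := havoid' a'' (hA' a'' ha'' hne)
        simp only [Finset.mem_insert, not_or] at h3
        refine ⟨h1, ?_, h3.2.2⟩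
        intro hmem
        exact h2 (Finset.mem_erase.mpr ⟨h3.1, hmem⟩)
    · intro p hp q hq hfe
      simp only [Finset.coe_insert, Set.mem_insert_iff, Finset.mem_coe] at hp hq
      have hfb : ∀ c ∈ A.erase a, f' c ≠ b := by
        intro c hc
        have := (havoid' c hc).2.2
        simp only [Finset.mem_insert, not_or] at this
        exact fun h => this.2.1 h
      rcases eq_or_ne p a with hpa | hpa <;> rcases eq_or_ne q a with hqa | hqa
      · exact hpa.trans hqa.symm
      · exfalso
        rw [hpa, Function.update_self, Function.update_of_ne hqa] at hfe
        exact hfb q (hA' q (by exact_mod_cast hq) hqa) hfe.symm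
      · exfalso
        rw [hqa, Function.update_self, Function.update_of_ne hpa] at hfe
        exact hfb p (hA' p (by exact_mod_cast hp) hpa) hfe
      · rw [Function.update_of_ne hpa, Function.update_of_ne hqa] at hfe
        exact hinj' (Finset.mem_coe.mpr (hA' p (by exact_mod_cast hp) hpa))
          (Finset.mem_coe.mpr (hA' q (by exact_mod_cast hq) hqa)) hfe

lemma few_high {V : Type*} [Fintype V] [DecidableEq V] (H : SimpleGraph V)
    [DecidableRel H.Adj] (L : ℕ)
    (hpsi : ∀ (v : V) (ℓ : ℕ), HasSubdividedStar H v ℓ → ℓ ≤ L) (u : V) :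
    ((H.neighborFinset u).filter (fun a => 2 * L + 2 ≤ H.degree a)).card ≤ L := by
  by_contra hcon
  push_neg at hcon
  obtain ⟨A, hAsub, hAcard⟩ := Finset.exists_subset_card_eq (Nat.succ_le_of_lt hcon)
  obtain ⟨f, hadj, havoid, hinj⟩ := pick_lemma H u (L + 1) A ∅ hAcard (by
    intro a ha
    have hm := Finset.mem_filter.mp (hAsub ha)
    simp only [Finset.card_empty, hAcard]
    omega)
  have hstar : HasSubdividedStar H u (L + 1) := by
    have e : { y // y ∈ A } ≃ Fin (L + 1) := A.equivFin.trans (finCongr hAcard)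
    have hmem : ∀ i : Fin (L + 1), ((e.symm i : V)) ∈ A := fun i => (e.symm i).2
    have hadju : ∀ i : Fin (L + 1), H.Adj u (e.symm i : V) := by
      intro i
      have := Finset.mem_filter.mp (hAsub (hmem i))
      exact (H.mem_neighborFinset u _).mp this.1
    refine ⟨fun i => (e.symm i : V), fun i => f (e.symm i : V), hadju,
      fun i => hadj _ (hmem i), fun i => (hadju i).ne', fun i => (havoid _ (hmem i)).1,
      ?_, ?_, ?_⟩
    · intro i j h
      exact e.symm.injective (Subtype.ext h)
    · intro i j h
      have := hinj (Finset.mem_coe.mpr (hmem i)) (Finset.mem_coe.mpr (hmem j)) h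
      exact e.symm.injective (Subtype.ext this)
    · intro i j h
      simp only at h
      exact (havoid _ (hmem j)).2.1 (h ▸ hmem i)
  have := hpsi u (L + 1) hstar
  omega

/-- let `F` be an induced matching in a graph `H` with `ψ(H) ≤ L`. For
every `x ≥ 2L+2` and `y ≥ 1`, there is an induced matching `F' ⊆ F` with `|F'| ≥ |F|/2`
and a `g` with `x ≤ g ≤ x + 4(2L+2)y` such that no vertex in the neighborhood of `V(F')`
has degree in `{g, …, g+y−1}`. -/
theorem degree_gap {V : Type*} [Fintype V] (H : SimpleGraph V) [DecidableRel H.Adj]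
    (L : ℕ) (hL : 1 ≤ L) (hpsi : ∀ (v : V) (ℓ : ℕ), HasSubdividedStar H v ℓ → ℓ ≤ L)
    (F : Finset (Sym2 V)) (hF : IsInducedMatching H F)
    (x y : ℕ) (hx : 2 * L + 2 ≤ x) (hy : 1 ≤ y) :
    ∃ F' ⊆ F, IsInducedMatching H F' ∧ F.card ≤ 2 * F'.card ∧
      ∃ g : ℕ, x ≤ g ∧ g ≤ x + 4 * (2 * L + 2) * y ∧
        ∀ v : V, (∃ e ∈ F', ∃ u, u ∈ e ∧ H.Adj v u) →
          ¬ (g ≤ H.degree v ∧ H.degree v ≤ g + y - 1) := by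
  classical
  set K := 4 * (2 * L + 2) with hK
  set P : ℕ → Sym2 V → Prop := fun k e => ∃ v : V, (∃ u, u ∈ e ∧ H.Adj v u) ∧
      x + k * y ≤ H.degree v ∧ H.degree v ≤ x + k * y + y - 1 with hP
  set Bad : ℕ → Finset (Sym2 V) := fun k => F.filter (P k) with hBad
  have key : ∀ e ∈ F, ((Finset.range K).filter (fun k => P k e)).card ≤ 2 * L := by
    intro e _
    induction e using Sym2.inductionOn with
    | hf u₁ u₂ =>
      set W := ((H.neighborFinset u₁ ∪ H.neighborFinset u₂).filter
        (fun v => 2 * L + 2 ≤ H.degree v)) with hW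
      have hWcard : W.card ≤ 2 * L := by
        have hsub : W ⊆ (H.neighborFinset u₁).filter (fun v => 2 * L + 2 ≤ H.degree v)
            ∪ (H.neighborFinset u₂).filter (fun v => 2 * L + 2 ≤ H.degree v) := by
          intro v hv
          rw [hW, Finset.mem_filter, Finset.mem_union] at hv
          rcases hv.1 with h | h
          · exact Finset.mem_union_left _ (Finset.mem_filter.mpr ⟨h, hv.2⟩)
          · exact Finset.mem_union_right _ (Finset.mem_filter.mpr ⟨h, hv.2⟩)
        calc W.card ≤ _ := Finset.card_le_card hsub
          _ ≤ _ + _ := Finset.card_union_le _ _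
          _ ≤ L + L := Nat.add_le_add (few_high H L hpsi u₁) (few_high H L hpsi u₂)
          _ = 2 * L := by ring
      refine le_trans (Finset.card_le_card_of_injOn
        (fun k => if h : P k s(u₁, u₂) then h.choose else u₁) ?_ ?_) hWcard
      · intro k hk
        rw [Finset.mem_coe, Finset.mem_filter] at hk
        obtain ⟨hk1, hk2⟩ := hk
        simp only [hk2, dif_pos]
        obtain ⟨⟨u', hu'e, hadj⟩, hd1, hd2⟩ := hk2.choose_spec
        rw [hW, Finset.mem_coe, Finset.mem_filter, Finset.mem_union]
        constructor
        · rw [Sym2.mem_iff] at hu'e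
          rcases hu'e with rfl | rfl
          · exact Or.inl ((H.mem_neighborFinset _ _).mpr hadj.symm)
          · exact Or.inr ((H.mem_neighborFinset _ _).mpr hadj.symm)
        · exact le_trans (le_trans hx (Nat.le_add_right x (k * y))) hd1
      · intro k hk k' hk' heq
        simp only [Finset.coe_filter, Set.mem_setOf_eq, Finset.mem_range] at hk hk'
        obtain ⟨hkK, hkP⟩ := hk
        obtain ⟨hk'K, hk'P⟩ := hk'
        simp only [dif_pos hkP, dif_pos hk'P] at heq
        obtain ⟨_, hd1, hd2⟩ := hkP.choose_spec
        obtain ⟨_, hd1', hd2'⟩ := hk'P.choose_spec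
        rw [heq] at hd1 hd2
        by_contra hne
        have hmul : ∀ i j : ℕ, i < j → i * y + y ≤ j * y := by
          intro i j hij
          calc i * y + y = (i + 1) * y := by ring
            _ ≤ j * y := Nat.mul_le_mul_right y hij
        rcases Nat.lt_or_ge k k' with h | h
        · have h1 := hmul k k' h
          obtain ⟨a1, ha1⟩ : ∃ t, k * y = t := ⟨_, rfl⟩
          obtain ⟨a2, ha2⟩ : ∃ t, k' * y = t := ⟨_, rfl⟩
          rw [ha1, ha2] at *
          omega
        · have h' : k' < k := by omega
          have h1 := hmul k' k h'
          obtain ⟨a1, ha1⟩ : ∃ t, k * y = t := ⟨_, rfl⟩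
          obtain ⟨a2, ha2⟩ : ∃ t, k' * y = t := ⟨_, rfl⟩
          rw [ha1, ha2] at *
          omega
  have hswap : ∑ k ∈ Finset.range K, (Bad k).card ≤ 2 * L * F.card := by
    have h1 : ∑ k ∈ Finset.range K, (Bad k).card
        = ∑ e ∈ F, ((Finset.range K).filter (fun k => P k e)).card := by
      simp only [hBad, Finset.card_filter]
      rw [Finset.sum_comm]
    rw [h1]
    calc ∑ e ∈ F, ((Finset.range K).filter fun k => P k e).card
        ≤ ∑ _e ∈ F, 2 * L := Finset.sum_le_sum key
      _ = F.card * (2 * L) := by rw [Finset.sum_const, smul_eq_mul]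
      _ = 2 * L * F.card := by ring
  have hpig : ∃ k, k < K ∧ 2 * (Bad k).card ≤ F.card := by
    by_contra hcon
    push_neg at hcon
    have hlb : ∀ k ∈ Finset.range K, F.card + 1 ≤ 2 * (Bad k).card := by
      intro k hk
      have := hcon k (Finset.mem_range.mp hk)
      omega
    have h2 : K * (F.card + 1) ≤ ∑ k ∈ Finset.range K, 2 * (Bad k).card := by
      calc K * (F.card + 1) = ∑ _k ∈ Finset.range K, (F.card + 1) := by
            rw [Finset.sum_const, Finset.card_range, smul_eq_mul]
        _ ≤ _ := Finset.sum_le_sum hlb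
    rw [← Finset.mul_sum] at h2
    have h3 : K * (F.card + 1) ≤ 2 * (2 * L * F.card) := le_trans h2 (by omega)
    rw [hK] at h3
    nlinarith [Nat.zero_le F.card]
  obtain ⟨k, hkK, hk2⟩ := hpig
  have hBsub : Bad k ⊆ F := Finset.filter_subset _ _
  refine ⟨F \ Bad k, Finset.sdiff_subset, ⟨⟨?_, ?_⟩, ?_⟩, ?_, x + k * y,
    Nat.le_add_right _ _, ?_, ?_⟩
  · exact fun e he => hF.1.1 (Finset.mem_coe.mpr (Finset.sdiff_subset (Finset.mem_coe.mp he)))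
  · exact hF.1.2.mono (by exact_mod_cast Finset.coe_subset.mpr Finset.sdiff_subset)
  · intro e he hv
    have heF : e ∈ F := hF.2 e he (fun v hv' => by
      obtain ⟨f, hf, h⟩ := hv v hv'
      exact ⟨f, Finset.sdiff_subset hf, h⟩)
    obtain ⟨p, hp⟩ : ∃ p, p ∈ e := ⟨e.out.1, Sym2.out_fst_mem e⟩
    obtain ⟨f, hfF', hpf⟩ := hv p hp
    rcases eq_or_ne e f with rfl | hne
    · exact hfF'
    · exact absurd hpf (hF.1.2 (Finset.mem_coe.mpr heF)
        (Finset.mem_coe.mpr (Finset.sdiff_subset hfF')) hne p hp)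
  · have h1 := Finset.card_sdiff_of_subset hBsub
    have h2 := Finset.card_le_card hBsub
    omega
  · have : k * y ≤ K * y := Nat.mul_le_mul_right y hkK.le
    omega
  · rintro v ⟨e, heF', u, hue, hadj⟩ ⟨h1, h2⟩
    have : e ∈ Bad k := Finset.mem_filter.mpr ⟨(Finset.mem_sdiff.mp heF').1,
      ⟨v, ⟨u, hue, hadj⟩, h1, h2⟩⟩
    exact (Finset.mem_sdiff.mp heF').2 this
end
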